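/- arXiv:1905.09156 — 12 statements merged into one kernel-verified Lean document; each statement's English description precedes it below -/
import Mathlib

section
/- Let n ≥ 1, let Q be an n×n real symmetric positive definite matrix, let a_1, a_2 ∈ ℝ, and let A be the 2n×2n block matrix A = [[0, I_n], [−a_1 Q, −a_2 Q]]. Then A is stable (every eigenvalue of A over ℂ has strictly negative real part) if and only if a_1 > 0 and a_2 > 0. -/
/-!
An eigenvector of `A` over `ℂ` has the form `(x, μ x)`, and the eigenvalue equation becomes the
quadratic eigenvalue problem `μ² x + (a₁ + a₂ μ) Q x = 0`. Pairing it with `x` and using that `Q`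
is positive definite gives `μ² + (a₁ + a₂ μ) p = 0` for some `p > 0`; conversely, for an eigenpair
`(λ, x)` of `Q` with `λ > 0`, every root of `μ² + a₂ λ μ + a₁ λ` is an eigenvalue of `A`. Both
directions thus reduce to the fact that both roots of a real quadratic `z² + b z + c` have negative
real part iff `b > 0` and `c > 0`.
-/

/-- Block matrix with `k × k` blocks, each an `n × n` real matrix. -/
def Mblk {k n : ℕ} (B : Fin k → Fin k → Matrix (Fin n) (Fin n) ℝ) :
    Matrix (Fin k × Fin n) (Fin k × Fin n) ℝ :=
  Matrix.of fun x y => B x.1 y.1 x.2 y.2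

open Matrix Polynomial ComplexOrder

theorem Complex.forall_re_neg_of_sq_add_mul_add_eq_zero_iff (b c : ℝ) :
    (∀ z : ℂ, z ^ 2 + b * z + c = 0 → z.re < 0) ↔ 0 < b ∧ 0 < c := by
  constructor
  · intro h
    obtain ⟨d, hd⟩ := IsAlgClosed.exists_pow_nat_eq ((b : ℂ) ^ 2 - 4 * c) two_pos
    have hr := h ((-b + d) / 2) (by linear_combination hd / 4)
    have hs := h ((-b - d) / 2) (by linear_combination hd / 4)
    have hdisc := congrArg Complex.re hd
    simp only [div_ofNat_re, add_re, sub_re, neg_re, ofReal_re] at hr hs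
    simp only [sq, mul_re, sub_re, ofReal_re, ofReal_im, re_ofNat, im_ofNat] at hdisc
    -- `4 c = b² - (re d)² + (im d)²`, and `b > |re d|`
    exact ⟨by linarith, by nlinarith⟩
  · rintro ⟨hb, hc⟩ z hz
    have hre := congrArg Complex.re hz
    have him := congrArg Complex.im hz
    simp only [sq, add_re, add_im, mul_re, mul_im, ofReal_re, ofReal_im, zero_re, zero_im]
      at hre him
    by_contra! hz
    have hreal : z.im = 0 := by
      have : z.im * (2 * z.re + b) = 0 := by linear_combination him
      exact (mul_eq_zero.1 this).resolve_right (by positivity)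
    nlinarith

theorem Matrix.mem_roots_charpoly_iff_exists_mulVec_eq_smul {m K : Type*} [Fintype m]
    [DecidableEq m] [Field K] (M : Matrix m m K) (μ : K) :
    μ ∈ M.charpoly.roots ↔ ∃ v ≠ 0, M *ᵥ v = μ • v := by
  rw [mem_roots M.charpoly_monic.ne_zero, IsRoot, eval_charpoly, ← exists_mulVec_eq_zero_iff]
  simp [sub_mulVec, sub_eq_zero, eq_comm, scalar_apply]

open scoped MatrixOrder in
theorem Matrix.PosDef.map_ofReal {n : Type*} [Fintype n] [DecidableEq n] {Q : Matrix n n ℝ}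
    (hQ : Q.PosDef) : (Q.map Complex.ofReal).PosDef := by
  have hsqrt : (CFC.sqrt Q)ᴴ * CFC.sqrt Q = Q := by
    rw [← star_eq_conjTranspose, (CFC.sqrt_nonneg Q).isSelfAdjoint.star_eq]
    exact CFC.sqrt_mul_sqrt_self Q hQ.posSemidef.nonneg
  have hsemi : (Q.map Complex.ofRealHom).PosSemidef := by
    rw [← hsqrt, Matrix.map_mul, conjTranspose_map _ (fun _ => by simp)]
    exact posSemidef_conjTranspose_mul_self _
  rw [show Q.map Complex.ofReal = Q.map Complex.ofRealHom from rfl, hsemi.posDef_iff_det_ne_zero,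
    ← RingHom.mapMatrix_apply, ← RingHom.map_det]
  exact Complex.ofReal_ne_zero.2 hQ.det_pos.ne'

section PosDef

variable {𝕜 n : Type*} [RCLike 𝕜] [Fintype n] {P : Matrix n n 𝕜}

theorem Matrix.PosDef.exists_pos_add_mul_eq_zero (hP : P.PosDef) {α β : 𝕜} {x : n → 𝕜}
    (hx : x ≠ 0) (h : α • x + β • (P *ᵥ x) = 0) : ∃ p : ℝ, 0 < p ∧ α + β * p = 0 := by
  obtain ⟨s, hs, hsx⟩ := RCLike.pos_iff_exists_ofReal.1 (dotProduct_star_self_pos_iff.2 hx)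
  obtain ⟨q, hq, hqx⟩ := RCLike.pos_iff_exists_ofReal.1 (hP.dotProduct_mulVec_pos hx)
  refine ⟨q / s, div_pos hq hs, ?_⟩
  have hpair : α * s + β * q = 0 := by
    simpa [hsx, hqx, dotProduct_add, dotProduct_smul] using congrArg (star x ⬝ᵥ ·) h
  have hs0 : (s : 𝕜) ≠ 0 := RCLike.ofReal_ne_zero.2 hs.ne'
  rw [RCLike.ofReal_div]
  field_simp
  linear_combination hpair

theorem Matrix.PosDef.exists_pos_mulVec_eq_smul [DecidableEq n] [Nonempty n] (hP : P.PosDef) :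
    ∃ lam : ℝ, 0 < lam ∧ ∃ x ≠ 0, P *ᵥ x = (lam : 𝕜) • x := by
  let i := Classical.arbitrary n
  refine ⟨hP.1.eigenvalues i, hP.eigenvalues_pos i, ⇑(hP.1.eigenvectorBasis i), ?_, ?_⟩
  · exact fun h => hP.1.eigenvectorBasis.orthonormal.ne_zero i (by ext k; exact congrFun h k)
  · rw [hP.1.mulVec_eigenvectorBasis, RCLike.real_smul_eq_coe_smul (K := 𝕜)]

end PosDef

section SecondOrderBlock

variable {n : ℕ} (Q : Matrix (Fin n) (Fin n) ℝ) (a₁ a₂ : ℝ)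

theorem secondOrderBlock_mulVec_zero (v : Fin 2 × Fin n → ℂ) (k : Fin n) :
    ((Mblk ![![0, 1], ![-(a₁ • Q), -(a₂ • Q)]]).map Complex.ofReal *ᵥ v) (0, k) = v (1, k) := by
  simp [Mblk, mulVec, dotProduct, Fintype.sum_prod_type, one_apply, apply_ite]

theorem secondOrderBlock_mulVec_one (v : Fin 2 × Fin n → ℂ) (k : Fin n) :
    ((Mblk ![![0, 1], ![-(a₁ • Q), -(a₂ • Q)]]).map Complex.ofReal *ᵥ v) (1, k) =
      -(a₁ * (Q.map Complex.ofReal *ᵥ fun l => v (0, l)) k) -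
        a₂ * (Q.map Complex.ofReal *ᵥ fun l => v (1, l)) k := by
  simp [Mblk, mulVec, dotProduct, Fintype.sum_prod_type, Finset.mul_sum, mul_assoc, sub_eq_add_neg]

theorem secondOrderBlock_exists_eigenvector_iff (μ : ℂ) :
    (∃ v ≠ 0, (Mblk ![![0, 1], ![-(a₁ • Q), -(a₂ • Q)]]).map Complex.ofReal *ᵥ v = μ • v) ↔
      ∃ x ≠ 0, μ ^ 2 • x + (a₁ + a₂ * μ) • (Q.map Complex.ofReal *ᵥ x) = 0 := by
  constructor
  · rintro ⟨v, hv, hAv⟩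
    set x : Fin n → ℂ := fun l => v (0, l)
    have hvelocity : (fun l => v (1, l)) = μ • x := by
      funext l
      simpa [secondOrderBlock_mulVec_zero] using congrFun hAv (0, l)
    refine ⟨x, fun hx => hv ?_, ?_⟩
    · rw [hx, smul_zero] at hvelocity
      funext ⟨i, l⟩
      match i with
      | 0 => exact congrFun hx l
      | 1 => exact congrFun hvelocity l
    · funext l
      have h := congrFun hAv (1, l)
      rw [secondOrderBlock_mulVec_one, hvelocity, mulVec_smul] at h
      have h1 := congrFun hvelocity l
      simp only [Pi.add_apply, Pi.smul_apply, smul_eq_mul, Pi.zero_apply] at h h1 ⊢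
      linear_combination -h - μ * h1
  · rintro ⟨x, hx, hμ⟩
    set v : Fin 2 × Fin n → ℂ := fun p => ![x, μ • x] p.1 p.2
    have hv₀ : (fun l => v (0, l)) = x := rfl
    have hv₁ : (fun l => v (1, l)) = μ • x := rfl
    refine ⟨v, fun hv => hx (by rw [← hv₀, hv]; rfl), ?_⟩
    funext ⟨i, l⟩
    match i with
    | 0 => simp [secondOrderBlock_mulVec_zero, v]
    | 1 =>
      have h := congrFun hμ l
      rw [secondOrderBlock_mulVec_one, hv₀, hv₁, mulVec_smul]
      simp only [Pi.add_apply, Pi.smul_apply, smul_eq_mul, Pi.zero_apply, v, cons_val_one,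
        cons_val_zero] at h ⊢
      linear_combination -h

end SecondOrderBlock

/-- Second-order stability: `A = [[0, I], [-a₁Q, -a₂Q]]` is stable (all complex
eigenvalues have negative real part) iff `a₁ > 0` and `a₂ > 0`. -/
theorem secondOrder_stable_iff (n : ℕ) (hn : 1 ≤ n)
    (Q : Matrix (Fin n) (Fin n) ℝ) (hQ : Q.PosDef) (a₁ a₂ : ℝ) :
    (∀ μ ∈ (((Mblk ![![0, 1], ![-(a₁ • Q), -(a₂ • Q)]]).map
        Complex.ofReal).charpoly).roots, μ.re < 0) ↔ (0 < a₁ ∧ 0 < a₂) := by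
  have hP := hQ.map_ofReal
  simp only [mem_roots_charpoly_iff_exists_mulVec_eq_smul, secondOrderBlock_exists_eigenvector_iff]
  constructor
  · intro hstable
    have : Nonempty (Fin n) := ⟨⟨0, hn⟩⟩
    obtain ⟨lam, hlam, x, hx, hQx⟩ := hP.exists_pos_mulVec_eq_smul
    have hroots := (Complex.forall_re_neg_of_sq_add_mul_add_eq_zero_iff (a₂ * lam) (a₁ * lam)).1
      fun z hz => hstable z ⟨x, hx, by
        rw [hQx, smul_smul, ← add_smul]
        exact smul_eq_zero_of_left (by push_cast at hz; linear_combination hz) x⟩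
    exact ⟨pos_of_mul_pos_left hroots.2 hlam.le, pos_of_mul_pos_left hroots.1 hlam.le⟩
  · rintro ⟨ha₁, ha₂⟩ μ ⟨x, hx, hμ⟩
    obtain ⟨p, hp, hμp⟩ := hP.exists_pos_add_mul_eq_zero hx hμ
    exact (Complex.forall_re_neg_of_sq_add_mul_add_eq_zero_iff (a₂ * p) (a₁ * p)).2
      ⟨mul_pos ha₂ hp, mul_pos ha₁ hp⟩ μ (by push_cast; linear_combination hμp)
end

section
/- Let n ≥ 1, let Q be an n×n real symmetric positive definite matrix, let a_1, a_2, a_3, a_4 ∈ ℝ, and let A be the 4n×4n block matrix with block rows (0, I_n, 0, 0), (0, 0, I_n, 0), (0, 0, 0, I_n), (−a_1 Q, −a_2 Q, −a_3 Q, −a_4 Q). Then A is stable (every eigenvalue of A over ℂ has strictly negative real part) if and only if a_1 > 0, a_2 > 0, a_3 > 0, a_4 > 0, and for every eigenvalue λ of Q both (a_3 a_4 / a_2)·λ > 1 and ((a_3 a_4 / a_2) − (a_1 a_4² / a_2²))·λ > 1. -/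
open Polynomial Matrix Kronecker

namespace Polynomial

/-- Vacuously true for `p = 0`, whose root multiset is empty. -/
def IsHurwitzStable (p : ℝ[X]) : Prop :=
  ∀ z ∈ (p.map Complex.ofRealHom).roots, z.re < 0

lemma isHurwitzStable_mul {p q : ℝ[X]} (hp : p ≠ 0) (hq : q ≠ 0) :
    IsHurwitzStable (p * q) ↔ IsHurwitzStable p ∧ IsHurwitzStable q := by
  have hpq : p.map Complex.ofRealHom * q.map Complex.ofRealHom ≠ 0 :=
    mul_ne_zero (Polynomial.map_ne_zero hp) (Polynomial.map_ne_zero hq)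
  simp only [IsHurwitzStable, Polynomial.map_mul, roots_mul hpq, Multiset.mem_add, or_imp,
    forall_and]

lemma isHurwitzStable_prod {ι : Type*} (s : Finset ι) {f : ι → ℝ[X]} (hf : ∀ i ∈ s, f i ≠ 0) :
    IsHurwitzStable (∏ i ∈ s, f i) ↔ ∀ i ∈ s, IsHurwitzStable (f i) := by
  have hne : ∏ i ∈ s, (f i).map Complex.ofRealHom ≠ 0 :=
    Finset.prod_ne_zero_iff.mpr fun i hi => Polynomial.map_ne_zero (hf i hi)
  simp only [IsHurwitzStable, Polynomial.map_prod, roots_prod _ _ hne, Multiset.mem_bind,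
    Finset.mem_val, forall_exists_index, and_imp]
  exact ⟨fun h i hi z hz => h z i hi hz, fun h z i hi hz => h i hi z hz⟩

lemma isHurwitzStable_quadratic_iff (b c : ℝ) :
    IsHurwitzStable (X ^ 2 + C b * X + C c) ↔ 0 < b ∧ 0 < c := by
  have hne : (X ^ 2 + C b * X + C c).map Complex.ofRealHom ≠ 0 :=
    Polynomial.map_ne_zero (isMonicOfDegree_add_add_two b c).ne_zero
  have hroot (z : ℂ) : z ∈ ((X ^ 2 + C b * X + C c).map Complex.ofRealHom).roots ↔
      z ^ 2 + b * z + c = 0 := by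
    rw [mem_roots hne]
    simp
  simp only [IsHurwitzStable, hroot]
  constructor
  · intro h
    obtain ⟨z, hz⟩ := Complex.exists_root (f := X ^ 2 + C (b : ℂ) * X + C (c : ℂ))
      (natDegree_pos_iff_degree_pos.mp <| by
        rw [(isMonicOfDegree_add_add_two (b : ℂ) c).natDegree_eq]; norm_num)
    have hz : z ^ 2 + b * z + c = 0 := by simpa using hz
    have hw : (-b - z) ^ 2 + b * (-b - z) + c = 0 := by linear_combination hz
    have hzw : (z * (-b - z)).re = c := by
      rw [show z * (-b - z) = c by linear_combination -hz, Complex.ofReal_re]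
    have hz_re := h z hz
    have hw_re := h _ hw
    simp only [Complex.mul_re, Complex.sub_re, Complex.sub_im, Complex.neg_re, Complex.neg_im,
      Complex.ofReal_re, Complex.ofReal_im] at hzw hw_re
    constructor <;> nlinarith [sq_nonneg z.im]
  · rintro ⟨hb, hc⟩ z hz
    have hre := congrArg Complex.re hz
    have him := congrArg Complex.im hz
    simp only [pow_two, Complex.add_re, Complex.add_im, Complex.mul_re, Complex.mul_im,
      Complex.ofReal_re, Complex.ofReal_im, Complex.zero_re, Complex.zero_im] at hre him
    by_contra! hx
    have him0 : z.im = 0 := by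
      have : z.im * (2 * z.re + b) = 0 := by linarith
      exact (mul_eq_zero.mp this).resolve_right (by linarith)
    nlinarith

lemma quadratic_factors_pos_iff_hurwitz (α β γ δ : ℝ) :
    ((0 < α ∧ 0 < β) ∧ (0 < γ ∧ 0 < δ)) ↔
      0 < α + γ ∧ 0 < β + δ + α * γ ∧ 0 < α * δ + β * γ ∧ 0 < β * δ ∧
        (α * δ + β * γ) ^ 2 + β * δ * (α + γ) ^ 2 <
          (α * δ + β * γ) * (β + δ + α * γ) * (α + γ) := by
  have hΔ : (α * δ + β * γ) * (β + δ + α * γ) * (α + γ) - (α * δ + β * γ) ^ 2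
      - β * δ * (α + γ) ^ 2 = α * γ * ((β - δ) ^ 2 + (α + γ) * (α * δ + β * γ)) := by ring
  constructor
  · rintro ⟨⟨hα, hβ⟩, hγ, hδ⟩
    refine ⟨by positivity, by positivity, by positivity, by positivity, ?_⟩
    have : 0 < α * γ * ((β - δ) ^ 2 + (α + γ) * (α * δ + β * γ)) := by positivity
    linarith
  · rintro ⟨h₃, h₂, h₁, h₀, hD⟩
    have hβδ : 0 < β ∧ 0 < δ := by
      rcases pos_and_pos_or_neg_and_neg_of_mul_pos h₀ with h | ⟨hβ, hδ⟩
      · exact h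
      · have hαγ : 0 < α * γ := by linarith
        rcases pos_and_pos_or_neg_and_neg_of_mul_pos hαγ with ⟨hα, hγ⟩ | ⟨hα, hγ⟩
        · nlinarith [mul_neg_of_pos_of_neg hα hδ, mul_neg_of_neg_of_pos hβ hγ]
        · linarith
    have hαγ : 0 < α * γ := by
      have : 0 < (β - δ) ^ 2 + (α + γ) * (α * δ + β * γ) := by positivity
      exact pos_of_mul_pos_left (by linarith) this.le
    rcases pos_and_pos_or_neg_and_neg_of_mul_pos hαγ with ⟨hα, hγ⟩ | ⟨hα, hγ⟩
    · exact ⟨⟨hα, hβδ.1⟩, hγ, hβδ.2⟩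
    · linarith

lemma coeffs_eq_of_quartic_eq {R : Type*} [CommRing R] {p₃ p₂ p₁ p₀ q₃ q₂ q₁ q₀ : R}
    (h : (X ^ 4 + C p₃ * X ^ 3 + C p₂ * X ^ 2 + C p₁ * X + C p₀ : R[X]) =
      X ^ 4 + C q₃ * X ^ 3 + C q₂ * X ^ 2 + C q₁ * X + C q₀) :
    p₃ = q₃ ∧ p₂ = q₂ ∧ p₁ = q₁ ∧ p₀ = q₀ := by
  refine ⟨?_, ?_, ?_, ?_⟩ <;>
    [have := congrArg (coeff · 3) h; have := congrArg (coeff · 2) h;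
      have := congrArg (coeff · 1) h; have := congrArg (coeff · 0) h] <;>
    simpa [coeff_X_pow, coeff_X] using this

lemma isMonicOfDegree_quartic {R : Type*} [CommRing R] [Nontrivial R] (b₃ b₂ b₁ b₀ : R) :
    IsMonicOfDegree (X ^ 4 + C b₃ * X ^ 3 + C b₂ * X ^ 2 + C b₁ * X + C b₀) 4 := by
  rw [isMonicOfDegree_iff]
  exact ⟨by compute_degree, by simp [coeff_X_pow]⟩

lemma isHurwitzStable_quartic_iff (b₃ b₂ b₁ b₀ : ℝ) :
    IsHurwitzStable (X ^ 4 + C b₃ * X ^ 3 + C b₂ * X ^ 2 + C b₁ * X + C b₀) ↔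
      0 < b₃ ∧ 0 < b₂ ∧ 0 < b₁ ∧ 0 < b₀ ∧ b₁ ^ 2 + b₀ * b₃ ^ 2 < b₁ * b₂ * b₃ := by
  obtain ⟨f, g, hf, hg, hfg⟩ :=
    (isMonicOfDegree_quartic b₃ b₂ b₁ b₀).eq_isMonicOfDegree_two_mul_isMonicOfDegree (n := 2)
  obtain ⟨α, β, rfl⟩ := isMonicOfDegree_two_iff.mp hf
  obtain ⟨γ, δ, rfl⟩ := isMonicOfDegree_two_iff.mp hg
  have hexpand : (X ^ 2 + C α * X + C β) * (X ^ 2 + C γ * X + C δ) =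
      X ^ 4 + C (α + γ) * X ^ 3 + C (β + δ + α * γ) * X ^ 2 + C (α * δ + β * γ) * X
        + C (β * δ) := by
    simp only [C_add, C_mul]
    ring
  obtain ⟨rfl, rfl, rfl, rfl⟩ := coeffs_eq_of_quartic_eq (hfg.trans hexpand)
  rw [hfg, isHurwitzStable_mul hf.ne_zero hg.ne_zero, isHurwitzStable_quadratic_iff,
    isHurwitzStable_quadratic_iff, quadratic_factors_pos_iff_hurwitz]

end Polynomial

lemma Matrix.charpoly_blockDiagonal {m o R : Type*} [Fintype m] [DecidableEq m] [Fintype o]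
    [DecidableEq o] [CommRing R] (M : o → Matrix m m R) :
    (blockDiagonal M).charpoly = ∏ i, (M i).charpoly := by
  have : charmatrix (blockDiagonal M) = blockDiagonal fun i => charmatrix (M i) := by
    ext ⟨i, k⟩ ⟨j, l⟩
    by_cases hkl : k = l <;> by_cases hij : i = j <;> simp [blockDiagonal_apply, hkl, hij]
  rw [charpoly, this, det_blockDiagonal]
  rfl

lemma Matrix.IsHermitian.charpoly_kronecker_one_add_kronecker {m n 𝕜 : Type*} [Fintype m]
    [DecidableEq m] [Fintype n] [DecidableEq n] [RCLike 𝕜] (S T : Matrix m m 𝕜)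
    {Q : Matrix n n 𝕜} (hQ : Q.IsHermitian) :
    (S ⊗ₖ 1 + T ⊗ₖ Q).charpoly = ∏ i, (S + (hQ.eigenvalues i : 𝕜) • T).charpoly := by
  set U : Matrix n n 𝕜 := (hQ.eigenvectorUnitary : Matrix n n 𝕜)
  set D : Matrix n n 𝕜 := diagonal (RCLike.ofReal ∘ hQ.eigenvalues)
  have hQ' : Q = U * D * star U := by
    conv_lhs => rw [hQ.spectral_theorem, Unitary.conjStarAlgAut_apply]
  have hUU : star U * U = 1 := Unitary.coe_star_mul_self _
  have hUU' : U * star U = 1 := Unitary.coe_mul_star_self _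
  calc (S ⊗ₖ 1 + T ⊗ₖ Q).charpoly
      = ((1 ⊗ₖ U : Matrix (m × n) (m × n) 𝕜) * ((S ⊗ₖ 1 + T ⊗ₖ D) * 1 ⊗ₖ star U)).charpoly := by
        rw [hQ', add_mul, mul_add, ← mul_kronecker_mul, ← mul_kronecker_mul,
          ← mul_kronecker_mul, ← mul_kronecker_mul]
        simp only [mul_assoc, mul_one, one_mul, hUU']
    _ = ((S ⊗ₖ 1 + T ⊗ₖ D) * 1 ⊗ₖ star U * 1 ⊗ₖ U).charpoly := charpoly_mul_comm _ _
    _ = (blockDiagonal fun i => S + (hQ.eigenvalues i : 𝕜) • T).charpoly := by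
        rw [mul_assoc, ← mul_kronecker_mul, hUU, mul_one, one_kronecker_one, mul_one]
        congr 1
        ext ⟨i, k⟩ ⟨j, l⟩
        by_cases hkl : k = l <;>
          simp [D, blockDiagonal_apply, hkl, RCLike.real_smul_eq_coe_mul, mul_comm]
    _ = _ := charpoly_blockDiagonal _

def shiftMatrix : Matrix (Fin 4) (Fin 4) ℝ :=
  !![0, 1, 0, 0; 0, 0, 1, 0; 0, 0, 0, 1; 0, 0, 0, 0]

def gainMatrix (a₁ a₂ a₃ a₄ : ℝ) : Matrix (Fin 4) (Fin 4) ℝ :=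
  !![0, 0, 0, 0; 0, 0, 0, 0; 0, 0, 0, 0; -a₁, -a₂, -a₃, -a₄]

lemma Mblk_smul_one_add_smul_eq_kronecker {k n : ℕ} (S T : Matrix (Fin k) (Fin k) ℝ)
    (Q : Matrix (Fin n) (Fin n) ℝ) :
    Mblk (fun i j => S i j • 1 + T i j • Q) = S ⊗ₖ 1 + T ⊗ₖ Q := by
  ext ⟨i, x⟩ ⟨j, y⟩
  simp [Mblk, one_apply]

lemma Mblk_eq_shiftMatrix_kronecker_add {n : ℕ} (Q : Matrix (Fin n) (Fin n) ℝ)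
    (a₁ a₂ a₃ a₄ : ℝ) :
    Mblk ![![0, 1, 0, 0], ![0, 0, 1, 0], ![0, 0, 0, 1],
        ![-(a₁ • Q), -(a₂ • Q), -(a₃ • Q), -(a₄ • Q)]] =
      shiftMatrix ⊗ₖ 1 + gainMatrix a₁ a₂ a₃ a₄ ⊗ₖ Q := by
  rw [← Mblk_smul_one_add_smul_eq_kronecker]
  congr
  ext i j : 2
  fin_cases i <;> fin_cases j <;> simp [shiftMatrix, gainMatrix]

lemma charpoly_shiftMatrix_add_smul_gainMatrix (a₁ a₂ a₃ a₄ l : ℝ) :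
    (shiftMatrix + l • gainMatrix a₁ a₂ a₃ a₄).charpoly =
      X ^ 4 + C (a₄ * l) * X ^ 3 + C (a₃ * l) * X ^ 2 + C (a₂ * l) * X + C (a₁ * l) := by
  have : charmatrix (shiftMatrix + l • gainMatrix a₁ a₂ a₃ a₄) =
      !![X, -1, 0, 0; 0, X, -1, 0; 0, 0, X, -1;
        C (a₁ * l), C (a₂ * l), C (a₃ * l), X + C (a₄ * l)] := by
    ext i j
    fin_cases i <;> fin_cases j <;> simp [shiftMatrix, gainMatrix, mul_comm]
  rw [charpoly, this, det_succ_row_zero, Fin.sum_univ_four]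
  simp only [det_fin_three, submatrix_apply, of_apply, Fin.succAbove, cons_val, Fin.reduceLT,
    Fin.reduceSucc, Fin.reduceCastSucc, ↓reduceIte, Fin.isValue, Fin.coe_ofNat_eq_mod,
    Fin.succ_zero_eq_one, Fin.succ_one_eq_two]
  ring

lemma quartic_hurwitz_scaled_iff {a₁ a₂ a₃ a₄ l : ℝ} (hl : 0 < l) :
    (0 < a₄ * l ∧ 0 < a₃ * l ∧ 0 < a₂ * l ∧ 0 < a₁ * l ∧
        (a₂ * l) ^ 2 + a₁ * l * (a₄ * l) ^ 2 < a₂ * l * (a₃ * l) * (a₄ * l)) ↔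
      (0 < a₁ ∧ 0 < a₂ ∧ 0 < a₃ ∧ 0 < a₄) ∧
        1 < (a₃ * a₄ / a₂) * l ∧ 1 < ((a₃ * a₄ / a₂) - (a₁ * a₄ ^ 2 / a₂ ^ 2)) * l := by
  have hdet_iff (h₁ : 0 < a₁) (h₂ : 0 < a₂) (h₄ : 0 < a₄) :
      (a₂ * l) ^ 2 + a₁ * l * (a₄ * l) ^ 2 < a₂ * l * (a₃ * l) * (a₄ * l) ↔
        1 < (a₃ * a₄ / a₂) * l ∧ 1 < ((a₃ * a₄ / a₂) - (a₁ * a₄ ^ 2 / a₂ ^ 2)) * l := by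
    have hscale : a₂ * l * (a₃ * l) * (a₄ * l) - ((a₂ * l) ^ 2 + a₁ * l * (a₄ * l) ^ 2) =
        a₂ ^ 2 * l ^ 2 * (((a₃ * a₄ / a₂) - a₁ * a₄ ^ 2 / a₂ ^ 2) * l - 1) := by
      field_simp
      ring
    have hgap : 0 < a₁ * a₄ ^ 2 / a₂ ^ 2 * l := by positivity
    rw [← sub_pos, hscale, mul_pos_iff_of_pos_left (by positivity), sub_pos]
    exact ⟨fun h => ⟨by linarith, h⟩, And.right⟩
  simp only [mul_pos_iff_of_pos_right hl]
  constructor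
  · rintro ⟨h₄, h₃, h₂, h₁, hD⟩
    exact ⟨⟨h₁, h₂, h₃, h₄⟩, (hdet_iff h₁ h₂ h₄).mp hD⟩
  · rintro ⟨⟨h₁, h₂, h₃, h₄⟩, hD⟩
    exact ⟨h₄, h₃, h₂, h₁, (hdet_iff h₁ h₂ h₄).mpr hD⟩

/-- Fourth-order stability: the block matrix with rows `(0, I, 0, 0)`,
`(0, 0, I, 0)`, `(0, 0, 0, I)`, `(-a₁Q, -a₂Q, -a₃Q, -a₄Q)` is stable iff
`a₁, a₂, a₃, a₄ > 0` and, for every eigenvalue `λ` of `Q`,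
`(a₃a₄/a₂)·λ > 1` and `((a₃a₄/a₂) − (a₁a₄²/a₂²))·λ > 1`. -/
theorem fourthOrder_stable_iff (n : ℕ) (hn : 1 ≤ n)
    (Q : Matrix (Fin n) (Fin n) ℝ) (hQ : Q.PosDef) (a₁ a₂ a₃ a₄ : ℝ) :
    (∀ μ ∈ (((Mblk ![![0, 1, 0, 0], ![0, 0, 1, 0], ![0, 0, 0, 1],
        ![-(a₁ • Q), -(a₂ • Q), -(a₃ • Q), -(a₄ • Q)]]).map
        Complex.ofReal).charpoly).roots, μ.re < 0) ↔
      (0 < a₁ ∧ 0 < a₂ ∧ 0 < a₃ ∧ 0 < a₄ ∧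
        ∀ lam ∈ Q.charpoly.roots,
          1 < (a₃ * a₄ / a₂) * lam ∧
          1 < ((a₃ * a₄ / a₂) - (a₁ * a₄ ^ 2 / a₂ ^ 2)) * lam) := by
  have hH : Q.IsHermitian := hQ.isHermitian
  have : Nonempty (Fin n) := ⟨⟨0, hn⟩⟩
  have hA : (Mblk ![![0, 1, 0, 0], ![0, 0, 1, 0], ![0, 0, 0, 1],
      ![-(a₁ • Q), -(a₂ • Q), -(a₃ • Q), -(a₄ • Q)]]).charpoly =
        ∏ i, (X ^ 4 + C (a₄ * hH.eigenvalues i) * X ^ 3 + C (a₃ * hH.eigenvalues i) * X ^ 2 +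
          C (a₂ * hH.eigenvalues i) * X + C (a₁ * hH.eigenvalues i)) := by
    rw [Mblk_eq_shiftMatrix_kronecker_add, hH.charpoly_kronecker_one_add_kronecker]
    simp only [RCLike.ofReal_real_eq_id, id, charpoly_shiftMatrix_add_smul_gainMatrix]
  have hQroots : Q.charpoly.roots = Finset.univ.val.map hH.eigenvalues := by
    simpa using hH.roots_charpoly_eq_eigenvalues
  rw [show Complex.ofReal = ⇑Complex.ofRealHom from rfl, charpoly_map, hA]
  change IsHurwitzStable _ ↔ _
  rw [isHurwitzStable_prod _ fun i _ => (isMonicOfDegree_quartic _ _ _ _).ne_zero, hQroots]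
  simp only [Finset.mem_univ, Multiset.forall_mem_map_iff, Finset.mem_val,
    isHurwitzStable_quartic_iff, quartic_hurwitz_scaled_iff (hQ.eigenvalues_pos _), forall_and,
    forall_const, and_assoc]
end

section
/- Let n ≥ 1, let Q be an n×n real symmetric positive definite matrix, let m ≥ 4, let a ∈ ℝ, and set a_1 = a_2 = ⋯ = a_m = a. Then the mn×mn block matrix A (with block rows (0, I_n, 0, …, 0), …, (0, …, 0, I_n), (−a Q, −a Q, …, −a Q)) is not stable: there exists an eigenvalue of A over ℂ whose real part is nonnegative. -/
/-!
If `Q v = λ v` and `μ` is a root of `p(X) = X^m + c (1 + X + ⋯ + X^{m-1})` with `c = λ a`, then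
`(v, μ v, …, μ^{m-1} v)` is an eigenvector of `A` for `μ`; so it suffices that `p` has a root
in the closed right half-plane. For `c ≤ 0`, `p(0) = c ≤ 0` gives a nonnegative real root.
For `c > 0`, suppose every root `r` has `Re r < 0`. Then `|-z̄ - r| < |z - r|` whenever
`Re z > 0`, hence `|p(-z̄)| < |p(z)|`. For `m ≥ 5` this fails at `z = e^{2πi/N}` with
`N ∈ {m, m + 1}` even: `z` and `-z̄` are both `N`-th roots of unity `≠ 1`, at which `|p|` equals
`1` (if `N = m`) or `|1 - c|` (if `N = m + 1`). For `m = 4` it fails at `z = x + i` with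
`x = 1 / (2 (c + 1))`, by a direct computation.
-/

/-- The `mn × mn` block matrix of the `m`-th order consensus system: block row
`j` (for `j = 1, …, m−1`) is zero except for `I_n` in block column `j+1`, and
the last block row is `(-a₁Q, -a₂Q, …, -a_mQ)` (here `a : Fin m → ℝ` with
`a j` the gain `a_{j+1}`). -/
def blockA (m n : ℕ) (a : Fin m → ℝ) (Q : Matrix (Fin n) (Fin n) ℝ) :
    Matrix (Fin m × Fin n) (Fin m × Fin n) ℝ :=
  Matrix.of fun x y =>
    if (x.1 : ℕ) + 1 = m then -(a y.1) * Q x.2 y.2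
    else if (y.1 : ℕ) = (x.1 : ℕ) + 1 ∧ x.2 = y.2 then 1 else 0

open Polynomial Complex ComplexConjugate Finset Real Matrix

theorem Polynomial.norm_eval_neg_conj_lt {P : ℂ[X]} (hP : 0 < P.natDegree)
    (hroots : ∀ r ∈ P.roots, r.re < 0) {z : ℂ} (hz : 0 < z.re) :
    ‖P.eval (-conj z)‖ < ‖P.eval z‖ := by
  have hP0 : P ≠ 0 := ne_zero_of_natDegree_gt hP
  have hzroot : P.eval z ≠ 0 := fun h => (hroots z ((mem_roots hP0).2 h)).not_ge hz.le
  by_cases hw : P.eval (-conj z) = 0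
  · simpa [hw] using hzroot
  have hnorm : ∀ w, ‖P.eval w‖ = ‖P.leadingCoeff‖ * (P.roots.map fun r => ‖w - r‖).prod := by
    intro w
    conv_lhs => rw [← C_leadingCoeff_mul_prod_multiset_X_sub_C
      (IsAlgClosed.card_roots_eq_natDegree (p := P))]
    simp only [eval_mul, eval_C, eval_multiset_prod, Multiset.map_map, Function.comp_def,
      eval_sub, eval_X, norm_mul]
    congr 1
    simpa [Multiset.map_map, Function.comp_def] using
      map_multiset_prod (normHom : ℂ →*₀ ℝ) (P.roots.map fun r => w - r)
  rw [hnorm, hnorm]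
  refine mul_lt_mul_of_pos_left (Multiset.prod_map_lt_prod_map ?_ _ _ ?_ ?_) ?_
  · rw [← Multiset.card_pos, IsAlgClosed.card_roots_eq_natDegree]
    exact hP
  · intro r hr
    exact norm_pos_iff.2 (sub_ne_zero.2 fun h => hw (h ▸ (mem_roots hP0).1 hr))
  · intro r hr
    have hr := hroots r hr
    rw [← sq_lt_sq₀ (norm_nonneg _) (norm_nonneg _), ← normSq_eq_norm_sq, ← normSq_eq_norm_sq]
    simp only [normSq_apply, sub_re, sub_im, neg_re, neg_im, conj_re, conj_im]
    nlinarith [mul_pos hz (neg_pos.2 hr)]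
  · simpa using hP0

noncomputable def equalGainsPoly {R : Type*} [CommRing R] (m : ℕ) (c : R) : R[X] :=
  X ^ m + ∑ k : Fin m, C c * X ^ (k : ℕ)

section equalGainsPoly

variable {R : Type*} [CommRing R] (m : ℕ) (c : R)

theorem eval_equalGainsPoly (x : R) :
    (equalGainsPoly m c).eval x = x ^ m + c * ∑ k ∈ range m, x ^ k := by
  simp [equalGainsPoly, eval_finsetSum, mul_sum, Fin.sum_univ_eq_sum_range (fun k => c * x ^ k)]

theorem equalGainsPoly_monic [Nontrivial R] : (equalGainsPoly m c).Monic :=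
  monic_X_pow_add (degree_sum_fin_lt _)

theorem natDegree_equalGainsPoly [Nontrivial R] : (equalGainsPoly m c).natDegree = m := by
  rw [equalGainsPoly, natDegree_add_eq_left_of_degree_lt] <;> simp [degree_sum_fin_lt]

end equalGainsPoly

theorem exists_nonneg_root_equalGainsPoly_of_nonpos {m : ℕ} (hm : m ≠ 0) {c : ℝ} (hc : c ≤ 0) :
    ∃ t : ℝ, 0 ≤ t ∧ (equalGainsPoly m c).eval t = 0 := by
  have htop := (equalGainsPoly m c).tendsto_atTop_of_leadingCoeff_nonneg
    (natDegree_pos_iff_degree_pos.1 ((natDegree_equalGainsPoly m c).symm ▸ Nat.pos_of_ne_zero hm))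
    ((equalGainsPoly_monic m c).leadingCoeff ▸ zero_le_one)
  have h0 : (equalGainsPoly m c).eval 0 = c := by simp [eval_equalGainsPoly, hm]
  exact intermediate_value_Ici (equalGainsPoly m c).continuous.continuousOn htop
    (by rw [Set.mem_Ici, h0]; exact hc)

section RootsOfUnity

variable {m : ℕ} {c : ℂ} {ζ : ℂ}

theorem eval_equalGainsPoly_of_pow_eq_one (hζ : ζ ^ m = 1) (hζ1 : ζ ≠ 1) :
    (equalGainsPoly m c).eval ζ = 1 := by
  rw [eval_equalGainsPoly, geom_sum_eq hζ1, hζ]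
  simp

theorem eval_equalGainsPoly_of_pow_succ_eq_one (hζ : ζ ^ (m + 1) = 1) (hζ1 : ζ ≠ 1) :
    (equalGainsPoly m c).eval ζ = (1 - c) * ζ ^ m := by
  have hsum := geom_sum_eq hζ1 (m + 1)
  rw [hζ, sub_self, zero_div, sum_range_succ] at hsum
  rw [eval_equalGainsPoly, eq_neg_of_add_eq_zero_left hsum]
  ring

theorem norm_eval_equalGainsPoly_eq {N : ℕ} (hN : N = m ∨ N = m + 1) {ω : ℂ}
    (hζ : ζ ^ N = 1) (hω : ω ^ N = 1) (hζ1 : ζ ≠ 1) (hω1 : ω ≠ 1) :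
    ‖(equalGainsPoly m c).eval ζ‖ = ‖(equalGainsPoly m c).eval ω‖ := by
  rcases hN with rfl | rfl
  · rw [eval_equalGainsPoly_of_pow_eq_one hζ hζ1, eval_equalGainsPoly_of_pow_eq_one hω hω1]
  · simp [eval_equalGainsPoly_of_pow_succ_eq_one, hζ, hω, hζ1, hω1,
      norm_eq_one_of_pow_eq_one hζ m.succ_ne_zero, norm_eq_one_of_pow_eq_one hω m.succ_ne_zero]

end RootsOfUnity

theorem re_exp_two_pi_I_div_pos {N : ℕ} (hN : 4 < N) : 0 < (exp (2 * π * I / N)).re := by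
  have hpos : (0 : ℝ) < N := by positivity
  have hlt : 2 * π / N < π / 2 := by
    rw [div_lt_div_iff₀ hpos two_pos]
    have : (4 : ℝ) < N := by exact_mod_cast hN
    nlinarith [pi_pos]
  rw [show 2 * π * I / N = ((2 * π / N : ℝ) : ℂ) * I by push_cast; ring, exp_ofReal_mul_I_re]
  exact cos_pos_of_mem_Ioo ⟨by linarith [pi_pos, div_pos two_pi_pos hpos], hlt⟩

theorem exists_norm_eval_equalGainsPoly_le_neg_conj_of_five_le {m : ℕ} (hm : 5 ≤ m) (c : ℂ) :
    ∃ z : ℂ, 0 < z.re ∧ ‖(equalGainsPoly m c).eval z‖ ≤ ‖(equalGainsPoly m c).eval (-conj z)‖ := by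
  obtain ⟨N, hNm, hN⟩ : ∃ N, (N = m ∨ N = m + 1) ∧ Even N := by
    rcases Nat.even_or_odd m with h | h
    · exact ⟨m, .inl rfl, h⟩
    · exact ⟨m + 1, .inr rfl, h.add_one⟩
  have hprim : IsPrimitiveRoot (exp (2 * π * I / N)) N := isPrimitiveRoot_exp N (by omega)
  have hre := re_exp_two_pi_I_div_pos (N := N) (by omega)
  refine ⟨_, hre, (norm_eval_equalGainsPoly_eq hNm hprim.pow_eq_one ?_ (hprim.ne_one (by omega))
    ?_).le⟩
  · rw [hN.neg_pow, ← map_pow, hprim.pow_eq_one, map_one]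
  · intro h
    have := congrArg re h
    simp only [neg_re, conj_re, one_re] at this
    linarith

theorem exists_norm_eval_equalGainsPoly_le_neg_conj_four {c : ℝ} (hc : 0 ≤ c) :
    ∃ z : ℂ, 0 < z.re ∧ ‖(equalGainsPoly 4 (c : ℂ)).eval z‖ ≤
      ‖(equalGainsPoly 4 (c : ℂ)).eval (-conj z)‖ := by
  set x : ℝ := 1 / (2 * (c + 1))
  have hx : 0 < x := by positivity
  have hx2 : x ≤ 1 / 2 := by
    rw [div_le_div_iff₀ (by positivity) two_pos]
    linarith
  have hcx : c * x ≤ 1 / 2 := by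
    rw [← mul_div_assoc, mul_one, div_le_div_iff₀ (by positivity) two_pos]
    linarith
  refine ⟨x + I, by simpa using hx, ?_⟩
  have key : normSq ((equalGainsPoly 4 (c : ℂ)).eval (-conj (x + I))) -
      normSq ((equalGainsPoly 4 (c : ℂ)).eval (x + I)) =
      4 * c * x * (2 - x ^ 2 - 4 * x ^ 4 - x ^ 6 - c * x * (4 * x + x ^ 3)) := by
    simp [eval_equalGainsPoly, sum_range_succ, normSq_apply, pow_succ]
    ring
  have hbracket : 0 ≤ 2 - x ^ 2 - 4 * x ^ 4 - x ^ 6 - c * x * (4 * x + x ^ 3) := by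
    have hpow : ∀ k, x ^ k ≤ (1 / 2) ^ k := fun k => pow_le_pow_left₀ hx.le hx2 k
    have hgain : c * x * (4 * x + x ^ 3) ≤ 1 / 2 * (17 / 8) :=
      mul_le_mul hcx (by linarith [hpow 3]) (by positivity) (by norm_num)
    linarith [hpow 2, hpow 4, hpow 6]
  rw [← sq_le_sq₀ (norm_nonneg _) (norm_nonneg _), ← normSq_eq_norm_sq, ← normSq_eq_norm_sq,
    ← sub_nonneg, key]
  positivity

theorem exists_root_equalGainsPoly_re_nonneg {m : ℕ} (hm : 4 ≤ m) (c : ℝ) :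
    ∃ μ : ℂ, (equalGainsPoly m (c : ℂ)).eval μ = 0 ∧ 0 ≤ μ.re := by
  rcases le_or_gt c 0 with hc | hc
  · obtain ⟨t, ht, hroot⟩ := exists_nonneg_root_equalGainsPoly_of_nonpos (m := m) (by omega) hc
    refine ⟨t, ?_, by simpa using ht⟩
    rw [eval_equalGainsPoly] at hroot ⊢
    exact_mod_cast hroot
  · by_contra! hroots
    obtain ⟨z, hz, hle⟩ : ∃ z : ℂ, 0 < z.re ∧ ‖(equalGainsPoly m (c : ℂ)).eval z‖ ≤
        ‖(equalGainsPoly m (c : ℂ)).eval (-conj z)‖ := by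
      rcases hm.eq_or_lt with rfl | hm5
      · exact exists_norm_eval_equalGainsPoly_le_neg_conj_four hc.le
      · exact exists_norm_eval_equalGainsPoly_le_neg_conj_of_five_le hm5 _
    refine hle.not_gt (norm_eval_neg_conj_lt ?_ (fun r hr => hroots r (isRoot_of_mem_roots hr)) hz)
    rw [natDegree_equalGainsPoly]
    omega

section blockA

variable {m n : ℕ} (a : Fin m → ℝ) (Q : Matrix (Fin n) (Fin n) ℝ) (x : Fin m × Fin n → ℂ)

theorem map_blockA_mulVec_apply_of_lt {j : Fin m} (hj : (j : ℕ) + 1 < m) (i : Fin n) :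
    ((blockA m n a Q).map ofReal *ᵥ x) (j, i) = x (⟨j + 1, hj⟩, i) := by
  rw [mulVec, dotProduct, sum_eq_single (⟨⟨j + 1, hj⟩, i⟩ : Fin m × Fin n)]
  · simp [blockA, hj.ne]
  · rintro ⟨k, l⟩ - hkl
    have : ¬((k : ℕ) = j + 1 ∧ i = l) := fun h => hkl (by simp [Fin.ext_iff, h.1, h.2])
    simp [blockA, hj.ne, this]
  · simp

theorem map_blockA_mulVec_apply_of_eq {j : Fin m} (hj : (j : ℕ) + 1 = m) (i : Fin n) :
    ((blockA m n a Q).map ofReal *ᵥ x) (j, i) = -∑ k, a k * ∑ l, Q i l * x (k, l) := by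
  simp [mulVec, dotProduct, blockA, hj, Fintype.sum_prod_type, mul_sum, mul_assoc]

variable {a Q}

theorem map_blockA_mulVec_powers {ev : ℝ} {v : Fin n → ℝ} (hQv : Q *ᵥ v = ev • v) {μ : ℂ}
    (hμ : μ ^ m + ev * ∑ k, a k * μ ^ (k : ℕ) = 0) :
    (blockA m n a Q).map ofReal *ᵥ (fun p => μ ^ (p.1 : ℕ) * v p.2) =
      μ • fun p => μ ^ (p.1 : ℕ) * v p.2 := by
  ext ⟨j, i⟩
  by_cases hj : (j : ℕ) + 1 = m
  · have hQvi : ∑ l, (Q i l : ℂ) * v l = ev * v i := by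
      simpa [mulVec, dotProduct] using congrArg ((↑) : ℝ → ℂ) (congrFun hQv i)
    have hpow : μ * μ ^ (j : ℕ) = μ ^ m := by rw [← pow_succ', hj]
    rw [map_blockA_mulVec_apply_of_eq a Q _ hj]
    simp_rw [mul_left_comm _ (μ ^ _), ← mul_sum, hQvi, Pi.smul_apply, smul_eq_mul, ← mul_assoc,
      hpow, ← sum_mul]
    linear_combination (-(v i : ℂ)) * hμ
  · rw [map_blockA_mulVec_apply_of_lt a Q _ (by omega)]
    simp [pow_succ']
    ring

theorem isRoot_charpoly_map_blockA (hm : m ≠ 0) {ev : ℝ} {v : Fin n → ℝ} (hv : v ≠ 0)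
    (hQv : Q *ᵥ v = ev • v) {μ : ℂ} (hμ : μ ^ m + ev * ∑ k, a k * μ ^ (k : ℕ) = 0) :
    ((blockA m n a Q).map ofReal).charpoly.IsRoot μ := by
  rw [← charpoly_toLin', ← Module.End.hasEigenvalue_iff_isRoot_charpoly]
  refine Module.End.hasEigenvalue_of_hasEigenvector (Module.End.hasEigenvector_iff.2
    ⟨Module.End.mem_eigenspace_iff.2 (map_blockA_mulVec_powers hQv hμ), ?_⟩)
  obtain ⟨i, hi⟩ := Function.ne_iff.1 hv
  intro h
  exact hi (by simpa using congrFun h (⟨0, Nat.pos_of_ne_zero hm⟩, i))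

end blockA

/-- For `m ≥ 4` and all gains equal to `a`, the `m`-th order system matrix is
never stable: it has an eigenvalue with nonnegative real part. -/
theorem higherOrder_equalGains_unstable (m n : ℕ) (hm : 4 ≤ m) (hn : 1 ≤ n)
    (Q : Matrix (Fin n) (Fin n) ℝ) (hQ : Q.PosDef) (a : ℝ) :
    ∃ μ ∈ (((blockA m n (fun _ => a) Q).map
        Complex.ofReal).charpoly).roots, 0 ≤ μ.re := by
  let i : Fin n := ⟨0, hn⟩
  let v : Fin n → ℝ := hQ.isHermitian.eigenvectorBasis i
  have hQv : Q *ᵥ v = hQ.isHermitian.eigenvalues i • v := hQ.isHermitian.mulVec_eigenvectorBasis i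
  have hv : v ≠ 0 := fun h => hQ.isHermitian.eigenvectorBasis.orthonormal.ne_zero i
    (by ext l; exact congrFun h l)
  obtain ⟨μ, hμ, hre⟩ := exists_root_equalGainsPoly_re_nonneg hm (hQ.isHermitian.eigenvalues i * a)
  refine ⟨μ, (mem_roots (charpoly_monic _).ne_zero).2
    (isRoot_charpoly_map_blockA (by omega) hv hQv ?_), hre⟩
  rw [eval_equalGainsPoly] at hμ
  rw [Fin.sum_univ_eq_sum_range (fun k => (a : ℂ) * μ ^ k), ← mul_sum]
  push_cast at hμ
  linear_combination hμ
end

section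
/- Let λ > 0 be a real number and a_1, a_2, a_3 ∈ ℝ. Every complex root of the polynomial p(s) = s³ + a_3 λ s² + a_2 λ s + a_1 λ has strictly negative real part if and only if a_1 > 0, a_2 > 0, a_3 > 0, and a_2·a_3·λ > a_1. -/
open Polynomial

/-- A monic real cubic has a real root (IVT). -/
lemma cubic_exists_real_root (b₁ b₂ b₃ : ℝ) :
    ∃ r : ℝ, r ^ 3 + b₃ * r ^ 2 + b₂ * r + b₁ = 0 := by
  set f : ℝ → ℝ := fun x => x ^ 3 + b₃ * x ^ 2 + b₂ * x + b₁ with hf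
  have hcont : Continuous f := by continuity
  set M : ℝ := 1 + |b₃| + |b₂| + |b₁| with hM
  have hM1 : 1 ≤ M := by
    have h3 := abs_nonneg b₃; have h2 := abs_nonneg b₂; have h1 := abs_nonneg b₁
    linarith
  have hM0 : 0 ≤ M := by linarith
  have hcube : M ^ 3 = (1 + |b₃| + |b₂| + |b₁|) * M ^ 2 := by rw [hM]; ring
  have hfM : 0 ≤ f M := by
    simp only [hf]
    nlinarith [mul_le_mul_of_nonneg_right (neg_abs_le b₃) (sq_nonneg M),
      mul_le_mul_of_nonneg_right (neg_abs_le b₂) hM0, neg_abs_le b₁,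
      mul_nonneg (abs_nonneg b₂) (by nlinarith : (0:ℝ) ≤ M ^ 2 - M),
      mul_nonneg (abs_nonneg b₁) (by nlinarith : (0:ℝ) ≤ M ^ 2 - 1), sq_nonneg M]
  have hfnM : f (-M) ≤ 0 := by
    simp only [hf]
    nlinarith [mul_le_mul_of_nonneg_right (le_abs_self b₃) (sq_nonneg M),
      mul_le_mul_of_nonneg_right (neg_abs_le b₂) hM0, le_abs_self b₁,
      mul_nonneg (abs_nonneg b₂) (by nlinarith : (0:ℝ) ≤ M ^ 2 - M),
      mul_nonneg (abs_nonneg b₁) (by nlinarith : (0:ℝ) ≤ M ^ 2 - 1), sq_nonneg M]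
  have hsub := intermediate_value_Icc (by linarith : (-M : ℝ) ≤ M) hcont.continuousOn
  have h0 : (0 : ℝ) ∈ Set.Icc (f (-M)) (f M) := ⟨hfnM, hfM⟩
  obtain ⟨r, _, hr⟩ := hsub h0
  exact ⟨r, hr⟩

/-- Real parts of a conjugate-symmetric pair determined by elementary symmetric values. -/
lemma quad_re (c d : ℝ) (z w : ℂ) (hs : z + w = -(c : ℂ)) (hp : z * w = (d : ℂ)) :
    (z.re < 0 ∧ w.re < 0) ↔ (0 < c ∧ 0 < d) := by
  have hs1 : z.re + w.re = -c := by
    have := congrArg Complex.re hs; simpa using this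
  have hs2 : z.im + w.im = 0 := by
    have := congrArg Complex.im hs; simpa using this
  have hp1 : z.re * w.re - z.im * w.im = d := by
    have := congrArg Complex.re hp; simpa [Complex.mul_re] using this
  have hp2 : z.re * w.im + z.im * w.re = 0 := by
    have := congrArg Complex.im hp; simpa [Complex.mul_im] using this
  rcases eq_or_ne z.im 0 with him | him
  · have hwim : w.im = 0 := by linarith
    constructor
    · rintro ⟨h1, h2⟩
      constructor
      · nlinarith
      · nlinarith
    · rintro ⟨hc, hd⟩
      constructor
      · by_contra h
        push_neg at h
        nlinarith
      · by_contra h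
        push_neg at h
        nlinarith
  · -- conjugate pair: w.re = z.re
    have hwim : w.im = -z.im := by linarith
    have hre : w.re = z.re := by
      have : z.im * (w.re - z.re) = 0 := by linear_combination hp2 - z.re * hwim
      rcases mul_eq_zero.1 this with h | h
      · exact absurd h him
      · linarith
    have hd : d = z.re ^ 2 + z.im ^ 2 := by linear_combination -hp1 + z.re * hre - z.im * hwim
    constructor
    · rintro ⟨h1, _⟩
      refine ⟨by nlinarith, by nlinarith [sq_nonneg z.im, sq_nonneg z.re]⟩
    · rintro ⟨hc, _⟩
      constructor <;> nlinarith

/-- The real arithmetic heart of the Hurwitz criterion. -/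
lemma hurwitz_arith (lam a₁ a₂ a₃ r c d : ℝ) (hlam : 0 < lam)
    (hc : c = r + a₃ * lam) (hd : d = r ^ 2 + a₃ * lam * r + a₂ * lam)
    (hroot : r ^ 3 + a₃ * lam * r ^ 2 + a₂ * lam * r + a₁ * lam = 0) :
    (r < 0 ∧ 0 < c ∧ 0 < d) ↔ (0 < a₁ ∧ 0 < a₂ ∧ 0 < a₃ ∧ a₁ < a₂ * a₃ * lam) := by
  subst hc hd
  constructor
  · rintro ⟨hr, hcpos, hdpos⟩
    have ha1 : 0 < a₁ := by nlinarith
    have ha3 : 0 < a₃ := by nlinarith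
    have ha2 : 0 < a₂ := by nlinarith
    refine ⟨ha1, ha2, ha3, ?_⟩
    nlinarith [mul_pos hcpos hdpos, mul_pos hcpos (mul_pos (neg_pos.2 hr) (mul_pos ha3 hlam))]
  · rintro ⟨ha1, ha2, ha3, hlt⟩
    have hr : r < 0 := by
      by_contra h
      push_neg at h
      nlinarith [mul_pos ha1 hlam, mul_pos ha2 hlam, mul_pos ha3 hlam,
        mul_nonneg (mul_nonneg h h) h, mul_nonneg (mul_nonneg (mul_pos ha3 hlam).le h) h,
        mul_nonneg (mul_pos ha2 hlam).le h]
    have hdpos : 0 < r ^ 2 + a₃ * lam * r + a₂ * lam := by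
      by_contra h
      push_neg at h
      nlinarith [mul_pos ha1 hlam, mul_nonneg (neg_nonneg.2 h) (neg_pos.2 hr).le]
    refine ⟨hr, ?_, hdpos⟩
    -- c * (d + r² - r*c) = a₂a₃λ² - a₁λ > 0 and d + r² - r*c > 0
    have hkey : (r + a₃ * lam) *
        ((r ^ 2 + a₃ * lam * r + a₂ * lam) + r ^ 2 - r * (r + a₃ * lam))
        = a₂ * lam * (a₃ * lam) - a₁ * lam := by nlinarith
    have hfac : 0 < (r ^ 2 + a₃ * lam * r + a₂ * lam) + r ^ 2 - r * (r + a₃ * lam) := by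
      nlinarith [mul_pos (neg_pos.2 hr) (mul_pos ha3 hlam)]
    have hrhs : 0 < a₂ * lam * (a₃ * lam) - a₁ * lam := by nlinarith
    by_contra h
    push_neg at h
    nlinarith

/-- Hurwitz criterion for `p(s) = s³ + a₃λs² + a₂λs + a₁λ` with `λ > 0`: every
complex root has strictly negative real part iff `a₁, a₂, a₃ > 0` and
`a₂·a₃·λ > a₁`. -/
theorem cubic_hurwitz (lam a₁ a₂ a₃ : ℝ) (hlam : 0 < lam) :
    (∀ z ∈ ((X ^ 3 + C ((a₃ * lam : ℝ) : ℂ) * X ^ 2 + C ((a₂ * lam : ℝ) : ℂ) * X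
        + C ((a₁ * lam : ℝ) : ℂ)) : Polynomial ℂ).roots, z.re < 0) ↔
      (0 < a₁ ∧ 0 < a₂ ∧ 0 < a₃ ∧ a₁ < a₂ * a₃ * lam) := by
  obtain ⟨r, hroot⟩ := cubic_exists_real_root (a₁ * lam) (a₂ * lam) (a₃ * lam)
  set c : ℝ := r + a₃ * lam with hcdef
  set d : ℝ := r ^ 2 + a₃ * lam * r + a₂ * lam with hddef
  obtain ⟨s, hs⟩ := IsAlgClosed.exists_pow_nat_eq ((c : ℂ) ^ 2 - 4 * (d : ℂ)) (n := 2) (by norm_num)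
  set z : ℂ := (-(c : ℂ) + s) / 2 with hz
  set w : ℂ := (-(c : ℂ) - s) / 2 with hw
  have hsum : z + w = -(c : ℂ) := by rw [hz, hw]; ring
  have hprod : z * w = (d : ℂ) := by
    rw [hz, hw]
    have : s ^ 2 = (c : ℂ) ^ 2 - 4 * d := hs
    linear_combination (-1/4 : ℂ) * this
  have hcC : (c : ℂ) = (r : ℂ) + (a₃ : ℂ) * (lam : ℂ) := by
    rw [hcdef]; push_cast; ring
  have hdC : (d : ℂ) = (r : ℂ) ^ 2 + (a₃ : ℂ) * (lam : ℂ) * (r : ℂ) + (a₂ : ℂ) * (lam : ℂ) := by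
    rw [hddef]; push_cast; ring
  have hrc : (r : ℂ) ^ 3 + (a₃ : ℂ) * (lam : ℂ) * (r : ℂ) ^ 2
      + (a₂ : ℂ) * (lam : ℂ) * (r : ℂ) + (a₁ : ℂ) * (lam : ℂ) = 0 := by
    have := congrArg (fun x : ℝ => (x : ℂ)) hroot
    push_cast at this
    linear_combination this
  -- factor the polynomial
  have hfac : (X ^ 3 + C ((a₃ * lam : ℝ) : ℂ) * X ^ 2 + C ((a₂ * lam : ℝ) : ℂ) * X
      + C ((a₁ * lam : ℝ) : ℂ)) = (X - C (r : ℂ)) * ((X - C z) * (X - C w)) := by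
    have e2 : C ((a₃ * lam : ℝ) : ℂ) = -(C (r : ℂ) + C z + C w) := by
      rw [← map_add, ← map_add, ← map_neg]
      congr 1
      push_cast
      linear_combination -hcC
    have e1 : C ((a₂ * lam : ℝ) : ℂ) = C (r : ℂ) * C z + C (r : ℂ) * C w + C z * C w := by
      rw [← map_mul, ← map_mul, ← map_mul, ← map_add, ← map_add]
      congr 1
      push_cast
      linear_combination (1/4 : ℂ) * hs - hdC + (r : ℂ) * hcC
    have e0 : C ((a₁ * lam : ℝ) : ℂ) = -(C (r : ℂ) * C z * C w) := by
      rw [← map_mul, ← map_mul, ← map_neg]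
      congr 1
      push_cast
      linear_combination hrc + (r : ℂ) * hdC - ((r : ℂ) / 4) * hs
    rw [e2, e1, e0]
    ring
  have hroots : (X ^ 3 + C ((a₃ * lam : ℝ) : ℂ) * X ^ 2 + C ((a₂ * lam : ℝ) : ℂ) * X
      + C ((a₁ * lam : ℝ) : ℂ)).roots = {(r : ℂ), z, w} := by
    rw [hfac, roots_mul (mul_ne_zero (X_sub_C_ne_zero _)
        (mul_ne_zero (X_sub_C_ne_zero _) (X_sub_C_ne_zero _))),
      roots_mul (mul_ne_zero (X_sub_C_ne_zero _) (X_sub_C_ne_zero _)),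
      roots_X_sub_C, roots_X_sub_C, roots_X_sub_C]
    rfl
  rw [hroots]
  have hmem : ∀ u : ℂ, u ∈ ({(r : ℂ), z, w} : Multiset ℂ) ↔ u = (r : ℂ) ∨ u = z ∨ u = w := by
    intro u
    simp [Multiset.mem_cons, Multiset.mem_singleton]
  have hiff : (∀ u ∈ ({(r : ℂ), z, w} : Multiset ℂ), u.re < 0) ↔
      (r < 0 ∧ z.re < 0 ∧ w.re < 0) := by
    constructor
    · intro h
      refine ⟨?_, h z (by simp), h w (by simp)⟩
      have := h (r : ℂ) (by simp)
      simpa using this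
    · rintro ⟨h1, h2, h3⟩ u hu
      rcases (hmem u).1 hu with rfl | rfl | rfl
      · simpa using h1
      · exact h2
      · exact h3
  rw [hiff]
  rw [quad_re c d z w hsum hprod]
  exact hurwitz_arith lam a₁ a₂ a₃ r c d hlam hcdef hddef hroot
end

section
/- Let n ≥ 1, let Q be an n×n real symmetric matrix with eigenvalues λ_1,…,λ_n (listed with multiplicity), let m ≥ 1, and let a_1,…,a_m ∈ ℝ. Let A be the mn×mn block matrix with block rows (0, I_n, 0, …, 0), (0, 0, I_n, …, 0), …, (0, …, 0, I_n), (−a_1 Q, −a_2 Q, …, −a_m Q). Then the characteristic polynomial of A factors as det(x·I_{mn} − A) = ∏_{l=1}^{n} ( x^m + a_m λ_l x^{m−1} + a_{m−1} λ_l x^{m−2} + ⋯ + a_2 λ_l x + a_1 λ_l ). -/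
/-!
Write `Q = U D Uᵀ` with `U` orthogonal and `D` the diagonal of eigenvalues. Since
`A = S ⊗ I + G ⊗ Q` for fixed `m × m` matrices `S`, `G`, conjugating by `I ⊗ U` replaces `Q` by `D`
without changing the characteristic polynomial. With `Q = D` the coordinates decouple: `A` is
block diagonal, its `l`-th block being the companion matrix of
`x^m + λ_l (a_m x^{m-1} + ⋯ + a_1)`, whose characteristic polynomial is that polynomial.
-/

open Polynomial

namespace Matrix

variable {R : Type*} [CommRing R]

def companion {m : ℕ} (c : Fin m → R) : Matrix (Fin m) (Fin m) R :=
  of fun i j => if (i : ℕ) + 1 = m then -c j else if (j : ℕ) = i + 1 then 1 else 0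

theorem companion_succ_succ {m : ℕ} (c : Fin (m + 1) → R) (i j : Fin m) :
    companion c i.succ j.succ = companion (Fin.tail c) i j := by
  simp only [companion, of_apply, Fin.val_succ, Fin.tail]
  split_ifs <;> first | rfl | omega

theorem charmatrix_companion_submatrix_succ {m : ℕ} (c : Fin (m + 1) → R) :
    (charmatrix (companion c)).submatrix Fin.succ Fin.succ =
      charmatrix (companion (Fin.tail c)) := by
  ext i j
  simp only [submatrix_apply, charmatrix_apply, companion_succ_succ, diagonal_apply, Fin.succ_inj]

theorem det_charmatrix_companion_submatrix_castSucc_succ {m : ℕ} (c : Fin (m + 2) → R) :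
    ((charmatrix (companion c)).submatrix Fin.castSucc Fin.succ).det = (-1) ^ (m + 1) := by
  have hsub : (charmatrix (companion c)).submatrix Fin.castSucc Fin.succ
      = of fun i j : Fin (m + 1) =>
          (if (i : ℕ) = j + 1 then X else 0) - if i = j then 1 else 0 := by
    ext i j
    simp only [submatrix_apply, charmatrix_apply, diagonal_apply, companion, of_apply,
      Fin.ext_iff, Fin.val_succ, Fin.val_castSucc]
    split_ifs <;> first | (exfalso; omega) | simp
  rw [hsub, det_of_isLowerTriangular]
  · simp
  · intro i j hij
    have : (i : ℕ) < j := hij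
    rw [of_apply, if_neg (by omega), if_neg (by omega), sub_zero]

theorem charpoly_companion_succ_succ {m : ℕ} (c : Fin (m + 2) → R) :
    (companion c).charpoly = X * (companion (Fin.tail c)).charpoly + C (c 0) := by
  have h00 : charmatrix (companion c) 0 0 = X := by
    simp [companion]
  have hcol : ∀ i : Fin (m + 1),
      charmatrix (companion c) i.succ 0 = if i = Fin.last m then C (c 0) else 0 := by
    intro i
    rw [charmatrix_apply_ne _ _ _ (Fin.succ_ne_zero i)]
    simp only [companion, of_apply, Fin.val_succ, Fin.val_zero, Fin.ext_iff, Fin.val_last]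
    split_ifs <;> first | (exfalso; omega) | simp
  -- Laplace expansion along the first column, whose only nonzero entries are in the first and
  -- last rows.
  rw [charpoly, det_succ_column_zero, Fin.sum_univ_succ, Finset.sum_eq_single (Fin.last m)]
  · rw [h00, hcol, if_pos rfl, Fin.succAbove_zero, charmatrix_companion_submatrix_succ,
      Fin.succ_last, Fin.succAbove_last, det_charmatrix_companion_submatrix_castSucc_succ,
      Fin.val_zero, Fin.val_last, pow_zero, one_mul, ← charpoly, mul_right_comm, ← pow_add,
      Even.neg_one_pow ⟨m + 1, rfl⟩, one_mul]
  · intro i _ hi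
    rw [hcol, if_neg hi, mul_zero, zero_mul]
  · simp

theorem charpoly_companion : ∀ {m : ℕ} (c : Fin m → R),
    (companion c).charpoly = X ^ m + ∑ j : Fin m, C (c j) * X ^ (j : ℕ)
  | 0, _ => by simp [charpoly, det_isEmpty]
  | 1, c => by simp [charpoly, companion]
  | m + 2, c => by
    rw [charpoly_companion_succ_succ, charpoly_companion, Fin.sum_univ_succ (n := m + 1)]
    simp only [Fin.tail, Fin.val_zero, Fin.val_succ, pow_zero, mul_one, pow_succ]
    rw [mul_add, Finset.mul_sum]
    ring_nf

theorem charmatrix_blockDiagonal {o N : Type*} [Fintype o] [DecidableEq o] [Fintype N]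
    [DecidableEq N] (M : o → Matrix N N R) :
    charmatrix (blockDiagonal M) = blockDiagonal fun k => charmatrix (M k) := by
  ext ⟨i, k⟩ ⟨j, l⟩
  rcases eq_or_ne k l with rfl | hkl <;>
    simp [charmatrix_apply, blockDiagonal_apply, diagonal_apply, *]

theorem charpoly_blockDiagonal_s7 {o N : Type*} [Fintype o] [DecidableEq o] [Fintype N]
    [DecidableEq N] (M : o → Matrix N N R) :
    (blockDiagonal M).charpoly = ∏ k, (M k).charpoly := by
  rw [charpoly, charmatrix_blockDiagonal, det_blockDiagonal]
  rfl

end Matrix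

open Matrix Kronecker

def blockShift (m : ℕ) : Matrix (Fin m) (Fin m) ℝ :=
  of fun i j => if (j : ℕ) = i + 1 then 1 else 0

def blockGain {m : ℕ} (a : Fin m → ℝ) : Matrix (Fin m) (Fin m) ℝ :=
  of fun i j => if (i : ℕ) + 1 = m then -a j else 0

theorem blockA_eq_kronecker (m n : ℕ) (a : Fin m → ℝ) (Q : Matrix (Fin n) (Fin n) ℝ) :
    blockA m n a Q = blockShift m ⊗ₖ 1 + blockGain a ⊗ₖ Q := by
  ext ⟨i, k⟩ ⟨j, l⟩
  simp only [blockA, blockShift, blockGain, of_apply, Matrix.add_apply, kroneckerMap_apply,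
    one_apply]
  split_ifs <;> first | (exfalso; omega) | simp_all

theorem blockA_conj (m n : ℕ) (a : Fin m → ℝ) {U V : Matrix (Fin n) (Fin n) ℝ} (h : U * V = 1)
    (D : Matrix (Fin n) (Fin n) ℝ) :
    blockA m n a (U * D * V) = (1 ⊗ₖ U) * blockA m n a D * (1 ⊗ₖ V) := by
  simp only [blockA_eq_kronecker, Matrix.mul_add, Matrix.add_mul, ← mul_kronecker_mul, one_mul,
    mul_one, h]

theorem charpoly_blockA_conj (m n : ℕ) (a : Fin m → ℝ) {U V : Matrix (Fin n) (Fin n) ℝ}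
    (h : U * V = 1) (D : Matrix (Fin n) (Fin n) ℝ) :
    (blockA m n a (U * D * V)).charpoly = (blockA m n a D).charpoly := by
  rw [blockA_conj m n a h, charpoly_mul_comm, ← mul_assoc, ← mul_kronecker_mul, mul_one,
    mul_eq_one_comm.mp h, one_kronecker_one, one_mul]

theorem blockA_diagonal (m n : ℕ) (a : Fin m → ℝ) (f : Fin n → ℝ) :
    blockA m n a (diagonal f) = blockDiagonal fun l => companion fun j => a j * f l := by
  ext ⟨i, k⟩ ⟨j, l⟩
  rcases eq_or_ne k l with rfl | hkl <;>
    simp [blockA, companion, blockDiagonal_apply, diagonal_apply, *]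

theorem blockA_charpoly_general (m n : ℕ)
    (Q : Matrix (Fin n) (Fin n) ℝ) (hQ : Q.IsHermitian) (a : Fin m → ℝ) :
    (blockA m n a Q).charpoly =
      ∏ l : Fin n, (X ^ m +
        ∑ j : Fin m, C (a j * hQ.eigenvalues l) * X ^ (j : ℕ)) := by
  set U : Matrix (Fin n) (Fin n) ℝ := (hQ.eigenvectorUnitary : Matrix (Fin n) (Fin n) ℝ)
  have hU : U * star U = 1 := mem_unitaryGroup_iff.mp hQ.eigenvectorUnitary.2
  have hQ_eq : Q = U * diagonal hQ.eigenvalues * star U := by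
    simpa using hQ.spectral_theorem
  conv_lhs => rw [hQ_eq]
  rw [charpoly_blockA_conj m n a hU, blockA_diagonal, charpoly_blockDiagonal_s7]
  exact Finset.prod_congr rfl fun l _ => charpoly_companion _

/-- The characteristic polynomial of the `m`-th order consensus block matrix
factors as `∏_{l=1}^n (x^m + a_m λ_l x^{m−1} + ⋯ + a_2 λ_l x + a_1 λ_l)`, where
`λ_1, …, λ_n` are the eigenvalues (with multiplicity) of the real symmetric
matrix `Q`. -/
theorem blockA_charpoly (m n : ℕ) (hm : 1 ≤ m) (hn : 1 ≤ n)
    (Q : Matrix (Fin n) (Fin n) ℝ) (hQ : Q.IsHermitian) (a : Fin m → ℝ) :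
    (blockA m n a Q).charpoly =
      ∏ l : Fin n, (X ^ m +
        ∑ j : Fin m, C (a j * hQ.eigenvalues l) * X ^ (j : ℕ)) :=
  blockA_charpoly_general m n Q hQ a
end

section
/- Let n ≥ 1, let Q be an n×n real symmetric positive definite matrix, and let a_1 > 0, a_2 > 0. Let A = [[0, I_n], [−a_1 Q, −a_2 Q]] (a 2n×2n block matrix) and let P be the 2n×2n block-diagonal matrix P = diag( (1/(2 a_1 a_2)) Q⁻², (1/(2 a_2)) Q⁻¹ ). Then P satisfies the Lyapunov equation A P + P Aᵀ + diag(0_n, I_n) = 0, and the trace of the top-left n×n block of P equals (1/(2 a_1 a_2))·tr(Q⁻²). -/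
open Matrix

lemma fromBlocks_eq_zero' {n : ℕ} (A B C D : Matrix (Fin n) (Fin n) ℝ)
    (hA : A = 0) (hB : B = 0) (hC : C = 0) (hD : D = 0) :
    Matrix.fromBlocks A B C D = (0 : Matrix (Fin n ⊕ Fin n) (Fin n ⊕ Fin n) ℝ) := by
  subst hA hB hC hD
  ext (i | i) (j | j) <;> simp

/-- For the stable second-order system `A = [[0, I], [-a₁Q, -a₂Q]]`, the
block-diagonal matrix `P = diag((1/(2a₁a₂))Q⁻², (1/(2a₂))Q⁻¹)` solves the
Lyapunov equation `AP + PAᵀ + diag(0, I) = 0`, and the trace of the top-left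
block of `P` is `(1/(2a₁a₂))·tr(Q⁻²)`. -/
theorem secondOrder_lyapunov (n : ℕ) (hn : 1 ≤ n)
    (Q : Matrix (Fin n) (Fin n) ℝ) (hQ : Q.PosDef)
    (a₁ a₂ : ℝ) (ha₁ : 0 < a₁) (ha₂ : 0 < a₂) :
    let A : Matrix (Fin n ⊕ Fin n) (Fin n ⊕ Fin n) ℝ :=
      Matrix.fromBlocks 0 1 (-(a₁ • Q)) (-(a₂ • Q))
    let P : Matrix (Fin n ⊕ Fin n) (Fin n ⊕ Fin n) ℝ :=
      Matrix.fromBlocks ((1 / (2 * a₁ * a₂)) • (Q⁻¹ * Q⁻¹)) 0 0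
        ((1 / (2 * a₂)) • Q⁻¹)
    A * P + P * Aᵀ + Matrix.fromBlocks 0 0 0 1 = 0 ∧
      Matrix.trace (Matrix.toBlocks₁₁ P) =
        (1 / (2 * a₁ * a₂)) * Matrix.trace (Q⁻¹ * Q⁻¹) := by
  intro A P
  have hQinv : IsUnit Q.det := isUnit_iff_ne_zero.mpr (ne_of_gt hQ.det_pos)
  have hQQ : Q * Q⁻¹ = 1 := Matrix.mul_nonsing_inv Q hQinv
  have hQQ' : Q⁻¹ * Q = 1 := Matrix.nonsing_inv_mul Q hQinv
  have hQt : Qᵀ = Q := hQ.isHermitian.eq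
  constructor
  · show Matrix.fromBlocks 0 1 (-(a₁ • Q)) (-(a₂ • Q)) *
      Matrix.fromBlocks ((1 / (2 * a₁ * a₂)) • (Q⁻¹ * Q⁻¹)) 0 0
        ((1 / (2 * a₂)) • Q⁻¹) +
      Matrix.fromBlocks ((1 / (2 * a₁ * a₂)) • (Q⁻¹ * Q⁻¹)) 0 0
        ((1 / (2 * a₂)) • Q⁻¹) *
      (Matrix.fromBlocks 0 1 (-(a₁ • Q)) (-(a₂ • Q)))ᵀ +
      Matrix.fromBlocks 0 0 0 1 = 0
    rw [Matrix.fromBlocks_transpose, Matrix.fromBlocks_multiply,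
      Matrix.fromBlocks_multiply, Matrix.fromBlocks_add, Matrix.fromBlocks_add]
    apply fromBlocks_eq_zero'
    · simp
    · simp only [Matrix.transpose_neg, Matrix.transpose_smul, hQt,
        Matrix.zero_mul, Matrix.mul_zero, Matrix.one_mul, zero_add, add_zero,
        Matrix.mul_neg, Matrix.mul_smul, Matrix.smul_mul, smul_smul,
        Matrix.mul_assoc, hQQ', Matrix.mul_one, Matrix.transpose_one,
        Matrix.transpose_zero]
      match_scalars <;> (field_simp; try ring)
    · simp only [Matrix.zero_mul, Matrix.mul_zero, Matrix.mul_one, zero_add,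
        add_zero, Matrix.neg_mul, Matrix.mul_smul, Matrix.smul_mul, smul_smul,
        ← Matrix.mul_assoc, hQQ, Matrix.one_mul, Matrix.transpose_one,
        Matrix.transpose_zero]
      match_scalars <;> (field_simp; try ring)
    · simp only [Matrix.transpose_neg, Matrix.transpose_smul, hQt,
        Matrix.zero_mul, Matrix.mul_zero, zero_add, add_zero, Matrix.neg_mul,
        Matrix.mul_neg, Matrix.mul_smul, Matrix.smul_mul, smul_smul, hQQ, hQQ',
        Matrix.transpose_one, Matrix.transpose_zero]
      match_scalars <;> (field_simp; try ring)
  · show Matrix.trace (Matrix.toBlocks₁₁ (Matrix.fromBlocks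
      ((1 / (2 * a₁ * a₂)) • (Q⁻¹ * Q⁻¹)) 0 0 ((1 / (2 * a₂)) • Q⁻¹))) = _
    rw [Matrix.toBlocks_fromBlocks₁₁, Matrix.trace_smul, smul_eq_mul]
end

section
/- Let n ≥ 1, let Q be an n×n real symmetric positive definite matrix, and let a_1, a_2, a_3, a_4 > 0 satisfy (a_3 a_4 / a_2)·λ > 1 and ((a_3 a_4 / a_2) − (a_1 a_4² / a_2²))·λ > 1 for every eigenvalue λ of Q. Let A be the 4n×4n block matrix with block rows (0, I_n, 0, 0), (0, 0, I_n, 0), (0, 0, 0, I_n), (−a_1 Q, −a_2 Q, −a_3 Q, −a_4 Q). Define M = (a_3 a_4 − a_1 a_4²/a_2) Q − a_2 I_n, F = (1/(2 a_1)) Q⁻² ((a_3 a_4 / a_2) Q − I_n) M⁻¹, G = (a_4/(2 a_2)) Q⁻¹ M⁻¹, J = (1/2) Q⁻¹ M⁻¹, K = (1/2)(a_3 − a_1 a_4/a_2) M⁻¹, and let P be the 4n×4n block matrix [[F, 0, −G, 0], [0, G, 0, −J], [−G, 0, J, 0], [0, −J, 0, K]]. Then P satisfies the Lyapunov equation A P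 + P Aᵀ + diag(0_n, 0_n, 0_n, I_n) = 0, and the trace of the top-left n×n block of P equals (1/(2 a_1 a_2))·tr( Q⁻² ((a_3 a_4 / a_2) Q − I_n) (((a_3 a_4 / a_2) − (a_1 a_4² / a_2²)) Q − I_n)⁻¹ ). -/
/-!
The matrix `A` is a block companion matrix and every block of `P` is a rational function of the
symmetric matrix `Q`, so all blocks commute with `Q`. Blockwise, `AP + PAᵀ + diag(0, 0, 0, I) = 0`
then reduces to the four identities `a₂G = a₄J`, `Q(a₃J − a₁G) = K`, `Q(a₁F − a₃G) = −J` and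
`2Q(a₄K − a₂J) = I`, each of which is a one-line computation once `M` is invertible. Invertibility
comes from the eigenvalue hypothesis: `M = a₂(cQ − I)` with `c = a₃a₄/a₂ − a₁a₄²/a₂²`, and
`det(cQ − I)` is, up to a nonzero factor, the characteristic polynomial of `Q` at `c⁻¹`. The same
factorisation `M⁻¹ = a₂⁻¹(cQ − I)⁻¹` gives the trace formula.
-/

open Matrix Polynomial

section Mblk

variable {k n : ℕ}

theorem Mblk_mul (B C : Fin k → Fin k → Matrix (Fin n) (Fin n) ℝ) :
    Mblk B * Mblk C = Mblk fun i j => ∑ m, B i m * C m j := by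
  ext ⟨i, p⟩ ⟨j, q⟩
  simp [Mblk, mul_apply, Fintype.sum_prod_type, Matrix.sum_apply]

theorem Mblk_add (B C : Fin k → Fin k → Matrix (Fin n) (Fin n) ℝ) :
    Mblk B + Mblk C = Mblk (B + C) := by
  ext; simp [Mblk]

theorem Mblk_transpose (B : Fin k → Fin k → Matrix (Fin n) (Fin n) ℝ) :
    (Mblk B)ᵀ = Mblk fun i j => (B j i)ᵀ := by
  ext; simp [Mblk]

theorem Mblk_eq_zero {B : Fin k → Fin k → Matrix (Fin n) (Fin n) ℝ} (h : ∀ i j, B i j = 0) :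
    Mblk B = 0 := by
  ext; simp [Mblk, h]

end Mblk

theorem Commute.ringInverse_right {M₀ : Type*} [MonoidWithZero M₀] {a b : M₀} (h : Commute a b) :
    Commute a (Ring.inverse b) := by
  by_cases hb : IsUnit b
  · obtain ⟨u, rfl⟩ := hb
    rw [Ring.inverse_unit]
    exact h.units_inv_right
  · rw [Ring.inverse_non_unit _ hb]
    exact Commute.zero_right a

namespace Matrix

variable {m K : Type*} [Fintype m] [DecidableEq m]

theorem commute_nonsing_inv_right [CommRing K] {A B : Matrix m m K} (h : Commute A B) :
    Commute A B⁻¹ := by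
  rw [nonsing_inv_eq_ringInverse]
  exact h.ringInverse_right

theorem isUnit_det_smul_sub_one [Field K] {Q : Matrix m m K} {c : K}
    (h : ∀ μ ∈ Q.charpoly.roots, c * μ ≠ 1) : IsUnit (c • Q - 1).det := by
  rcases eq_or_ne c 0 with rfl | hc
  · simp [det_neg]
  have heval : Q.charpoly.eval c⁻¹ ≠ 0 := fun h0 =>
    h c⁻¹ ((mem_roots Q.charpoly_monic.ne_zero).2 h0) (mul_inv_cancel₀ hc)
  have hfactor : c • Q - 1 = (-c) • (scalar m c⁻¹ - Q) := by
    rw [scalar_apply, ← smul_one_eq_diagonal, smul_sub, smul_smul, neg_mul, mul_inv_cancel₀ hc]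
    module
  rw [hfactor, det_smul, ← eval_charpoly]
  exact isUnit_iff_ne_zero.2 (mul_ne_zero (pow_ne_zero _ (neg_ne_zero.2 hc)) heval)

end Matrix

section FourthOrder

variable {n : ℕ}

def blockCompanion (a₁ a₂ a₃ a₄ : ℝ) (Q : Matrix (Fin n) (Fin n) ℝ) :
    Matrix (Fin 4 × Fin n) (Fin 4 × Fin n) ℝ :=
  Mblk ![![0, 1, 0, 0], ![0, 0, 1, 0], ![0, 0, 0, 1],
    ![-(a₁ • Q), -(a₂ • Q), -(a₃ • Q), -(a₄ • Q)]]

def checkerboardBlocks (F G J K : Matrix (Fin n) (Fin n) ℝ) :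
    Matrix (Fin 4 × Fin n) (Fin 4 × Fin n) ℝ :=
  Mblk ![![F, 0, -G, 0], ![0, G, 0, -J], ![-G, 0, J, 0], ![0, -J, 0, K]]

def lastBlockOne : Matrix (Fin 4 × Fin n) (Fin 4 × Fin n) ℝ :=
  Mblk ![![0, 0, 0, 0], ![0, 0, 0, 0], ![0, 0, 0, 0], ![0, 0, 0, 1]]

theorem blockCompanion_lyapunov {Q F G J K : Matrix (Fin n) (Fin n) ℝ} {a₁ a₂ a₃ a₄ : ℝ}
    (hQ : Qᵀ = Q) (hF : Commute Q F) (hG : Commute Q G) (hJ : Commute Q J) (hK : Commute Q K)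
    (h₁ : a₂ • G = a₄ • J) (h₂ : Q * (a₃ • J - a₁ • G) = K) (h₃ : Q * (a₁ • F - a₃ • G) = -J)
    (h₄ : (2 : ℝ) • (Q * (a₄ • K - a₂ • J)) = 1) :
    blockCompanion a₁ a₂ a₃ a₄ Q * checkerboardBlocks F G J K +
      checkerboardBlocks F G J K * (blockCompanion a₁ a₂ a₃ a₄ Q)ᵀ + lastBlockOne = 0 := by
  rw [blockCompanion, checkerboardBlocks, lastBlockOne, Mblk_transpose, Mblk_mul, Mblk_mul,
    Mblk_add, Mblk_add]
  refine Mblk_eq_zero fun i j => ?_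
  replace h₁ : a₂ • (Q * G) = a₄ • (Q * J) := by simp only [← mul_smul_comm, h₁]
  simp only [mul_sub, mul_smul_comm, smul_sub] at h₂ h₃ h₄
  fin_cases i <;> fin_cases j <;>
    simp [Fin.sum_univ_four, vecHead, vecTail, hQ, ← hF.eq, ← hG.eq, ← hJ.eq, ← hK.eq]
  · linear_combination (norm := module) -h₃
  · linear_combination (norm := module) -h₁
  · linear_combination (norm := module) -h₂
  · linear_combination (norm := module) -h₃
  · linear_combination (norm := module) -h₁
  · linear_combination (norm := module) -h₂
  · linear_combination (norm := module) -h₄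

theorem fourthOrder_blocks_lyapunov {Q M F G J K : Matrix (Fin n) (Fin n) ℝ} {a₁ a₂ a₃ a₄ : ℝ}
    (ha₁ : a₁ ≠ 0) (ha₂ : a₂ ≠ 0) (hQT : Qᵀ = Q) (hQ : IsUnit Q.det)
    (hM : M = (a₃ * a₄ - a₁ * a₄ ^ 2 / a₂) • Q - a₂ • 1) (hMu : IsUnit M.det)
    (hF : F = (1 / (2 * a₁)) • (Q⁻¹ * Q⁻¹ * ((a₃ * a₄ / a₂) • Q - 1) * M⁻¹))
    (hG : G = (a₄ / (2 * a₂)) • (Q⁻¹ * M⁻¹)) (hJ : J = (1 / 2 : ℝ) • (Q⁻¹ * M⁻¹))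
    (hK : K = ((1 / 2) * (a₃ - a₁ * a₄ / a₂)) • M⁻¹) :
    blockCompanion a₁ a₂ a₃ a₄ Q * checkerboardBlocks F G J K +
      checkerboardBlocks F G J K * (blockCompanion a₁ a₂ a₃ a₄ Q)ᵀ + lastBlockOne = 0 := by
  have hQQi : Commute Q Q⁻¹ := (mul_nonsing_inv Q hQ).trans (nonsing_inv_mul Q hQ).symm
  have hQMi : Commute Q M⁻¹ := commute_nonsing_inv_right <| hM ▸
    ((Commute.refl Q).smul_right _).sub_right ((Commute.one_right Q).smul_right _)
  have hQQiMi : Commute Q (Q⁻¹ * M⁻¹) := hQQi.mul_right hQMi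
  have hQX : Q * (Q⁻¹ * M⁻¹) = M⁻¹ := mul_nonsing_inv_cancel_left _ _ hQ
  have hQF : Q * F = (1 / (2 * a₁)) • ((a₃ * a₄ / a₂) • M⁻¹ - Q⁻¹ * M⁻¹) := by
    simp only [hF, mul_smul_comm, ← mul_assoc, mul_nonsing_inv _ hQ, one_mul]
    rw [mul_sub, mul_smul_comm, nonsing_inv_mul _ hQ, mul_one, sub_mul, smul_mul_assoc, one_mul]
  have hMMi : ((a₃ * a₄ - a₁ * a₄ ^ 2 / a₂) • Q - a₂ • 1) * M⁻¹ = 1 := hM ▸ mul_nonsing_inv M hMu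
  refine blockCompanion_lyapunov hQT ?_ ?_ ?_ ?_ ?_ ?_ ?_ ?_
  · have hQW : Commute Q ((a₃ * a₄ / a₂) • Q - 1) :=
      ((Commute.refl Q).smul_right _).sub_right (Commute.one_right Q)
    exact hF ▸ (((hQQi.mul_right hQQi).mul_right hQW).mul_right hQMi).smul_right _
  · exact hG ▸ hQQiMi.smul_right _
  · exact hJ ▸ hQQiMi.smul_right _
  · exact hK ▸ hQMi.smul_right _
  · rw [hG, hJ, smul_smul, smul_smul]
    congr 1
    field_simp
  · simp only [hG, hJ, hK, mul_sub, mul_smul_comm, hQX]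
    module
  · simp only [mul_sub, mul_smul_comm, hQF, hG, hJ, hQX]
    match_scalars <;> field_simp
    ring
  · rw [← hMMi]
    simp only [hJ, hK, mul_sub, sub_mul, mul_smul_comm, smul_mul_assoc, hQX, one_mul]
    match_scalars <;> field_simp

end FourthOrder

theorem fourthOrder_lyapunov_general (n : ℕ)
    (Q : Matrix (Fin n) (Fin n) ℝ) (hQ : Q.PosDef)
    (a₁ a₂ a₃ a₄ : ℝ) (ha₁ : 0 < a₁) (ha₂ : 0 < a₂)
    (heig : ∀ lam ∈ Q.charpoly.roots,
      1 < (a₃ * a₄ / a₂) * lam ∧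
      1 < ((a₃ * a₄ / a₂) - (a₁ * a₄ ^ 2 / a₂ ^ 2)) * lam) :
    let A : Matrix (Fin 4 × Fin n) (Fin 4 × Fin n) ℝ :=
      Mblk ![![0, 1, 0, 0], ![0, 0, 1, 0], ![0, 0, 0, 1],
        ![-(a₁ • Q), -(a₂ • Q), -(a₃ • Q), -(a₄ • Q)]]
    let M : Matrix (Fin n) (Fin n) ℝ :=
      (a₃ * a₄ - a₁ * a₄ ^ 2 / a₂) • Q - a₂ • (1 : Matrix (Fin n) (Fin n) ℝ)
    let F : Matrix (Fin n) (Fin n) ℝ :=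
      (1 / (2 * a₁)) • (Q⁻¹ * Q⁻¹ *
        ((a₃ * a₄ / a₂) • Q - (1 : Matrix (Fin n) (Fin n) ℝ)) * M⁻¹)
    let G : Matrix (Fin n) (Fin n) ℝ := (a₄ / (2 * a₂)) • (Q⁻¹ * M⁻¹)
    let J : Matrix (Fin n) (Fin n) ℝ := (1 / 2 : ℝ) • (Q⁻¹ * M⁻¹)
    let K : Matrix (Fin n) (Fin n) ℝ := ((1 / 2) * (a₃ - a₁ * a₄ / a₂)) • M⁻¹
    let P : Matrix (Fin 4 × Fin n) (Fin 4 × Fin n) ℝ :=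
      Mblk ![![F, 0, -G, 0], ![0, G, 0, -J], ![-G, 0, J, 0], ![0, -J, 0, K]]
    A * P + P * Aᵀ +
        Mblk ![![0, 0, 0, 0], ![0, 0, 0, 0], ![0, 0, 0, 0], ![0, 0, 0, 1]] = 0 ∧
      Matrix.trace (Matrix.of fun p q : Fin n => P (0, p) (0, q)) =
        (1 / (2 * a₁ * a₂)) *
          Matrix.trace (Q⁻¹ * Q⁻¹ *
            ((a₃ * a₄ / a₂) • Q - (1 : Matrix (Fin n) (Fin n) ℝ)) *
            (((a₃ * a₄ / a₂) - (a₁ * a₄ ^ 2 / a₂ ^ 2)) • Q -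
              (1 : Matrix (Fin n) (Fin n) ℝ))⁻¹) := by
  intro A M F G J K P
  set N := ((a₃ * a₄ / a₂) - (a₁ * a₄ ^ 2 / a₂ ^ 2)) • Q - (1 : Matrix (Fin n) (Fin n) ℝ)
  have hQu : IsUnit Q.det := (isUnit_iff_isUnit_det Q).1 hQ.isUnit
  have hNu : IsUnit N.det := isUnit_det_smul_sub_one fun lam hlam => (heig lam hlam).2.ne'
  have hMN : M = a₂ • N := by
    simp only [M, N, smul_sub, smul_smul]
    congr 2
    field_simp
  have hMu : IsUnit M.det := by
    rw [hMN, det_smul]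
    exact (ha₂.ne'.isUnit.pow _).mul hNu
  refine ⟨fourthOrder_blocks_lyapunov ha₁.ne' ha₂.ne' hQ.isHermitian.eq hQu rfl hMu
    rfl rfl rfl rfl, ?_⟩
  have hMinv : M⁻¹ = a₂⁻¹ • N⁻¹ := by
    simpa [hMN, Units.smul_def] using inv_smul' N (Units.mk0 a₂ ha₂.ne') hNu
  change trace ((1 / (2 * a₁)) • _) = _
  rw [hMinv, mul_smul_comm, smul_smul, trace_smul, smul_eq_mul]
  ring

/-- For the stable fourth-order system, the block matrix
`P = [[F, 0, −G, 0], [0, G, 0, −J], [−G, 0, J, 0], [0, −J, 0, K]]` solves the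
Lyapunov equation `AP + PAᵀ + diag(0, 0, 0, I) = 0`, and the trace of the
top-left block of `P` equals
`(1/(2a₁a₂))·tr(Q⁻²((a₃a₄/a₂)Q − I)(((a₃a₄/a₂) − (a₁a₄²/a₂²))Q − I)⁻¹)`. -/
theorem fourthOrder_lyapunov (n : ℕ) (hn : 1 ≤ n)
    (Q : Matrix (Fin n) (Fin n) ℝ) (hQ : Q.PosDef)
    (a₁ a₂ a₃ a₄ : ℝ) (ha₁ : 0 < a₁) (ha₂ : 0 < a₂) (ha₃ : 0 < a₃) (ha₄ : 0 < a₄)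
    (heig : ∀ lam ∈ Q.charpoly.roots,
      1 < (a₃ * a₄ / a₂) * lam ∧
      1 < ((a₃ * a₄ / a₂) - (a₁ * a₄ ^ 2 / a₂ ^ 2)) * lam) :
    let A : Matrix (Fin 4 × Fin n) (Fin 4 × Fin n) ℝ :=
      Mblk ![![0, 1, 0, 0], ![0, 0, 1, 0], ![0, 0, 0, 1],
        ![-(a₁ • Q), -(a₂ • Q), -(a₃ • Q), -(a₄ • Q)]]
    let M : Matrix (Fin n) (Fin n) ℝ :=
      (a₃ * a₄ - a₁ * a₄ ^ 2 / a₂) • Q - a₂ • (1 : Matrix (Fin n) (Fin n) ℝ)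
    let F : Matrix (Fin n) (Fin n) ℝ :=
      (1 / (2 * a₁)) • (Q⁻¹ * Q⁻¹ *
        ((a₃ * a₄ / a₂) • Q - (1 : Matrix (Fin n) (Fin n) ℝ)) * M⁻¹)
    let G : Matrix (Fin n) (Fin n) ℝ := (a₄ / (2 * a₂)) • (Q⁻¹ * M⁻¹)
    let J : Matrix (Fin n) (Fin n) ℝ := (1 / 2 : ℝ) • (Q⁻¹ * M⁻¹)
    let K : Matrix (Fin n) (Fin n) ℝ := ((1 / 2) * (a₃ - a₁ * a₄ / a₂)) • M⁻¹
    let P : Matrix (Fin 4 × Fin n) (Fin 4 × Fin n) ℝ :=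
      Mblk ![![F, 0, -G, 0], ![0, G, 0, -J], ![-G, 0, J, 0], ![0, -J, 0, K]]
    A * P + P * Aᵀ +
        Mblk ![![0, 0, 0, 0], ![0, 0, 0, 0], ![0, 0, 0, 0], ![0, 0, 0, 1]] = 0 ∧
      Matrix.trace (Matrix.of fun p q : Fin n => P (0, p) (0, q)) =
        (1 / (2 * a₁ * a₂)) *
          Matrix.trace (Q⁻¹ * Q⁻¹ *
            ((a₃ * a₄ / a₂) • Q - (1 : Matrix (Fin n) (Fin n) ℝ)) *
            (((a₃ * a₄ / a₂) - (a₁ * a₄ ^ 2 / a₂ ^ 2)) • Q -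
              (1 : Matrix (Fin n) (Fin n) ℝ))⁻¹) :=
  fourthOrder_lyapunov_general n Q hQ a₁ a₂ a₃ a₄ ha₁ ha₂ heig
end

section
/- Let n ≥ 1, let Q be an n×n real symmetric positive definite matrix, and let a > 0 satisfy a·λ > 1 for every eigenvalue λ of Q. Then (1/(2a))·tr( Q⁻¹ (a Q − I_n)⁻¹ ) > (1/(2a²))·tr( Q⁻² ), i.e., the third-order coherence with all gains equal to a strictly exceeds the second-order coherence with all gains equal to a. -/
/-!
Put `S = a Q - 1`. Every eigenvalue of `S` has the form `a λ - 1` with `λ` an eigenvalue of `Q`,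
so `S` is positive definite. The resolvent identity `S⁻¹ - (a Q)⁻¹ = S⁻¹ (a Q - S) (a Q)⁻¹ =
S⁻¹ (a Q)⁻¹` gives `tr (Q⁻¹ S⁻¹) = a⁻¹ tr (Q⁻²) + a⁻¹ tr (Q⁻¹ S⁻¹ Q⁻¹)`, and the last trace is
positive because `Q⁻¹ S⁻¹ Q⁻¹` is positive definite.
-/

open scoped ComplexOrder

lemma spectrum.div_mem_of_mem_smul_sub_one {R A : Type*} [Field R] [Ring A] [Algebra R A]
    {x : A} {a μ : R} (ha : a ≠ 0) (h : μ ∈ spectrum R (a • x - 1)) :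
    (μ + 1) / a ∈ spectrum R x := by
  have h1 : μ + 1 ∈ spectrum R (a • x) := by
    rwa [spectrum.add_mem_iff, map_one, neg_add_eq_sub]
  rw [← spectrum.smul_mem_smul_iff (r := Units.mk0 a ha)]
  simpa [Units.smul_mk0, mul_div_cancel₀ _ ha] using h1

namespace Matrix

variable {n : Type*} [Fintype n] [DecidableEq n]

section Field

variable {K : Type*} [Field K]

lemma mem_roots_charpoly_iff_mem_spectrum {A : Matrix n n K} {μ : K} :
    μ ∈ A.charpoly.roots ↔ μ ∈ spectrum K A := by
  rw [Polynomial.mem_roots A.charpoly_monic.ne_zero, mem_spectrum_iff_isRoot_charpoly]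

lemma inv_mul_inv_smul_sub_one {A : Matrix n n K} {a : K} (ha : a ≠ 0) (hA : IsUnit A)
    (hS : IsUnit (a • A - 1)) :
    A⁻¹ * (a • A - 1)⁻¹ = a⁻¹ • (A⁻¹ * A⁻¹ + A⁻¹ * (a • A - 1)⁻¹ * A⁻¹) := by
  have hinv : (a • A)⁻¹ = a⁻¹ • A⁻¹ :=
    inv_smul' A (Units.mk0 a ha) ((isUnit_iff_isUnit_det A).mp hA)
  have haA : IsUnit (a • A) := (isUnit_smul_iff (Units.mk0 a ha) A).mpr hA
  have hres : (a • A - 1)⁻¹ = a⁻¹ • A⁻¹ + (a • A - 1)⁻¹ * (a⁻¹ • A⁻¹) := by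
    rw [← hinv, ← sub_eq_iff_eq_add', inv_sub_inv (iff_of_true hS haA), sub_sub_cancel,
      Matrix.mul_one]
  conv_lhs => rw [hres]
  simp only [Matrix.mul_add, Matrix.mul_smul, smul_add, Matrix.mul_assoc]

end Field

section RCLike

variable {𝕜 : Type*} [RCLike 𝕜]

lemma IsHermitian.posDef_iff_forall_mem_spectrum_pos {A : Matrix n n 𝕜} (hA : A.IsHermitian) :
    A.PosDef ↔ ∀ μ ∈ spectrum ℝ A, 0 < μ := by
  simp [hA.posDef_iff_eigenvalues_pos, hA.spectrum_real_eq_range_eigenvalues]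

lemma IsHermitian.posDef_smul_sub_one {Q : Matrix n n 𝕜} (hQ : Q.IsHermitian) {a : ℝ}
    (ha : a ≠ 0) (h : ∀ μ ∈ spectrum ℝ Q, 1 < a * μ) : (a • Q - 1).PosDef := by
  have hS : (a • Q - 1).IsHermitian := (hQ.smul (IsSelfAdjoint.all a)).sub isHermitian_one
  refine hS.posDef_iff_forall_mem_spectrum_pos.mpr fun μ hμ => ?_
  have := h _ (spectrum.div_mem_of_mem_smul_sub_one ha hμ)
  rw [mul_div_cancel₀ _ ha] at this
  linarith

lemma PosDef.inv_mul_inv_mul_inv {A B : Matrix n n 𝕜} (hA : A.PosDef) (hB : B.PosDef) :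
    (A⁻¹ * B⁻¹ * A⁻¹).PosDef := by
  have := hB.inv.conjTranspose_mul_mul_same (mulVec_injective_iff_isUnit.mpr hA.inv.isUnit)
  rwa [hA.inv.isHermitian.eq] at this

end RCLike

end Matrix

open Matrix

/-- With all gains equal to `a`, the third-order coherence strictly exceeds the
second-order coherence: `(1/(2a))·tr(Q⁻¹(aQ − I)⁻¹) > (1/(2a²))·tr(Q⁻²)`. -/
theorem thirdOrder_coherence_gt_secondOrder (n : ℕ) (hn : 1 ≤ n)
    (Q : Matrix (Fin n) (Fin n) ℝ) (hQ : Q.PosDef)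
    (a : ℝ) (ha : 0 < a) (heig : ∀ lam ∈ Q.charpoly.roots, 1 < a * lam) :
    (1 / (2 * a ^ 2)) * Matrix.trace (Q⁻¹ * Q⁻¹) <
      (1 / (2 * a)) *
        Matrix.trace (Q⁻¹ * (a • Q - (1 : Matrix (Fin n) (Fin n) ℝ))⁻¹) := by
  have : Nonempty (Fin n) := ⟨⟨0, hn⟩⟩
  have hS : (a • Q - 1).PosDef := hQ.isHermitian.posDef_smul_sub_one ha.ne' fun μ hμ =>
    heig μ (mem_roots_charpoly_iff_mem_spectrum.mpr hμ)
  have hcorr := (hQ.inv_mul_inv_mul_inv hS).trace_pos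
  rw [inv_mul_inv_smul_sub_one ha.ne' hQ.isUnit hS.isUnit, trace_smul, trace_add, smul_eq_mul]
  calc 1 / (2 * a ^ 2) * trace (Q⁻¹ * Q⁻¹)
      < 1 / (2 * a ^ 2) * (trace (Q⁻¹ * Q⁻¹) + trace (Q⁻¹ * (a • Q - 1)⁻¹ * Q⁻¹)) := by
        gcongr
        exact lt_add_of_pos_right _ hcorr
    _ = 1 / (2 * a) * (a⁻¹ * (trace (Q⁻¹ * Q⁻¹) + trace (Q⁻¹ * (a • Q - 1)⁻¹ * Q⁻¹))) := by
        field_simp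
end

section
/- Let b_1 > 0, b_2 > 0, b_3 ≥ 0, and assume b_2·λ > b_3 for every eigenvalue λ of Q_S for every nonempty S ⊆ V (so b_1 Q_S and b_2 Q_S − b_3 I are invertible for every nonempty S). Define the set function f on subsets of V by f(∅) = 0 and, for nonempty S, f(S) = C − tr( (b_1 Q_S)⁻¹ (b_2 Q_S − b_3 I)⁻¹ ), where C = 2·max over single nodes s ∈ V of tr( (b_1 Q_{{s}})⁻¹ (b_2 Q_{{s}} − b_3 I)⁻¹ ). Then f is non-decreasing and submodular. -/
/-!
Both `b₁ Q_S` and `b₂ Q_S − b₃ I` are positive definite Z-matrices of the form `N₀ + D_w D_S` with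
`w ≥ 0`, so their inverses are entrywise nonnegative. The resolvent identity
`N⁻¹ − N'⁻¹ = N⁻¹ (N' − N) N'⁻¹` then shows that `S ↦ (N₀ + D_w D_S)⁻¹` is entrywise antitone and
supermodular on nonempty sets, and for entrywise nonnegative families both properties pass to the
trace of the product. Hence `g(S) = tr((b₁ Q_S)⁻¹ (b₂ Q_S − b₃ I)⁻¹)` is nonnegative, antitone and
supermodular, so `C − g` is monotone and submodular; the constant `C = 2 max_s g({s})` is large
enough that setting `f(∅) = 0` preserves both properties.
-/

open Matrix

namespace Matrix

variable {ι : Type*} [Fintype ι]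

lemma mul_apply_nonneg {X Y : Matrix ι ι ℝ} (hX : ∀ i j, 0 ≤ X i j) (hY : ∀ i j, 0 ≤ Y i j)
    (i j : ι) : 0 ≤ (X * Y) i j :=
  Finset.sum_nonneg fun k _ => mul_nonneg (hX i k) (hY k j)

lemma trace_mul_nonneg {X Y : Matrix ι ι ℝ} (hX : ∀ i j, 0 ≤ X i j) (hY : ∀ i j, 0 ≤ Y i j) :
    0 ≤ (X * Y).trace :=
  Finset.sum_nonneg fun i _ => mul_apply_nonneg hX hY i i

lemma mul_apply_le_mul_apply {X X' Y Y' : Matrix ι ι ℝ} (hX : ∀ i j, 0 ≤ X i j)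
    (hXX' : ∀ i j, X i j ≤ X' i j) (hY : ∀ i j, 0 ≤ Y i j) (hYY' : ∀ i j, Y i j ≤ Y' i j)
    (i j : ι) : (X * Y) i j ≤ (X' * Y') i j :=
  Finset.sum_le_sum fun k _ => mul_le_mul (hXX' i k) (hYY' k j) (hY k j) ((hX i k).trans (hXX' i k))

lemma trace_mul_le_trace_mul {X X' Y Y' : Matrix ι ι ℝ} (hX : ∀ i j, 0 ≤ X i j)
    (hXX' : ∀ i j, X i j ≤ X' i j) (hY : ∀ i j, 0 ≤ Y i j) (hYY' : ∀ i j, Y i j ≤ Y' i j) :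
    (X * Y).trace ≤ (X' * Y').trace :=
  Finset.sum_le_sum fun i _ => mul_apply_le_mul_apply hX hXX' hY hYY' i i

variable [DecidableEq ι]

theorem PosDef.inv_apply_nonneg_of_offDiag_nonpos {N : Matrix ι ι ℝ} (hN : N.PosDef)
    (hoff : ∀ i j, i ≠ j → N i j ≤ 0) (i j : ι) : 0 ≤ N⁻¹ i j := by
  set x : ι → ℝ := N⁻¹ *ᵥ Pi.single j 1
  set y : ι → ℝ := fun k => max (-x k) 0
  -- `x + y` and `y` have disjoint supports, so the sign pattern of `N` forces `yᵀ N y ≤ 0`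
  have hy : ∀ k, 0 ≤ y k := fun k => le_max_right _ _
  have hxy : ∀ k, 0 ≤ x k + y k := fun k => neg_le_iff_add_nonneg'.mp (le_max_left _ _)
  have hNx : N *ᵥ x = Pi.single j 1 := by
    rw [mulVec_mulVec, mul_nonsing_inv _ ((isUnit_iff_isUnit_det N).mp hN.isUnit), one_mulVec]
  have hcross : y ⬝ᵥ N *ᵥ (x + y) ≤ 0 := by
    simp only [dotProduct, mulVec, Finset.mul_sum]
    refine Finset.sum_nonpos fun k _ => Finset.sum_nonpos fun l _ => ?_
    rcases eq_or_ne k l with rfl | hkl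
    · have : y k * (x k + y k) = 0 := by
        rcases le_total (x k) 0 with h | h
        · simp [y, max_eq_left (neg_nonneg.mpr h)]
        · simp [y, max_eq_right (neg_nonpos.mpr h)]
      rw [Pi.add_apply, mul_left_comm, this, mul_zero]
    · exact mul_nonpos_of_nonneg_of_nonpos (hy k)
        (mul_nonpos_of_nonpos_of_nonneg (hoff k l hkl) (hxy l))
  have hyNy : y ⬝ᵥ N *ᵥ y ≤ 0 := by
    rw [mulVec_add, dotProduct_add, hNx, dotProduct_single, mul_one] at hcross
    linarith [hy j]
  have hy0 : y = 0 := by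
    by_contra h
    have := hN.dotProduct_mulVec_pos h
    simp only [star_trivial] at this
    linarith
  simpa [y, x, mulVec_single_one] using congrFun hy0 i

theorem IsHermitian.posDef_smul_sub_smul_one {A : Matrix ι ι ℝ} (hA : A.IsHermitian) {a b : ℝ}
    (ha : a ≠ 0) (h : ∀ μ ∈ A.charpoly.roots, b < a * μ) : (a • A - b • 1).PosDef := by
  have hB : (a • A - b • 1).IsHermitian :=
    (hA.smul (IsSelfAdjoint.all a)).sub (isHermitian_one.smul (IsSelfAdjoint.all b))
  rw [hB.posDef_iff_eigenvalues_pos]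
  intro k
  set ν := hB.eigenvalues k
  have hν : ν + b ∈ spectrum ℝ (a • A) := by
    have : ν ∈ spectrum ℝ (a • A - b • 1) := hB.eigenvalues_mem_spectrum_real k
    rw [← Algebra.algebraMap_eq_smul_one, ← spectrum.sub_singleton_eq] at this
    obtain ⟨x, hx, _, rfl, hxν⟩ := this
    rwa [← hxν, sub_add_cancel]
  have hμ : (ν + b) / a ∈ spectrum ℝ A := by
    rw [← spectrum.smul_mem_smul_iff (r := Units.mk0 a ha)]
    simpa [Units.smul_mk0, mul_div_cancel₀ _ ha] using hν
  have := h _ ((Polynomial.mem_roots (charpoly_monic A).ne_zero).mpr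
    (mem_spectrum_iff_isRoot_charpoly.mp hμ))
  rw [mul_div_cancel₀ _ ha] at this
  linarith

end Matrix

section SetFunction

variable {ι : Type*} [DecidableEq ι]

def AntitoneOnNonempty (g : Finset ι → ℝ) : Prop :=
  ∀ A B, A.Nonempty → A ⊆ B → g B ≤ g A

def SupermodularOnNonempty (g : Finset ι → ℝ) : Prop :=
  ∀ A B, (A ∩ B).Nonempty → g A + g B ≤ g (A ∪ B) + g (A ∩ B)

theorem monotone_submodular_of_antitoneOnNonempty_supermodularOnNonempty
    {g f : Finset ι → ℝ} {m : ℝ} (hg : ∀ S, S.Nonempty → 0 ≤ g S)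
    (hanti : AntitoneOnNonempty g) (hsuper : SupermodularOnNonempty g) (hm : ∀ s, g {s} ≤ m)
    (hf₀ : f ∅ = 0) (hf : ∀ S, S.Nonempty → f S = 2 * m - g S) :
    (∀ A B, A ⊆ B → f A ≤ f B) ∧ (∀ A B, f (A ∪ B) + f (A ∩ B) ≤ f A + f B) := by
  have hfm : ∀ S, S.Nonempty → m ≤ f S ∧ f S ≤ 2 * m := by
    rintro S ⟨s, hs⟩
    have h₁ := hanti {s} S (Finset.singleton_nonempty s) (Finset.singleton_subset_iff.mpr hs)
    have h₂ := hg {s} (Finset.singleton_nonempty s)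
    have h₃ := hg S ⟨s, hs⟩
    rw [hf S ⟨s, hs⟩]
    constructor <;> linarith [hm s]
  constructor
  · intro A B hAB
    rcases A.eq_empty_or_nonempty with rfl | hA
    · rcases B.eq_empty_or_nonempty with rfl | hB
      · rfl
      · linarith [hfm B hB]
    · rw [hf A hA, hf B (hA.mono hAB)]
      linarith [hanti A B hA hAB]
  · intro A B
    rcases A.eq_empty_or_nonempty with rfl | hA
    · simp [hf₀]
    rcases B.eq_empty_or_nonempty with rfl | hB
    · simp [hf₀]
    rcases (A ∩ B).eq_empty_or_nonempty with hAB | hAB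
    · rw [hAB, hf₀]
      linarith [hfm A hA, hfm B hB, hfm (A ∪ B) (hA.mono Finset.subset_union_left)]
    · rw [hf A hA, hf B hB, hf (A ∪ B) (hA.mono Finset.subset_union_left), hf _ hAB]
      linarith [hsuper A B hAB]

end SetFunction

section TraceOfProduct

variable {ι : Type*} [Fintype ι] {P R : Finset ι → Matrix ι ι ℝ}

theorem antitoneOnNonempty_trace_mul (hP : ∀ S, S.Nonempty → ∀ i j, 0 ≤ P S i j)
    (hR : ∀ S, S.Nonempty → ∀ i j, 0 ≤ R S i j)
    (hPa : ∀ i j, AntitoneOnNonempty fun S => P S i j)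
    (hRa : ∀ i j, AntitoneOnNonempty fun S => R S i j) :
    AntitoneOnNonempty fun S => (P S * R S).trace := fun A B hA hAB =>
  trace_mul_le_trace_mul (hP B (hA.mono hAB)) (fun i j => hPa i j A B hA hAB)
    (hR B (hA.mono hAB)) (fun i j => hRa i j A B hA hAB)

theorem supermodularOnNonempty_trace_mul [DecidableEq ι] (hP : ∀ S, S.Nonempty → ∀ i j, 0 ≤ P S i j)
    (hR : ∀ S, S.Nonempty → ∀ i j, 0 ≤ R S i j)
    (hPa : ∀ i j, AntitoneOnNonempty fun S => P S i j)
    (hRa : ∀ i j, AntitoneOnNonempty fun S => R S i j)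
    (hPs : ∀ i j, SupermodularOnNonempty fun S => P S i j)
    (hRs : ∀ i j, SupermodularOnNonempty fun S => R S i j) :
    SupermodularOnNonempty fun S => (P S * R S).trace := by
  intro A B hI
  have hA : A.Nonempty := hI.mono Finset.inter_subset_left
  have hB : B.Nonempty := hI.mono Finset.inter_subset_right
  have hU : (A ∪ B).Nonempty := hA.mono Finset.subset_union_left
  -- the increments `tr (P R)` along `A ∩ B ⊆ A` and along `B ⊆ A ∪ B`, split bilinearly
  have hfirst : ((P B - P (A ∪ B)) * R B).trace ≤ ((P (A ∩ B) - P A) * R (A ∩ B)).trace :=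
    trace_mul_le_trace_mul
      (fun i j => sub_nonneg.mpr (hPa i j B _ hB Finset.subset_union_right))
      (fun i j => by rw [Matrix.sub_apply, Matrix.sub_apply]; linarith [hPs i j A B hI])
      (hR B hB) (fun i j => hRa i j _ B hI Finset.inter_subset_right)
  have hsecond : (P (A ∪ B) * (R B - R (A ∪ B))).trace ≤ (P A * (R (A ∩ B) - R A)).trace :=
    trace_mul_le_trace_mul (hP _ hU) (fun i j => hPa i j A _ hA Finset.subset_union_left)
      (fun i j => sub_nonneg.mpr (hRa i j B _ hB Finset.subset_union_right))
      (fun i j => by rw [Matrix.sub_apply, Matrix.sub_apply]; linarith [hRs i j A B hI])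
  simp only [sub_mul, mul_sub, trace_sub] at hfirst hsecond
  linarith

end TraceOfProduct

section AddDiagOn

variable {ι : Type*} [DecidableEq ι] {N₀ : Matrix ι ι ℝ} {w : ι → ℝ}

/-- `N₀ + D_w D_S`; for `N₀ = L` and `w = κ` this is `Q_S`. -/
def addDiagOn (N₀ : Matrix ι ι ℝ) (w : ι → ℝ) (S : Finset ι) : Matrix ι ι ℝ :=
  N₀ + diagonal fun i => if i ∈ S then w i else 0

lemma addDiagOn_apply_of_ne (S : Finset ι) {i j : ι} (h : i ≠ j) :
    addDiagOn N₀ w S i j = N₀ i j := by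
  simp [addDiagOn, diagonal_apply_ne _ h]

lemma sub_addDiagOn_apply_nonneg (hw : 0 ≤ w) {A B : Finset ι} (hAB : A ⊆ B) (i j : ι) :
    0 ≤ (addDiagOn N₀ w B - addDiagOn N₀ w A) i j := by
  rcases eq_or_ne i j with rfl | h
  · by_cases hA : i ∈ A
    · simp [addDiagOn, hA, hAB hA]
    · by_cases hB : i ∈ B
      · simpa [addDiagOn, hA, hB] using hw i
      · simp [addDiagOn, hA, hB]
  · simp [addDiagOn_apply_of_ne _ h]

lemma addDiagOn_sub_addDiagOn_inter (A B : Finset ι) :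
    addDiagOn N₀ w A - addDiagOn N₀ w (A ∩ B) = addDiagOn N₀ w (A ∪ B) - addDiagOn N₀ w B := by
  ext i j
  by_cases hA : i ∈ A <;> by_cases hB : i ∈ B <;> simp [addDiagOn, diagonal_apply, hA, hB]

lemma smul_addDiagOn (c : ℝ) (S : Finset ι) :
    c • addDiagOn N₀ w S = addDiagOn (c • N₀) (c • w) S := by
  simp only [addDiagOn, smul_add, ← diagonal_smul]
  congr 2
  ext i
  by_cases h : i ∈ S <;> simp [h]

lemma addDiagOn_sub_smul_one (c : ℝ) (S : Finset ι) :
    addDiagOn N₀ w S - c • 1 = addDiagOn (N₀ - c • 1) w S := by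
  simp only [addDiagOn]
  abel

variable [Fintype ι] (hoff : ∀ i j, i ≠ j → N₀ i j ≤ 0) (hw : 0 ≤ w)
  (hpos : ∀ S : Finset ι, S.Nonempty → (addDiagOn N₀ w S).PosDef)
include hoff hpos

lemma inv_addDiagOn_apply_nonneg {S : Finset ι} (hS : S.Nonempty) (i j : ι) :
    0 ≤ (addDiagOn N₀ w S)⁻¹ i j :=
  (hpos S hS).inv_apply_nonneg_of_offDiag_nonpos
    (fun i j h => (addDiagOn_apply_of_ne S h).trans_le (hoff i j h)) i j

include hw

lemma antitoneOnNonempty_inv_addDiagOn (i j : ι) :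
    AntitoneOnNonempty fun S => (addDiagOn N₀ w S)⁻¹ i j := by
  intro A B hA hAB
  have hB := hA.mono hAB
  have hres := inv_sub_inv (iff_of_true (hpos A hA).isUnit (hpos B hB).isUnit)
  rw [← sub_nonneg, ← Matrix.sub_apply, hres]
  exact mul_apply_nonneg (mul_apply_nonneg (inv_addDiagOn_apply_nonneg hoff hpos hA)
    (sub_addDiagOn_apply_nonneg hw hAB)) (inv_addDiagOn_apply_nonneg hoff hpos hB) i j

lemma supermodularOnNonempty_inv_addDiagOn (i j : ι) :
    SupermodularOnNonempty fun S => (addDiagOn N₀ w S)⁻¹ i j := by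
  intro A B hI
  have hA := hI.mono Finset.inter_subset_left
  have hB := hI.mono Finset.inter_subset_right
  have hU : (A ∪ B).Nonempty := hA.mono Finset.subset_union_left
  have hanti := antitoneOnNonempty_inv_addDiagOn hoff hw hpos
  set N := addDiagOn N₀ w
  have hnonneg : ∀ {S : Finset ι}, S.Nonempty → ∀ k l, 0 ≤ (N S)⁻¹ k l :=
    fun hS => inv_addDiagOn_apply_nonneg hoff hpos hS
  have hincr : ∀ k l, 0 ≤ (N A - N (A ∩ B)) k l :=
    sub_addDiagOn_apply_nonneg hw Finset.inter_subset_left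
  -- both increments are `X (N A - N (A ∩ B)) Y`, with `X` and `Y` entrywise larger for the first
  have h₁ := inv_sub_inv (iff_of_true (hpos _ hI).isUnit (hpos A hA).isUnit)
  have h₂ := inv_sub_inv (iff_of_true (hpos B hB).isUnit (hpos _ hU).isUnit)
  rw [← addDiagOn_sub_addDiagOn_inter] at h₂
  have key : ((N B)⁻¹ * (N A - N (A ∩ B)) * (N (A ∪ B))⁻¹) i j ≤
      ((N (A ∩ B))⁻¹ * (N A - N (A ∩ B)) * (N A)⁻¹) i j :=
    mul_apply_le_mul_apply (mul_apply_nonneg (hnonneg hB) hincr)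
      (mul_apply_le_mul_apply (hnonneg hB)
        (fun k l => hanti k l _ B hI Finset.inter_subset_right) hincr fun _ _ => le_rfl)
      (hnonneg hU) (fun k l => hanti k l A _ hA Finset.subset_union_left) i j
  rw [← h₁, ← h₂, Matrix.sub_apply, Matrix.sub_apply] at key
  show _ ≤ _
  linarith

end AddDiagOn

theorem setFunction_general23_monotone_submodular_general (n : ℕ)
    (L : Matrix (Fin n) (Fin n) ℝ)
    (hLoff : ∀ i j, i ≠ j → L i j ≤ 0)
    (κ : Fin n → ℝ) (hκ : ∀ i, 0 < κ i)
    (Q : Finset (Fin n) → Matrix (Fin n) (Fin n) ℝ)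
    (hQdef : ∀ S, Q S = L + Matrix.diagonal fun i => if i ∈ S then κ i else 0)
    (hQpos : ∀ S : Finset (Fin n), S.Nonempty → (Q S).PosDef)
    (b₁ b₂ b₃ : ℝ) (hb₁ : 0 < b₁) (hb₂ : 0 < b₂)
    (heig : ∀ S : Finset (Fin n), S.Nonempty →
      ∀ lam ∈ (Q S).charpoly.roots, b₃ < b₂ * lam)
    (mx : ℝ)
    (hmx : IsGreatest {x : ℝ | ∃ s : Fin n, x =
      Matrix.trace ((b₁ • Q {s})⁻¹ *
        (b₂ • Q {s} - b₃ • (1 : Matrix (Fin n) (Fin n) ℝ))⁻¹)} mx)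
    (f : Finset (Fin n) → ℝ)
    (hf0 : f ∅ = 0)
    (hf : ∀ S : Finset (Fin n), S.Nonempty →
      f S = 2 * mx - Matrix.trace ((b₁ • Q S)⁻¹ *
        (b₂ • Q S - b₃ • (1 : Matrix (Fin n) (Fin n) ℝ))⁻¹)) :
    (∀ A B : Finset (Fin n), A ⊆ B → f A ≤ f B) ∧
    (∀ A B : Finset (Fin n), f (A ∪ B) + f (A ∩ B) ≤ f A + f B) := by
  obtain rfl : Q = addDiagOn L κ := funext hQdef
  have hoff₁ : ∀ i j, i ≠ j → (b₁ • L) i j ≤ 0 := fun i j h =>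
    mul_nonpos_of_nonneg_of_nonpos hb₁.le (hLoff i j h)
  have hoff₂ : ∀ i j, i ≠ j → (b₂ • L - b₃ • 1) i j ≤ 0 := fun i j h => by
    simpa [one_apply_ne h] using mul_nonpos_of_nonneg_of_nonpos hb₂.le (hLoff i j h)
  have hw₁ : 0 ≤ b₁ • κ := smul_nonneg hb₁.le fun i => (hκ i).le
  have hw₂ : 0 ≤ b₂ • κ := smul_nonneg hb₂.le fun i => (hκ i).le
  have hpos₁ : ∀ S, S.Nonempty → (addDiagOn (b₁ • L) (b₁ • κ) S).PosDef := fun S hS =>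
    smul_addDiagOn b₁ S ▸ (hQpos S hS).smul hb₁
  have hpos₂ : ∀ S, S.Nonempty → (addDiagOn (b₂ • L - b₃ • 1) (b₂ • κ) S).PosDef := fun S hS => by
    rw [← addDiagOn_sub_smul_one, ← smul_addDiagOn]
    exact (hQpos S hS).isHermitian.posDef_smul_sub_smul_one hb₂.ne' (heig S hS)
  have hg : ∀ S, ((b₁ • addDiagOn L κ S)⁻¹ * (b₂ • addDiagOn L κ S - b₃ • 1)⁻¹).trace =
      ((addDiagOn (b₁ • L) (b₁ • κ) S)⁻¹ * (addDiagOn (b₂ • L - b₃ • 1) (b₂ • κ) S)⁻¹).trace := by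
    intro S
    rw [smul_addDiagOn, smul_addDiagOn, addDiagOn_sub_smul_one]
  refine monotone_submodular_of_antitoneOnNonempty_supermodularOnNonempty
    (fun S hS => trace_mul_nonneg (inv_addDiagOn_apply_nonneg hoff₁ hpos₁ hS)
      (inv_addDiagOn_apply_nonneg hoff₂ hpos₂ hS))
    (antitoneOnNonempty_trace_mul (fun _ => inv_addDiagOn_apply_nonneg hoff₁ hpos₁)
      (fun _ => inv_addDiagOn_apply_nonneg hoff₂ hpos₂)
      (antitoneOnNonempty_inv_addDiagOn hoff₁ hw₁ hpos₁)
      (antitoneOnNonempty_inv_addDiagOn hoff₂ hw₂ hpos₂))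
    (supermodularOnNonempty_trace_mul (fun _ => inv_addDiagOn_apply_nonneg hoff₁ hpos₁)
      (fun _ => inv_addDiagOn_apply_nonneg hoff₂ hpos₂)
      (antitoneOnNonempty_inv_addDiagOn hoff₁ hw₁ hpos₁)
      (antitoneOnNonempty_inv_addDiagOn hoff₂ hw₂ hpos₂)
      (supermodularOnNonempty_inv_addDiagOn hoff₁ hw₁ hpos₁)
      (supermodularOnNonempty_inv_addDiagOn hoff₂ hw₂ hpos₂))
    (fun s => (hg {s}).symm ▸ hmx.2 ⟨s, rfl⟩) hf0 (fun S hS => (hg S).symm ▸ hf S hS)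

/-- Lemma 1: the set function `f(∅) = 0`,
`f(S) = C − tr((b₁Q_S)⁻¹(b₂Q_S − b₃I)⁻¹)` for nonempty `S`, with
`C = 2·max_{s ∈ V} tr((b₁Q_{{s}})⁻¹(b₂Q_{{s}} − b₃I)⁻¹)`, is non-decreasing
and submodular, where `Q_S = L + D_κ D_S` for the weighted Laplacian `L` of a
connected graph and positive leader weights `κ`. -/
theorem setFunction_general23_monotone_submodular (n : ℕ) (hn : 1 ≤ n)
    (L : Matrix (Fin n) (Fin n) ℝ)
    (hLsymm : L.IsSymm)
    (hLoff : ∀ i j, i ≠ j → L i j ≤ 0)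
    (hLrow : ∀ i, ∑ j, L i j = 0)
    (hLker : ∀ x : Fin n → ℝ, L.mulVec x = 0 ↔ ∃ c : ℝ, x = fun _ => c)
    (κ : Fin n → ℝ) (hκ : ∀ i, 0 < κ i)
    (Q : Finset (Fin n) → Matrix (Fin n) (Fin n) ℝ)
    (hQdef : ∀ S, Q S = L + Matrix.diagonal fun i => if i ∈ S then κ i else 0)
    (hQpos : ∀ S : Finset (Fin n), S.Nonempty → (Q S).PosDef)
    (b₁ b₂ b₃ : ℝ) (hb₁ : 0 < b₁) (hb₂ : 0 < b₂) (hb₃ : 0 ≤ b₃)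
    (heig : ∀ S : Finset (Fin n), S.Nonempty →
      ∀ lam ∈ (Q S).charpoly.roots, b₃ < b₂ * lam)
    (mx : ℝ)
    (hmx : IsGreatest {x : ℝ | ∃ s : Fin n, x =
      Matrix.trace ((b₁ • Q {s})⁻¹ *
        (b₂ • Q {s} - b₃ • (1 : Matrix (Fin n) (Fin n) ℝ))⁻¹)} mx)
    (f : Finset (Fin n) → ℝ)
    (hf0 : f ∅ = 0)
    (hf : ∀ S : Finset (Fin n), S.Nonempty →
      f S = 2 * mx - Matrix.trace ((b₁ • Q S)⁻¹ *
        (b₂ • Q S - b₃ • (1 : Matrix (Fin n) (Fin n) ℝ))⁻¹)) :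
    (∀ A B : Finset (Fin n), A ⊆ B → f A ≤ f B) ∧
    (∀ A B : Finset (Fin n), f (A ∪ B) + f (A ∩ B) ≤ f A + f B) :=
  setFunction_general23_monotone_submodular_general n L hLoff κ hκ Q hQdef hQpos b₁ b₂ b₃ hb₁ hb₂
    heig mx hmx f hf0 hf
end

section
/- Let b_1 > b_2 > 0, and assume (b_1 − b_2)·λ > 1 for every eigenvalue λ of Q_S for every nonempty S ⊆ V (so Q_S and (b_1 − b_2) Q_S − I are invertible for every nonempty S). Define the set function f on subsets of V by f(∅) = 0 and, for nonempty S, f(S) = C − tr( Q_S⁻² (b_1 Q_S − I) ((b_1 − b_2) Q_S − I)⁻¹ ), where C = 2·max over single nodes s ∈ V of tr( Q_{{s}}⁻² (b_1 Q_{{s}} − I) ((b_1 − b_2) Q_{{s}} − I)⁻¹ ). Then f is non-decreasing and submodular. -/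
/-!
Each `Q_S` with `S` nonempty is a Stieltjes matrix (symmetric positive definite with nonpositive
off-diagonal entries), hence has an entrywise nonnegative inverse, and so does
`(b₁ - b₂) Q_S - I`. Enlarging `S` adds a nonnegative diagonal, and `S ↦ Q_S` is modular, so the
resolvent identity `A⁻¹ - B⁻¹ = A⁻¹ (B - A) B⁻¹` shows that both inverses are, entrywise,
nonnegative, antitone and supermodular in `S`. These three properties are stable under sums and
products, and by partial fractions the subtracted trace is
`tr (Q_S⁻¹ Q_S⁻¹) + b₂ tr (Q_S⁻¹ ((b₁ - b₂) Q_S - I)⁻¹)`, a sum of products of such entries. So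
this trace `g(S)` is nonnegative, antitone and supermodular on nonempty sets, which makes
`f = 2 C - g` monotone and submodular; since `0 ≤ g ≤ C`, the constant also covers the pairs with
`A ∩ B = ∅` and the value `f ∅ = 0`.
-/

open Matrix Finset

/-- The values at `A ∩ B`, `A`, `B`, `A ∪ B` of a nonnegative, antitone, supermodular function. -/
structure IsSupermodularSquare (m a b u : ℝ) : Prop where
  nonneg : 0 ≤ u
  union_le_left : u ≤ a
  union_le_right : u ≤ b
  supermodular : a + b ≤ m + u

namespace IsSupermodularSquare

variable {m a b u m' a' b' u' : ℝ}

lemma right_le_inter (h : IsSupermodularSquare m a b u) : b ≤ m := by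
  linarith [h.supermodular, h.union_le_left]

lemma const {c : ℝ} (hc : 0 ≤ c) : IsSupermodularSquare c c c c :=
  ⟨hc, le_rfl, le_rfl, le_rfl⟩

lemma add (h : IsSupermodularSquare m a b u) (h' : IsSupermodularSquare m' a' b' u') :
    IsSupermodularSquare (m + m') (a + a') (b + b') (u + u') where
  nonneg := add_nonneg h.nonneg h'.nonneg
  union_le_left := add_le_add h.union_le_left h'.union_le_left
  union_le_right := add_le_add h.union_le_right h'.union_le_right
  supermodular := by linarith [h.supermodular, h'.supermodular]

lemma mul (h : IsSupermodularSquare m a b u) (h' : IsSupermodularSquare m' a' b' u') :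
    IsSupermodularSquare (m * m') (a * a') (b * b') (u * u') where
  nonneg := mul_nonneg h.nonneg h'.nonneg
  union_le_left := mul_le_mul h.union_le_left h'.union_le_left h'.nonneg
    (h.nonneg.trans h.union_le_left)
  union_le_right := mul_le_mul h.union_le_right h'.union_le_right h'.nonneg
    (h.nonneg.trans h.union_le_right)
  supermodular := by
    -- `m m' + u u' - a a' - b b' = (m + u - a - b) m' + (m' + u' - a' - b') (a + b - u)`
    -- `  + (a - u) (b' - u') + (b - u) (a' - u')`
    have hm' : 0 ≤ m' := h'.nonneg.trans (h'.union_le_right.trans h'.right_le_inter)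
    nlinarith [mul_nonneg (sub_nonneg.2 h.supermodular) hm',
      mul_nonneg (sub_nonneg.2 h'.supermodular)
        (add_nonneg (h.nonneg.trans h.union_le_left) (sub_nonneg.2 h.union_le_right)),
      mul_nonneg (sub_nonneg.2 h.union_le_left) (sub_nonneg.2 h'.union_le_right),
      mul_nonneg (sub_nonneg.2 h.union_le_right) (sub_nonneg.2 h'.union_le_left)]

lemma sum {ι : Type*} (s : Finset ι) {m a b u : ι → ℝ}
    (h : ∀ i ∈ s, IsSupermodularSquare (m i) (a i) (b i) (u i)) :
    IsSupermodularSquare (∑ i ∈ s, m i) (∑ i ∈ s, a i) (∑ i ∈ s, b i) (∑ i ∈ s, u i) where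
  nonneg := sum_nonneg fun i hi => (h i hi).nonneg
  union_le_left := sum_le_sum fun i hi => (h i hi).union_le_left
  union_le_right := sum_le_sum fun i hi => (h i hi).union_le_right
  supermodular := by
    simp only [← sum_add_distrib]
    exact sum_le_sum fun i hi => (h i hi).supermodular

end IsSupermodularSquare

section SetFunction

variable {ι : Type*} [DecidableEq ι] {g : Finset ι → ℝ}
  (hg : ∀ A B, (A ∩ B).Nonempty → IsSupermodularSquare (g (A ∩ B)) (g A) (g B) (g (A ∪ B)))
include hg

lemma antitone_of_isSupermodularSquare {A B : Finset ι} (hA : A.Nonempty) (hAB : A ⊆ B) :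
    g B ≤ g A := by
  simpa [inter_eq_left.2 hAB, union_eq_right.2 hAB] using
    (hg A B (by rwa [inter_eq_left.2 hAB])).union_le_left

lemma nonneg_of_isSupermodularSquare {S : Finset ι} (hS : S.Nonempty) : 0 ≤ g S := by
  simpa using (hg S S (by simpa using hS)).nonneg

lemma monotone_submodular_of_isSupermodularSquare {f : Finset ι → ℝ} {C : ℝ}
    (hC : ∀ s, g {s} ≤ C) (hf0 : f ∅ = 0) (hf : ∀ S, S.Nonempty → f S = 2 * C - g S) :
    Monotone f ∧ ∀ A B, f (A ∪ B) + f (A ∩ B) ≤ f A + f B := by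
  have hle : ∀ S : Finset ι, S.Nonempty → 0 ≤ g S ∧ g S ≤ C := fun S ⟨s, hs⟩ =>
    ⟨nonneg_of_isSupermodularSquare hg ⟨s, hs⟩, (antitone_of_isSupermodularSquare hg
      (singleton_nonempty s) (singleton_subset_iff.2 hs)).trans (hC s)⟩
  have hf_nonneg : ∀ S, 0 ≤ f S := fun S => by
    rcases S.eq_empty_or_nonempty with rfl | hS
    · exact hf0.ge
    · linarith [hf S hS, hle S hS]
  refine ⟨fun A B hAB => ?_, fun A B => ?_⟩
  · rcases A.eq_empty_or_nonempty with rfl | hA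
    · exact hf0 ▸ hf_nonneg B
    rw [hf A hA, hf B (hA.mono hAB)]
    linarith [antitone_of_isSupermodularSquare hg hA hAB]
  rcases (A ∩ B).eq_empty_or_nonempty with hAB | hAB
  · rcases A.eq_empty_or_nonempty with rfl | hA
    · simp [hf0]
    rcases B.eq_empty_or_nonempty with rfl | hB
    · simp [hf0]
    rw [hAB, hf0, hf A hA, hf B hB, hf _ (hA.mono subset_union_left)]
    linarith [hle A hA, hle B hB, hle _ (hA.mono (subset_union_left (s₂ := B)))]
  · rw [hf A (hAB.mono inter_subset_left), hf B (hAB.mono inter_subset_right),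
      hf _ (hAB.mono (inter_subset_left.trans subset_union_left)), hf _ hAB]
    linarith [(hg A B hAB).supermodular]

end SetFunction

variable {n : Type*} [Fintype n]

lemma Matrix.mul_apply_nonneg_s14 {X Y : Matrix n n ℝ} (hX : ∀ i j, 0 ≤ X i j)
    (hY : ∀ i j, 0 ≤ Y i j) (i j : n) : 0 ≤ (X * Y) i j :=
  sum_nonneg fun k _ => mul_nonneg (hX i k) (hY k j)

lemma Matrix.mul_apply_le_mul_apply_s14 {X X' Y Y' : Matrix n n ℝ} (hX : ∀ i j, 0 ≤ X i j)
    (hY : ∀ i j, 0 ≤ Y i j) (hXX' : ∀ i j, X i j ≤ X' i j) (hYY' : ∀ i j, Y i j ≤ Y' i j)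
    (i j : n) : (X * Y) i j ≤ (X' * Y') i j :=
  sum_le_sum fun k _ => mul_le_mul (hXX' i k) (hYY' k j) (hY k j) ((hX i k).trans (hXX' i k))

lemma isSupermodularSquare_trace_mul {Xm Xa Xb Xu Ym Ya Yb Yu : Matrix n n ℝ}
    (hX : ∀ i j, IsSupermodularSquare (Xm i j) (Xa i j) (Xb i j) (Xu i j))
    (hY : ∀ i j, IsSupermodularSquare (Ym i j) (Ya i j) (Yb i j) (Yu i j)) :
    IsSupermodularSquare (trace (Xm * Ym)) (trace (Xa * Ya)) (trace (Xb * Yb))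
      (trace (Xu * Yu)) := by
  simp only [trace, Matrix.diag, mul_apply]
  exact .sum _ fun i _ => .sum _ fun j _ => (hX i j).mul (hY j i)

lemma Matrix.abs_dotProduct_mulVec_abs_le {A : Matrix n n ℝ}
    (hA : ∀ ⦃i j⦄, i ≠ j → A i j ≤ 0) (x : n → ℝ) :
    |x| ⬝ᵥ (A *ᵥ |x|) ≤ x ⬝ᵥ (A *ᵥ x) := by
  simp only [dot_mulVec_eq_sum_sum, Pi.abs_apply]
  refine sum_le_sum fun j _ => sum_le_sum fun i _ => ?_
  rcases eq_or_ne i j with rfl | hij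
  · rw [mul_right_comm, abs_mul_abs_self, mul_right_comm]
  · linarith [mul_le_mul_of_nonpos_left ((le_abs_self _).trans (abs_mul (x i) (x j)).le) (hA hij)]

structure Matrix.IsStieltjes (A : Matrix n n ℝ) : Prop where
  posDef : A.PosDef
  nonpos_of_ne : ∀ ⦃i j⦄, i ≠ j → A i j ≤ 0

namespace Matrix.IsStieltjes

variable {A B P U : Matrix n n ℝ}

-- `z := |x| - x ≥ 0` has `zᵀ A z ≤ -2 zᵀ (A x) ≤ 0` because `A` is a Z-matrix, so `z = 0`.
lemma nonneg_of_mulVec_nonneg (hA : A.IsStieltjes) {x : n → ℝ} (hx : 0 ≤ A *ᵥ x) : 0 ≤ x := by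
  set z := |x| - x
  have hsymm : |x| ⬝ᵥ (A *ᵥ x) = x ⬝ᵥ (A *ᵥ |x|) := by
    rw [dotProduct_mulVec, ← mulVec_transpose,
      (isHermitian_iff_isSymm.1 hA.posDef.isHermitian).eq, dotProduct_comm]
  have hz : z ⬝ᵥ (A *ᵥ z) ≤ 0 := by
    have hzx : 0 ≤ z ⬝ᵥ (A *ᵥ x) :=
      dotProduct_nonneg_of_nonneg (fun i => sub_nonneg.2 (le_abs_self (x i))) hx
    have := abs_dotProduct_mulVec_abs_le hA.nonpos_of_ne x
    simp only [z, mulVec_sub, dotProduct_sub, sub_dotProduct] at hzx ⊢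
    linarith
  have hz0 : z = 0 := by
    by_contra hne
    simpa using (hA.posDef.dotProduct_mulVec_pos hne).trans_le hz
  intro i
  have hxi : |x i| - x i = 0 := congrFun hz0 i
  simpa [sub_eq_zero.1 hxi] using abs_nonneg (x i)

variable [DecidableEq n]

lemma isUnit_det (hA : A.IsStieltjes) : IsUnit A.det := hA.posDef.det_pos.ne'.isUnit

lemma inv_apply_nonneg (hA : A.IsStieltjes) (i j : n) : 0 ≤ A⁻¹ i j := by
  have hcol : A *ᵥ (A⁻¹ *ᵥ Pi.single j 1) = Pi.single j 1 := by
    rw [mulVec_mulVec, mul_nonsing_inv _ hA.isUnit_det, one_mulVec]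
  have := hA.nonneg_of_mulVec_nonneg (hcol ▸ Pi.single_nonneg.2 zero_le_one) i
  simpa [mulVec_single] using this

lemma inv_sub_inv_eq (hA : A.IsStieltjes) (hB : B.IsStieltjes) :
    A⁻¹ - B⁻¹ = A⁻¹ * (B - A) * B⁻¹ :=
  inv_sub_inv (iff_of_true ((isUnit_iff_isUnit_det _).2 hA.isUnit_det)
    ((isUnit_iff_isUnit_det _).2 hB.isUnit_det))

lemma inv_apply_anti (hA : A.IsStieltjes) (hB : B.IsStieltjes) (hAB : ∀ i j, A i j ≤ B i j)
    (i j : n) : B⁻¹ i j ≤ A⁻¹ i j := by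
  have := mul_apply_nonneg_s14 (mul_apply_nonneg_s14 (Y := B - A) hA.inv_apply_nonneg
    fun i j => sub_nonneg.2 (hAB i j)) hB.inv_apply_nonneg i j
  rwa [← inv_sub_inv_eq hA hB, sub_apply, sub_nonneg] at this

lemma isSupermodularSquare_inv (hP : P.IsStieltjes) (hA : A.IsStieltjes) (hB : B.IsStieltjes)
    (hU : U.IsStieltjes) (hPA : ∀ i j, P i j ≤ A i j) (hPB : ∀ i j, P i j ≤ B i j)
    (hsum : A + B = P + U) (i j : n) :
    IsSupermodularSquare (P⁻¹ i j) (A⁻¹ i j) (B⁻¹ i j) (U⁻¹ i j) := by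
  have hBU : U - B = A - P := by rw [sub_eq_sub_iff_add_eq_add, add_comm, hsum, add_comm]
  have hAU : ∀ i j, A i j ≤ U i j := fun i j => by
    have := congrFun (congrFun hBU i) j; simp only [sub_apply] at this; linarith [hPB i j]
  have hBU' : ∀ i j, B i j ≤ U i j := fun i j => by
    have := congrFun (congrFun hBU i) j; simp only [sub_apply] at this; linarith [hPA i j]
  refine ⟨hU.inv_apply_nonneg i j, inv_apply_anti hA hU hAU i j, inv_apply_anti hB hU hBU' i j, ?_⟩
  -- `B⁻¹ - U⁻¹ = B⁻¹ (A - P) U⁻¹` is entrywise below `P⁻¹ - A⁻¹ = P⁻¹ (A - P) A⁻¹`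
  have hAP : ∀ i j, 0 ≤ (A - P) i j := fun i j => sub_nonneg.2 (hPA i j)
  have hdecr := mul_apply_le_mul_apply_s14 (mul_apply_nonneg_s14 hB.inv_apply_nonneg hAP)
    hU.inv_apply_nonneg
    (mul_apply_le_mul_apply_s14 hB.inv_apply_nonneg hAP (inv_apply_anti hP hB hPB) fun _ _ => le_rfl)
    (inv_apply_anti hA hU hAU) i j
  rw [← hBU, ← inv_sub_inv_eq hB hU, hBU, ← inv_sub_inv_eq hP hA, sub_apply, sub_apply] at hdecr
  linarith

end Matrix.IsStieltjes

variable [DecidableEq n]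

open scoped Pointwise in
lemma Matrix.IsHermitian.posDef_sub_smul_one {A : Matrix n n ℝ} (hA : A.IsHermitian) {c : ℝ}
    (hc : ∀ μ ∈ A.charpoly.roots, c < μ) : (A - c • 1).PosDef := by
  have hH : (A - c • 1).IsHermitian := hA.sub (isHermitian_one.smul (.all c))
  rw [hH.posDef_iff_eigenvalues_pos]
  intro i
  have hmem : hH.eigenvalues i ∈ spectrum ℝ A - ({c} : Set ℝ) := by
    rw [spectrum.sub_singleton_eq, Algebra.algebraMap_eq_smul_one]
    exact hH.eigenvalues_mem_spectrum_real i
  obtain ⟨μ, hμ, _, rfl, hi⟩ := hmem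
  have hroot : μ ∈ A.charpoly.roots :=
    (Polynomial.mem_roots A.charpoly_monic.ne_zero).2 (mem_spectrum_iff_isRoot_charpoly.1 hμ)
  linarith [hc μ hroot]

lemma Matrix.IsHermitian.posDef_smul_sub_one_s14 {A : Matrix n n ℝ} (hA : A.IsHermitian) {a : ℝ}
    (ha : 0 < a) (hroots : ∀ μ ∈ A.charpoly.roots, 1 < a * μ) : (a • A - 1).PosDef := by
  have hshift := hA.posDef_sub_smul_one fun μ hμ => (inv_lt_iff_one_lt_mul₀' ha).2 (hroots μ hμ)
  have hscale : a • A - 1 = a • (A - a⁻¹ • 1) := by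
    rw [smul_sub, smul_smul, mul_inv_cancel₀ ha.ne', one_smul]
  exact hscale ▸ hshift.smul ha

section DiagonalPerturbation

variable {ι : Type*} [DecidableEq ι] (L : Matrix ι ι ℝ) (κ : ι → ℝ)

lemma add_diagonal_ite_apply_le_of_subset (hκ : ∀ i, 0 ≤ κ i) {S T : Finset ι} (hST : S ⊆ T)
    (i j : ι) :
    (L + diagonal fun k => if k ∈ S then κ k else 0) i j ≤
      (L + diagonal fun k => if k ∈ T then κ k else 0) i j := by
  rcases eq_or_ne i j with rfl | hij
  · simp only [Matrix.add_apply, diagonal_apply_eq, add_le_add_iff_left]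
    split_ifs with hS hT hT
    exacts [le_rfl, absurd (hST hS) hT, hκ i, le_rfl]
  · simp [hij]

lemma add_diagonal_ite_add_add_diagonal_ite (A B : Finset ι) :
    (L + diagonal fun k => if k ∈ A then κ k else 0) +
        (L + diagonal fun k => if k ∈ B then κ k else 0) =
      (L + diagonal fun k => if k ∈ A ∩ B then κ k else 0) +
        (L + diagonal fun k => if k ∈ A ∪ B then κ k else 0) := by
  ext i j
  simp only [Matrix.add_apply, diagonal_apply, mem_inter, mem_union]
  split_ifs <;> simp_all [add_comm, add_left_comm]

end DiagonalPerturbation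

noncomputable def order4Trace (b₁ b₂ : ℝ) (A : Matrix n n ℝ) : ℝ :=
  trace (A⁻¹ * A⁻¹ * (b₁ • A - 1) * ((b₁ - b₂) • A - 1)⁻¹)

lemma order4Trace_eq {b₁ b₂ : ℝ} {A : Matrix n n ℝ} (hA : IsUnit A.det)
    (hB : IsUnit ((b₁ - b₂) • A - 1).det) :
    order4Trace b₁ b₂ A = trace (A⁻¹ * A⁻¹) + b₂ * trace (A⁻¹ * ((b₁ - b₂) • A - 1)⁻¹) := by
  have hsplit : b₁ • A - 1 = ((b₁ - b₂) • A - 1) + b₂ • A := by rw [sub_smul]; abel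
  rw [order4Trace, hsplit, mul_add, add_mul, mul_assoc _ ((b₁ - b₂) • A - 1), mul_nonsing_inv _ hB,
    mul_one, Matrix.mul_smul, Matrix.smul_mul, mul_assoc A⁻¹ A⁻¹ A, nonsing_inv_mul _ hA, mul_one,
    trace_add, trace_smul, smul_eq_mul]

section Family

variable {ι : Type*} [DecidableEq ι] {M : Finset ι → Matrix n n ℝ}

lemma isSupermodularSquare_inv_of_modular (hM : ∀ S, S.Nonempty → (M S).IsStieltjes)
    (hmono : ∀ S T, S ⊆ T → ∀ i j, M S i j ≤ M T i j)
    (hmod : ∀ A B, M A + M B = M (A ∩ B) + M (A ∪ B)) {A B : Finset ι} (hAB : (A ∩ B).Nonempty)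
    (i j : n) :
    IsSupermodularSquare ((M (A ∩ B))⁻¹ i j) ((M A)⁻¹ i j) ((M B)⁻¹ i j) ((M (A ∪ B))⁻¹ i j) :=
  (hM _ hAB).isSupermodularSquare_inv (hM _ (hAB.mono inter_subset_left))
    (hM _ (hAB.mono inter_subset_right))
    (hM _ (hAB.mono (inter_subset_left.trans subset_union_left)))
    (hmono _ _ inter_subset_left) (hmono _ _ inter_subset_right) (hmod A B) i j

lemma isSupermodularSquare_order4Trace {b₁ b₂ : ℝ} (hb₂ : 0 ≤ b₂) (hb : b₂ ≤ b₁)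
    (hM : ∀ S, S.Nonempty → (M S).IsStieltjes)
    (hM' : ∀ S, S.Nonempty → ((b₁ - b₂) • M S - 1).IsStieltjes)
    (hmono : ∀ S T, S ⊆ T → ∀ i j, M S i j ≤ M T i j)
    (hmod : ∀ A B, M A + M B = M (A ∩ B) + M (A ∪ B)) {A B : Finset ι} (hAB : (A ∩ B).Nonempty) :
    IsSupermodularSquare (order4Trace b₁ b₂ (M (A ∩ B))) (order4Trace b₁ b₂ (M A))
      (order4Trace b₁ b₂ (M B)) (order4Trace b₁ b₂ (M (A ∪ B))) := by
  have hmono' : ∀ S T, S ⊆ T → ∀ i j, ((b₁ - b₂) • M S - 1) i j ≤ ((b₁ - b₂) • M T - 1) i j :=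
    fun S T hST i j => by
      simp only [Matrix.sub_apply, Matrix.smul_apply, smul_eq_mul]
      exact sub_le_sub_right (mul_le_mul_of_nonneg_left (hmono S T hST i j) (sub_nonneg.2 hb)) _
  have hmod' : ∀ A B, (b₁ - b₂) • M A - 1 + ((b₁ - b₂) • M B - 1) =
      (b₁ - b₂) • M (A ∩ B) - 1 + ((b₁ - b₂) • M (A ∪ B) - 1) := fun A B => by
    rw [sub_add_sub_comm, sub_add_sub_comm, ← smul_add, ← smul_add, hmod]
  have hX := isSupermodularSquare_inv_of_modular hM hmono hmod hAB
  have hY := isSupermodularSquare_inv_of_modular hM' hmono' hmod' hAB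
  have hexpand : ∀ S, S.Nonempty → order4Trace b₁ b₂ (M S) =
      trace ((M S)⁻¹ * (M S)⁻¹) + b₂ * trace ((M S)⁻¹ * ((b₁ - b₂) • M S - 1)⁻¹) :=
    fun S hS => order4Trace_eq (hM S hS).isUnit_det (hM' S hS).isUnit_det
  rw [hexpand _ hAB, hexpand _ (hAB.mono inter_subset_left),
    hexpand _ (hAB.mono inter_subset_right), hexpand _ (hAB.mono (inter_subset_left.trans subset_union_left))]
  exact (isSupermodularSquare_trace_mul hX hX).add
    ((IsSupermodularSquare.const hb₂).mul (isSupermodularSquare_trace_mul hX hY))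

end Family

theorem setFunction_order4_monotone_submodular_general (n : ℕ)
    (L : Matrix (Fin n) (Fin n) ℝ)
    (hLoff : ∀ i j, i ≠ j → L i j ≤ 0)
    (κ : Fin n → ℝ) (hκ : ∀ i, 0 < κ i)
    (Q : Finset (Fin n) → Matrix (Fin n) (Fin n) ℝ)
    (hQdef : ∀ S, Q S = L + Matrix.diagonal fun i => if i ∈ S then κ i else 0)
    (hQpos : ∀ S : Finset (Fin n), S.Nonempty → (Q S).PosDef)
    (b₁ b₂ : ℝ) (hb₂ : 0 < b₂) (hb₁₂ : b₂ < b₁)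
    (heig : ∀ S : Finset (Fin n), S.Nonempty →
      ∀ lam ∈ (Q S).charpoly.roots, 1 < (b₁ - b₂) * lam)
    (mx : ℝ)
    (hmx : IsGreatest {x : ℝ | ∃ s : Fin n, x =
      Matrix.trace ((Q {s})⁻¹ * (Q {s})⁻¹ *
        (b₁ • Q {s} - (1 : Matrix (Fin n) (Fin n) ℝ)) *
        ((b₁ - b₂) • Q {s} - (1 : Matrix (Fin n) (Fin n) ℝ))⁻¹)} mx)
    (f : Finset (Fin n) → ℝ)
    (hf0 : f ∅ = 0)
    (hf : ∀ S : Finset (Fin n), S.Nonempty →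
      f S = 2 * mx - Matrix.trace ((Q S)⁻¹ * (Q S)⁻¹ *
        (b₁ • Q S - (1 : Matrix (Fin n) (Fin n) ℝ)) *
        ((b₁ - b₂) • Q S - (1 : Matrix (Fin n) (Fin n) ℝ))⁻¹)) :
    (∀ A B : Finset (Fin n), A ⊆ B → f A ≤ f B) ∧
    (∀ A B : Finset (Fin n), f (A ∪ B) + f (A ∩ B) ≤ f A + f B) := by
  have hQoff : ∀ S i j, i ≠ j → Q S i j = L i j := fun S i j hij => by simp [hQdef, hij]
  have hX : ∀ S, S.Nonempty → (Q S).IsStieltjes := fun S hS =>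
    ⟨hQpos S hS, fun i j hij => hQoff S i j hij ▸ hLoff i j hij⟩
  have hY : ∀ S, S.Nonempty → ((b₁ - b₂) • Q S - 1).IsStieltjes := fun S hS =>
    ⟨(hQpos S hS).isHermitian.posDef_smul_sub_one_s14 (sub_pos.2 hb₁₂) (heig S hS), fun i j hij => by
      simpa [hQoff S i j hij, hij] using
        mul_nonpos_of_nonneg_of_nonpos (sub_pos.2 hb₁₂).le (hLoff i j hij)⟩
  have hmono : ∀ S T, S ⊆ T → ∀ i j, Q S i j ≤ Q T i j := fun S T hST => by
    simpa only [hQdef] using add_diagonal_ite_apply_le_of_subset L κ (fun i => (hκ i).le) hST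
  have hmod : ∀ A B, Q A + Q B = Q (A ∩ B) + Q (A ∪ B) := fun A B => by
    simpa only [hQdef] using add_diagonal_ite_add_add_diagonal_ite L κ A B
  exact monotone_submodular_of_isSupermodularSquare (g := fun S => order4Trace b₁ b₂ (Q S))
    (fun A B hAB => isSupermodularSquare_order4Trace hb₂.le hb₁₂.le hX hY hmono hmod hAB)
    (fun s => hmx.2 ⟨s, rfl⟩) hf0 hf

/-- Lemma 2: the set function `f(∅) = 0`,
`f(S) = C − tr(Q_S⁻²(b₁Q_S − I)((b₁ − b₂)Q_S − I)⁻¹)` for nonempty `S`, with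
`C = 2·max_{s ∈ V} tr(Q_{{s}}⁻²(b₁Q_{{s}} − I)((b₁ − b₂)Q_{{s}} − I)⁻¹)`, is
non-decreasing and submodular, where `Q_S = L + D_κ D_S`. -/
theorem setFunction_order4_monotone_submodular (n : ℕ) (hn : 1 ≤ n)
    (L : Matrix (Fin n) (Fin n) ℝ)
    (hLsymm : L.IsSymm)
    (hLoff : ∀ i j, i ≠ j → L i j ≤ 0)
    (hLrow : ∀ i, ∑ j, L i j = 0)
    (hLker : ∀ x : Fin n → ℝ, L.mulVec x = 0 ↔ ∃ c : ℝ, x = fun _ => c)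
    (κ : Fin n → ℝ) (hκ : ∀ i, 0 < κ i)
    (Q : Finset (Fin n) → Matrix (Fin n) (Fin n) ℝ)
    (hQdef : ∀ S, Q S = L + Matrix.diagonal fun i => if i ∈ S then κ i else 0)
    (hQpos : ∀ S : Finset (Fin n), S.Nonempty → (Q S).PosDef)
    (b₁ b₂ : ℝ) (hb₂ : 0 < b₂) (hb₁₂ : b₂ < b₁)
    (heig : ∀ S : Finset (Fin n), S.Nonempty →
      ∀ lam ∈ (Q S).charpoly.roots, 1 < (b₁ - b₂) * lam)
    (mx : ℝ)
    (hmx : IsGreatest {x : ℝ | ∃ s : Fin n, x =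
      Matrix.trace ((Q {s})⁻¹ * (Q {s})⁻¹ *
        (b₁ • Q {s} - (1 : Matrix (Fin n) (Fin n) ℝ)) *
        ((b₁ - b₂) • Q {s} - (1 : Matrix (Fin n) (Fin n) ℝ))⁻¹)} mx)
    (f : Finset (Fin n) → ℝ)
    (hf0 : f ∅ = 0)
    (hf : ∀ S : Finset (Fin n), S.Nonempty →
      f S = 2 * mx - Matrix.trace ((Q S)⁻¹ * (Q S)⁻¹ *
        (b₁ • Q S - (1 : Matrix (Fin n) (Fin n) ℝ)) *
        ((b₁ - b₂) • Q S - (1 : Matrix (Fin n) (Fin n) ℝ))⁻¹)) :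
    (∀ A B : Finset (Fin n), A ⊆ B → f A ≤ f B) ∧
    (∀ A B : Finset (Fin n), f (A ∪ B) + f (A ∩ B) ≤ f A + f B) :=
  setFunction_order4_monotone_submodular_general n L hLoff κ hκ Q hQdef hQpos b₁ b₂ hb₂ hb₁₂ heig mx
    hmx f hf0 hf
end

section
/- Define the set function f_2 on subsets of V by f_2(∅) = 0 and, for nonempty S, f_2(S) = C_2 − tr( Q_S⁻² ), where C_2 = 2·max over single nodes s ∈ V of tr( Q_{{s}}⁻² ). Then f_2 is non-decreasing and submodular. -/
/-!
For nonempty `S`, `Q_S` is positive definite with nonpositive off-diagonal entries, so `Q_S⁻¹` is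
entrywise nonnegative. The resolvent identity `X⁻¹ - Y⁻¹ = X⁻¹ (Y - X) Y⁻¹` then makes every entry
of `Q_S⁻¹` an antitone, supermodular function of `S`. Products of nonnegative antitone
supermodular functions are again such, so `tr (Q_S⁻²) = ∑ᵢₖ (Q_S⁻¹)ᵢₖ (Q_S⁻¹)ₖᵢ` is antitone and
supermodular on nonempty sets, and `f₂ = C₂ - tr (Q_S⁻²)` is monotone and submodular.
-/

open Matrix

/-- Supermodularity of a product of two nonnegative, antitone, supermodular functions, read at
the four points `A ∩ B`, `A`, `B`, `A ∪ B` (values `x₀, x₁, x₂, x₁₂`). -/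
theorem mul_add_mul_le_of_supermodular {x₀ x₁ x₂ x₁₂ y₀ y₁ y₂ y₁₂ : ℝ}
    (hx : 0 ≤ x₁₂) (hx₁ : x₁₂ ≤ x₁) (hx₂ : x₁₂ ≤ x₂) (hxs : x₁ + x₂ ≤ x₁₂ + x₀)
    (hy₁ : y₁₂ ≤ y₁) (hy₂ : y₁₂ ≤ y₂) (hys : y₁ + y₂ ≤ y₁₂ + y₀) (hy : 0 ≤ y₁₂) :
    x₁ * y₁ + x₂ * y₂ ≤ x₁₂ * y₁₂ + x₀ * y₀ := by
  nlinarith [mul_nonneg (sub_nonneg.2 hx₁) (sub_nonneg.2 hy₂),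
    mul_nonneg (sub_nonneg.2 hx₂) (sub_nonneg.2 hy₁),
    mul_nonneg (sub_nonneg.2 hxs) (show 0 ≤ y₀ by linarith),
    mul_nonneg (show 0 ≤ x₁ + x₂ - x₁₂ by linarith) (sub_nonneg.2 hys)]

theorem Finset.monotone_submodular_of_antitone_supermodular {α : Type*} [DecidableEq α]
    {t f : Finset α → ℝ} {c : ℝ} (ht : ∀ S, S.Nonempty → 0 ≤ t S)
    (htc : ∀ S, S.Nonempty → t S ≤ c) (hanti : ∀ A B, A.Nonempty → A ⊆ B → t B ≤ t A)
    (hsuper : ∀ A B, (A ∩ B).Nonempty → t A + t B ≤ t (A ∪ B) + t (A ∩ B))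
    (hf0 : f ∅ = 0) (hf : ∀ S, S.Nonempty → f S = 2 * c - t S) :
    (∀ A B, A ⊆ B → f A ≤ f B) ∧ (∀ A B, f (A ∪ B) + f (A ∩ B) ≤ f A + f B) := by
  refine ⟨fun A B hAB => ?_, fun A B => ?_⟩
  · rcases B.eq_empty_or_nonempty with rfl | hB
    · rw [Finset.subset_empty.1 hAB]
    rcases A.eq_empty_or_nonempty with rfl | hA
    · linarith [hf B hB, ht B hB, htc B hB]
    · linarith [hf A hA, hf B hB, hanti A B hA hAB]
  rcases A.eq_empty_or_nonempty with rfl | hA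
  · simp [hf0]
  rcases B.eq_empty_or_nonempty with rfl | hB
  · simp [hf0]
  have hU : (A ∪ B).Nonempty := hA.mono Finset.subset_union_left
  rcases (A ∩ B).eq_empty_or_nonempty with hI | hI
  -- disjoint `A`, `B`: this case is why the constant is `2 * c` and not `c`
  · linarith [hf A hA, hf B hB, hf _ hU, htc A hA, htc B hB, ht _ hU, hI ▸ hf0]
  · linarith [hf A hA, hf B hB, hf _ hU, hf _ hI, hsuper A B hI]

namespace Matrix

variable {ι : Type*}

theorem diagonal_ite_mem_sub_apply_nonneg [DecidableEq ι] {κ : ι → ℝ} (hκ : ∀ i, 0 ≤ κ i)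
    {A B : Finset ι} (hAB : A ⊆ B) (i j : ι) :
    0 ≤ (diagonal (fun i => if i ∈ B then κ i else 0)
      - diagonal (fun i => if i ∈ A then κ i else 0)) i j := by
  rw [diagonal_sub, diagonal_apply]
  by_cases hA : i ∈ A
  · simp [hA, hAB hA]
  · split_ifs <;> simp [hκ i]

theorem diagonal_ite_mem_sub_inter [DecidableEq ι] (κ : ι → ℝ) (A B : Finset ι) :
    diagonal (fun i => if i ∈ A then κ i else 0)
        - diagonal (fun i => if i ∈ A ∩ B then κ i else 0)
      = diagonal (fun i => if i ∈ A ∪ B then κ i else 0)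
        - diagonal (fun i => if i ∈ B then κ i else 0) := by
  simp only [diagonal_sub]
  congr 1
  funext i
  by_cases hA : i ∈ A <;> by_cases hB : i ∈ B <;> simp [hA, hB]

theorem mul_apply_nonneg_s15 {l m n : Type*} [Fintype m] {A : Matrix l m ℝ} {B : Matrix m n ℝ}
    (hA : ∀ i j, 0 ≤ A i j) (hB : ∀ i j, 0 ≤ B i j) (i : l) (k : n) : 0 ≤ (A * B) i k := by
  rw [mul_apply]
  exact Finset.sum_nonneg fun j _ => mul_nonneg (hA i j) (hB j k)

variable [Fintype ι]

theorem trace_mul_self_nonneg_of_apply_nonneg {X : Matrix ι ι ℝ} (hX : ∀ i j, 0 ≤ X i j) :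
    0 ≤ trace (X * X) :=
  Finset.sum_nonneg fun i _ => mul_apply_nonneg_s15 hX hX i i

theorem trace_mul_self_le_trace_mul_self {X Y : Matrix ι ι ℝ} (hX : ∀ i j, 0 ≤ X i j)
    (hXY : ∀ i j, X i j ≤ Y i j) : trace (X * X) ≤ trace (Y * Y) := by
  simp only [trace, diag, mul_apply]
  exact Finset.sum_le_sum fun i _ => Finset.sum_le_sum fun k _ =>
    mul_le_mul (hXY i k) (hXY k i) (hX k i) ((hX i k).trans (hXY i k))

theorem trace_mul_self_add_le {X₀ X₁ X₂ X₁₂ : Matrix ι ι ℝ} (h : ∀ i j, 0 ≤ X₁₂ i j)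
    (h₁ : ∀ i j, X₁₂ i j ≤ X₁ i j) (h₂ : ∀ i j, X₁₂ i j ≤ X₂ i j)
    (hs : ∀ i j, X₁ i j + X₂ i j ≤ X₁₂ i j + X₀ i j) :
    trace (X₁ * X₁) + trace (X₂ * X₂) ≤ trace (X₁₂ * X₁₂) + trace (X₀ * X₀) := by
  simp only [trace, diag, mul_apply, ← Finset.sum_add_distrib]
  exact Finset.sum_le_sum fun i _ => Finset.sum_le_sum fun k _ =>
    mul_add_mul_le_of_supermodular (h i k) (h₁ i k) (h₂ i k) (hs i k)
      (h₁ k i) (h₂ k i) (hs k i) (h k i)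

/-- Discrete minimum principle. Test `A v ≥ 0` against the negative part `w` of `v`: the cross
term `w ⬝ A u` with the positive part `u` is nonnegative, as `w` and `u` have disjoint supports
and the off-diagonal entries of `A` are nonpositive; hence `w ⬝ A w ≤ 0`, so `w = 0`. -/
theorem PosDef.nonneg_of_mulVec_nonneg {A : Matrix ι ι ℝ} (hA : A.PosDef)
    (hZ : ∀ i j, i ≠ j → A i j ≤ 0) {v : ι → ℝ} (hv : ∀ i, 0 ≤ (A *ᵥ v) i) (i : ι) :
    0 ≤ v i := by
  set w : ι → ℝ := fun i => min (v i) 0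
  set u : ι → ℝ := fun i => max (v i) 0
  have hv_split : v = w + u := funext fun i => by simp [w, u, min_add_max]
  have hwv : w ⬝ᵥ A *ᵥ v ≤ 0 :=
    Finset.sum_nonpos fun i _ => mul_nonpos_of_nonpos_of_nonneg (min_le_right _ _) (hv i)
  have hwu : 0 ≤ w ⬝ᵥ A *ᵥ u := by
    simp only [dotProduct, mulVec, Finset.mul_sum]
    refine Finset.sum_nonneg fun i _ => Finset.sum_nonneg fun j _ => ?_
    rcases eq_or_ne i j with rfl | hij
    · rcases le_total (v i) 0 with h | h <;> simp [w, u, h]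
    · exact mul_nonneg_of_nonpos_of_nonpos (min_le_right _ _)
        (mul_nonpos_of_nonpos_of_nonneg (hZ i j hij) (le_max_right _ _))
  have hw : w = 0 := by
    by_contra hw
    have hpos : 0 < w ⬝ᵥ A *ᵥ w := by simpa using hA.dotProduct_mulVec_pos hw
    rw [hv_split, mulVec_add, dotProduct_add] at hwv
    linarith
  simpa [w] using congrFun hw i

variable [DecidableEq ι]

theorem PosDef.inv_apply_nonneg {A : Matrix ι ι ℝ} (hA : A.PosDef)
    (hZ : ∀ i j, i ≠ j → A i j ≤ 0) (i j : ι) : 0 ≤ A⁻¹ i j := by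
  have hcol : A *ᵥ (A⁻¹ *ᵥ Pi.single j 1) = Pi.single j 1 := by
    rw [mulVec_mulVec, mul_nonsing_inv _ ((isUnit_iff_isUnit_det A).mp hA.isUnit), one_mulVec]
  have := hA.nonneg_of_mulVec_nonneg hZ (v := A⁻¹ *ᵥ Pi.single j 1)
    (fun k => by rw [hcol, Pi.single_apply]; split_ifs <;> norm_num) i
  simpa [mulVec_single_one] using this

theorem inv_apply_le_inv_apply {A B : Matrix ι ι ℝ} (hA : IsUnit A) (hB : IsUnit B)
    (hA' : ∀ i j, 0 ≤ A⁻¹ i j) (hB' : ∀ i j, 0 ≤ B⁻¹ i j) (hAB : ∀ i j, 0 ≤ (B - A) i j)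
    (i j : ι) : B⁻¹ i j ≤ A⁻¹ i j := by
  have h := mul_apply_nonneg_s15 (mul_apply_nonneg_s15 hA' hAB) hB' i j
  rw [← inv_sub_inv (iff_of_true hA hB)] at h
  simpa [sub_nonneg] using h

/-- Four applications of the resolvent identity write the defect `Q₁₂⁻¹ + Q₀⁻¹ - Q₁⁻¹ - Q₂⁻¹`
as a sum of products of entrywise nonnegative matrices. -/
theorem inv_apply_add_inv_apply_le {Q₀ Q₁ Q₂ Q₁₂ : Matrix ι ι ℝ}
    (h₀ : IsUnit Q₀) (h₁ : IsUnit Q₁) (h₂ : IsUnit Q₂) (h₁₂ : IsUnit Q₁₂)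
    (h₀' : ∀ i j, 0 ≤ Q₀⁻¹ i j) (h₁' : ∀ i j, 0 ≤ Q₁⁻¹ i j) (h₂' : ∀ i j, 0 ≤ Q₂⁻¹ i j)
    (h₁₂' : ∀ i j, 0 ≤ Q₁₂⁻¹ i j)
    (hD₁ : ∀ i j, 0 ≤ (Q₁ - Q₀) i j) (hD₂ : ∀ i j, 0 ≤ (Q₂ - Q₀) i j)
    (hmod : Q₁ - Q₀ = Q₁₂ - Q₂) (i j : ι) :
    Q₁⁻¹ i j + Q₂⁻¹ i j ≤ Q₁₂⁻¹ i j + Q₀⁻¹ i j := by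
  have hmod' : Q₂ - Q₀ = Q₁₂ - Q₁ := by
    rw [← sub_eq_zero] at hmod ⊢
    rw [← hmod]
    abel
  have hdefect : Q₁₂⁻¹ + Q₀⁻¹ - (Q₁⁻¹ + Q₂⁻¹)
      = Q₀⁻¹ * (Q₂ - Q₀) * Q₂⁻¹ * (Q₁ - Q₀) * Q₁⁻¹
        + Q₂⁻¹ * (Q₁ - Q₀) * Q₁⁻¹ * (Q₂ - Q₀) * Q₁₂⁻¹ :=
    calc Q₁₂⁻¹ + Q₀⁻¹ - (Q₁⁻¹ + Q₂⁻¹) = (Q₀⁻¹ - Q₁⁻¹) - (Q₂⁻¹ - Q₁₂⁻¹) := by abel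
      _ = Q₀⁻¹ * (Q₁ - Q₀) * Q₁⁻¹ - Q₂⁻¹ * (Q₁ - Q₀) * Q₁₂⁻¹ := by
        rw [inv_sub_inv (iff_of_true h₀ h₁), inv_sub_inv (iff_of_true h₂ h₁₂), ← hmod]
      _ = (Q₀⁻¹ - Q₂⁻¹) * (Q₁ - Q₀) * Q₁⁻¹ + Q₂⁻¹ * (Q₁ - Q₀) * (Q₁⁻¹ - Q₁₂⁻¹) := by
        noncomm_ring
      _ = _ := by
        rw [inv_sub_inv (iff_of_true h₀ h₂), inv_sub_inv (iff_of_true h₁ h₁₂), ← hmod']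
        simp only [Matrix.mul_assoc]
  have h := add_nonneg
    (mul_apply_nonneg_s15 (mul_apply_nonneg_s15 (mul_apply_nonneg_s15 (mul_apply_nonneg_s15 h₀' hD₂) h₂') hD₁)
      h₁' i j)
    (mul_apply_nonneg_s15 (mul_apply_nonneg_s15 (mul_apply_nonneg_s15 (mul_apply_nonneg_s15 h₂' hD₁) h₁') hD₂)
      h₁₂' i j)
  rw [← add_apply, ← hdefect] at h
  simpa [sub_nonneg] using h

end Matrix

theorem setFunction_f2_monotone_submodular_general (n : ℕ)
    (L : Matrix (Fin n) (Fin n) ℝ)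
    (hLoff : ∀ i j, i ≠ j → L i j ≤ 0)
    (κ : Fin n → ℝ) (hκ : ∀ i, 0 < κ i)
    (Q : Finset (Fin n) → Matrix (Fin n) (Fin n) ℝ)
    (hQdef : ∀ S, Q S = L + Matrix.diagonal fun i => if i ∈ S then κ i else 0)
    (hQpos : ∀ S : Finset (Fin n), S.Nonempty → (Q S).PosDef)
    (mx : ℝ)
    (hmx : IsGreatest {x : ℝ | ∃ s : Fin n, x =
      Matrix.trace ((Q {s})⁻¹ * (Q {s})⁻¹)} mx)
    (f₂ : Finset (Fin n) → ℝ)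
    (hf0 : f₂ ∅ = 0)
    (hf : ∀ S : Finset (Fin n), S.Nonempty →
      f₂ S = 2 * mx - Matrix.trace ((Q S)⁻¹ * (Q S)⁻¹)) :
    (∀ A B : Finset (Fin n), A ⊆ B → f₂ A ≤ f₂ B) ∧
    (∀ A B : Finset (Fin n), f₂ (A ∪ B) + f₂ (A ∩ B) ≤ f₂ A + f₂ B) := by
  have hunit S (hS : S.Nonempty) : IsUnit (Q S) := (hQpos S hS).isUnit
  have hinv S (hS : S.Nonempty) : ∀ i j, 0 ≤ (Q S)⁻¹ i j :=
    (hQpos S hS).inv_apply_nonneg fun i j hij => by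
      simpa [hQdef, diagonal_apply_ne _ hij] using hLoff i j hij
  have hgap A B (hAB : A ⊆ B) : ∀ i j, 0 ≤ (Q B - Q A) i j := by
    simpa only [hQdef, add_sub_add_left_eq_sub]
      using diagonal_ite_mem_sub_apply_nonneg (fun i => (hκ i).le) hAB
  have hanti A B (hA : A.Nonempty) (hAB : A ⊆ B) : ∀ i j, (Q B)⁻¹ i j ≤ (Q A)⁻¹ i j :=
    inv_apply_le_inv_apply (hunit A hA) (hunit B (hA.mono hAB)) (hinv A hA)
      (hinv B (hA.mono hAB)) (hgap A B hAB)
  have htr_anti A B (hA : A.Nonempty) (hAB : A ⊆ B) :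
      trace ((Q B)⁻¹ * (Q B)⁻¹) ≤ trace ((Q A)⁻¹ * (Q A)⁻¹) :=
    trace_mul_self_le_trace_mul_self (hinv B (hA.mono hAB)) (hanti A B hA hAB)
  refine Finset.monotone_submodular_of_antitone_supermodular
    (fun S hS => trace_mul_self_nonneg_of_apply_nonneg (hinv S hS))
    (fun S ⟨s, hs⟩ => (htr_anti {s} S (Finset.singleton_nonempty s)
      (Finset.singleton_subset_iff.2 hs)).trans (hmx.2 ⟨s, rfl⟩))
    htr_anti (fun A B hI => ?_) hf0 hf
  have hA := hI.mono Finset.inter_subset_left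
  have hB := hI.mono Finset.inter_subset_right
  have hU := hA.mono (Finset.subset_union_left (s₂ := B))
  refine trace_mul_self_add_le (hinv _ hU) (hanti A _ hA Finset.subset_union_left)
    (hanti B _ hB Finset.subset_union_right) ?_
  refine inv_apply_add_inv_apply_le (hunit _ hI) (hunit A hA) (hunit B hB) (hunit _ hU)
    (hinv _ hI) (hinv A hA) (hinv B hB) (hinv _ hU) (hgap _ _ Finset.inter_subset_left)
    (hgap _ _ Finset.inter_subset_right) ?_
  simp only [hQdef, add_sub_add_left_eq_sub, diagonal_ite_mem_sub_inter]

/-- The second-order set function `f₂(∅) = 0`, `f₂(S) = C₂ − tr(Q_S⁻²)` for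
nonempty `S`, with `C₂ = 2·max_{s ∈ V} tr(Q_{{s}}⁻²)`, is non-decreasing and
submodular, where `Q_S = L + D_κ D_S`. -/
theorem setFunction_f2_monotone_submodular (n : ℕ) (hn : 1 ≤ n)
    (L : Matrix (Fin n) (Fin n) ℝ)
    (hLsymm : L.IsSymm)
    (hLoff : ∀ i j, i ≠ j → L i j ≤ 0)
    (hLrow : ∀ i, ∑ j, L i j = 0)
    (hLker : ∀ x : Fin n → ℝ, L.mulVec x = 0 ↔ ∃ c : ℝ, x = fun _ => c)
    (κ : Fin n → ℝ) (hκ : ∀ i, 0 < κ i)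
    (Q : Finset (Fin n) → Matrix (Fin n) (Fin n) ℝ)
    (hQdef : ∀ S, Q S = L + Matrix.diagonal fun i => if i ∈ S then κ i else 0)
    (hQpos : ∀ S : Finset (Fin n), S.Nonempty → (Q S).PosDef)
    (mx : ℝ)
    (hmx : IsGreatest {x : ℝ | ∃ s : Fin n, x =
      Matrix.trace ((Q {s})⁻¹ * (Q {s})⁻¹)} mx)
    (f₂ : Finset (Fin n) → ℝ)
    (hf0 : f₂ ∅ = 0)
    (hf : ∀ S : Finset (Fin n), S.Nonempty →
      f₂ S = 2 * mx - Matrix.trace ((Q S)⁻¹ * (Q S)⁻¹)) :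
    (∀ A B : Finset (Fin n), A ⊆ B → f₂ A ≤ f₂ B) ∧
    (∀ A B : Finset (Fin n), f₂ (A ∪ B) + f₂ (A ∩ B) ≤ f₂ A + f₂ B) :=
  setFunction_f2_monotone_submodular_general n L hLoff κ hκ Q hQdef hQpos mx hmx f₂ hf0 hf
end

section
/- Let a_1, a_2, a_3 > 0 satisfy (a_2 a_3 / a_1)·λ > 1 for every eigenvalue λ of Q_S for every nonempty S ⊆ V. Define the set function f_3 on subsets of V by f_3(∅) = 0 and, for nonempty S, f_3(S) = C_3 − tr( Q_S⁻¹ ((a_2 a_3 / a_1) Q_S − I)⁻¹ ), where C_3 = 2·max over single nodes s ∈ V of tr( Q_{{s}}⁻¹ ((a_2 a_3 / a_1) Q_{{s}} − I)⁻¹ ). Then f_3 is non-decreasing and submodular. -/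
/-!
With `a = a₁ / (a₂ a₃)`, partial fractions turn the coherence term into
`g(S) = tr (Q_S - a)⁻¹ - tr Q_S⁻¹`. Both `Q_S` and `Q_S - a` are Stieltjes matrices, so their
inverses are entrywise nonnegative and `Q_S⁻¹ ≤ (Q_S - a)⁻¹` entrywise. The resolvent identity
writes the first and second differences of `S ↦ tr M_S⁻¹` as traces of products of these inverses
with the nonnegative diagonal increments `D_κ D_S`; such products are entrywise monotone in the
inverses, so the differences of the shifted family dominate those of `Q`. Hence `g` is
nonnegative, antitone and supermodular on nonempty sets, and `f₃ = C₃ - g` (with `g ≤ C₃ / 2`)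
is monotone and submodular even after the extension `f₃(∅) = 0`.
-/

open Matrix

namespace Matrix

section Entrywise

variable {R : Type*} [Semiring R] [PartialOrder R] {l m n : Type*} [Fintype m]

def NonnegLE (A B : Matrix l n R) : Prop := ∀ i j, 0 ≤ A i j ∧ A i j ≤ B i j

theorem NonnegLE.of_nonneg {A : Matrix l n R} (hA : ∀ i j, 0 ≤ A i j) : NonnegLE A A :=
  fun i j => ⟨hA i j, le_rfl⟩

theorem NonnegLE.mul [IsOrderedRing R] {A A' : Matrix l m R} {B B' : Matrix m n R}
    (hA : NonnegLE A A') (hB : NonnegLE B B') : NonnegLE (A * B) (A' * B') := fun i j =>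
  ⟨Finset.sum_nonneg fun k _ => mul_nonneg (hA i k).1 (hB k j).1,
    Finset.sum_le_sum fun k _ =>
      mul_le_mul (hA i k).2 (hB k j).2 (hB k j).1 ((hA i k).1.trans (hA i k).2)⟩

theorem NonnegLE.trace_le [IsOrderedAddMonoid R] [Fintype n] {A B : Matrix n n R}
    (h : NonnegLE A B) : A.trace ≤ B.trace :=
  Finset.sum_le_sum fun i _ => (h i i).2

end Entrywise

section Resolvent

variable {ι α : Type*} [Fintype ι] [DecidableEq ι] [CommRing α]

theorem trace_inv_sub_trace_inv {A B : Matrix ι ι α} (hA : IsUnit A) (hB : IsUnit B) :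
    A⁻¹.trace - B⁻¹.trace = (A⁻¹ * (B - A) * B⁻¹).trace := by
  rw [← trace_sub, inv_sub_inv (iff_of_true hA hB)]

theorem trace_inv_second_difference {W X₁ X₂ U : Matrix ι ι α} (hW : IsUnit W)
    (hX₁ : IsUnit X₁) (hX₂ : IsUnit X₂) (hU : IsUnit U) (hUX : U - X₂ = X₁ - W) :
    W⁻¹.trace + U⁻¹.trace - X₁⁻¹.trace - X₂⁻¹.trace =
      ((X₁ - W) * X₁⁻¹ * W⁻¹ * (X₂ - W) * X₂⁻¹).trace +
        ((X₁ - W) * X₁⁻¹ * (X₂ - W) * U⁻¹ * X₂⁻¹).trace := by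
  have hUX' : U - X₁ = X₂ - W := by
    rw [← sub_add_sub_cancel U X₂ X₁, hUX]; abel
  have h₁ : W⁻¹ - X₁⁻¹ = W⁻¹ * (X₁ - W) * X₁⁻¹ := inv_sub_inv (iff_of_true hW hX₁)
  have h₂ : X₂⁻¹ - U⁻¹ = X₂⁻¹ * (X₁ - W) * U⁻¹ := by
    rw [← hUX, inv_sub_inv (iff_of_true hX₂ hU)]
  have h₃ : W⁻¹ - X₂⁻¹ = W⁻¹ * (X₂ - W) * X₂⁻¹ := inv_sub_inv (iff_of_true hW hX₂)
  have h₄ : X₁⁻¹ - U⁻¹ = X₁⁻¹ * (X₂ - W) * U⁻¹ := by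
    rw [← hUX', inv_sub_inv (iff_of_true hX₁ hU)]
  calc W⁻¹.trace + U⁻¹.trace - X₁⁻¹.trace - X₂⁻¹.trace
      = (W⁻¹ - X₁⁻¹).trace - (X₂⁻¹ - U⁻¹).trace := by simp only [trace_sub]; ring
    _ = ((X₁ - W) * X₁⁻¹ * W⁻¹).trace - ((X₁ - W) * U⁻¹ * X₂⁻¹).trace := by
      rw [h₁, h₂, trace_mul_cycle W⁻¹, trace_mul_cycle X₁⁻¹, trace_mul_cycle X₂⁻¹,
        trace_mul_cycle U⁻¹]
    _ = ((X₁ - W) * (X₁⁻¹ * (W⁻¹ - X₂⁻¹) + (X₁⁻¹ - U⁻¹) * X₂⁻¹)).trace := by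
      rw [← trace_sub]; congr 1; noncomm_ring
    _ = _ := by rw [h₃, h₄, mul_add, trace_add]; simp only [Matrix.mul_assoc]

noncomputable def traceInvGap (a : α) (M : Matrix ι ι α) : α := (M - a • 1)⁻¹.trace - M⁻¹.trace

theorem trace_inv_mul_inv_smul_sub_one {K : Type*} [Field K] {c : K} (hc : c ≠ 0)
    {M : Matrix ι ι K} (hM : IsUnit M) (hMc : IsUnit (M - c⁻¹ • 1)) :
    (M⁻¹ * (c • M - 1)⁻¹).trace = traceInvGap c⁻¹ M := by
  have hsmul : c • M - 1 = c • (M - c⁻¹ • 1) := by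
    rw [smul_sub, smul_smul, mul_inv_cancel₀ hc, one_smul]
  let _ := invertibleOfNonzero hc
  rw [traceInvGap, trace_inv_sub_trace_inv hMc hM, sub_sub_cancel, hsmul,
    inv_smul _ c ((isUnit_iff_isUnit_det _).mp hMc), invOf_eq_inv, Matrix.mul_smul,
    Matrix.mul_smul, Matrix.mul_one, Matrix.smul_mul, trace_smul, trace_smul, trace_mul_comm]

end Resolvent

section Stieltjes

variable {ι : Type*}

structure IsStieltjes_s16 (M : Matrix ι ι ℝ) : Prop where
  posDef : M.PosDef
  offDiag_nonpos : ∀ i j, i ≠ j → M i j ≤ 0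

theorem dotProduct_mulVec_nonpos_of_mul_eq_zero [Fintype ι] {M : Matrix ι ι ℝ}
    (hM : ∀ i j, i ≠ j → M i j ≤ 0) {u v : ι → ℝ} (hu : 0 ≤ u) (hv : 0 ≤ v)
    (huv : ∀ k, u k * v k = 0) : u ⬝ᵥ (M *ᵥ v) ≤ 0 := by
  simp only [dotProduct, mulVec, Finset.mul_sum]
  refine Finset.sum_nonpos fun k _ => Finset.sum_nonpos fun l _ => ?_
  obtain rfl | hkl := eq_or_ne k l
  · linear_combination M k k * huv k
  · nlinarith [hM k l hkl, mul_nonneg (hu k) (hv l)]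

variable [DecidableEq ι]

theorem IsStieltjes_s16.of_sub_smul_one {M : Matrix ι ι ℝ} {a : ℝ} (hM : (M - a • 1).IsStieltjes_s16)
    (ha : 0 ≤ a) : M.IsStieltjes_s16 where
  posDef := by simpa using hM.posDef.add_posSemidef (PosSemidef.one.smul ha)
  offDiag_nonpos i j hij := by simpa [one_apply_ne hij] using hM.offDiag_nonpos i j hij

variable [Fintype ι]

theorem IsStieltjes_s16.inv_nonneg {M : Matrix ι ι ℝ} (hM : M.IsStieltjes_s16) (i j : ι) :
    0 ≤ M⁻¹ i j := by
  set x : ι → ℝ := M⁻¹ *ᵥ Pi.single j 1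
  have hMx : M *ᵥ x = Pi.single j 1 := by
    rw [mulVec_mulVec, mul_nonsing_inv M (hM.posDef.isUnit.map detMonoidHom), one_mulVec]
  -- `x` is the `j`-th column of `M⁻¹`, and `x⁻ ⬝ M x⁻ = x⁻ ⬝ M x⁺ - x⁻ j ≤ 0` forces `x⁻ = 0`
  suffices x⁻ = 0 by simpa [x] using negPart_eq_zero.mp this i
  by_contra hne
  have hpos : 0 < x⁻ ⬝ᵥ (M *ᵥ x⁻) := by simpa using hM.posDef.dotProduct_mulVec_pos hne
  have hdisj : x⁻ ⬝ᵥ (M *ᵥ x⁺) ≤ 0 :=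
    dotProduct_mulVec_nonpos_of_mul_eq_zero hM.offDiag_nonpos (negPart_nonneg x)
      (posPart_nonneg x) fun k => by simpa [negPart_def, posPart_def] using le_total 0 (x k)
  have hj : x⁻ ⬝ᵥ (M *ᵥ x⁺) - x⁻ ⬝ᵥ (M *ᵥ x⁻) = x⁻ j := by
    rw [← dotProduct_sub, ← mulVec_sub, posPart_sub_negPart, hMx]
    simp
  have : 0 ≤ x⁻ j := negPart_nonneg x j
  linarith

theorem IsStieltjes_s16.nonnegLE_inv {M : Matrix ι ι ℝ} {a : ℝ} (hM : (M - a • 1).IsStieltjes_s16)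
    (ha : 0 ≤ a) : NonnegLE M⁻¹ (M - a • 1)⁻¹ := by
  have hM' := hM.of_sub_smul_one ha
  have hsub : (M - a • 1)⁻¹ - M⁻¹ = a • ((M - a • 1)⁻¹ * M⁻¹) := by
    rw [inv_sub_inv (iff_of_true hM.posDef.isUnit hM'.posDef.isUnit), sub_sub_cancel,
      Matrix.mul_smul, Matrix.mul_one, Matrix.smul_mul]
  intro i j
  have hij := congrFun₂ hsub i j
  simp only [sub_apply, smul_apply, smul_eq_mul] at hij
  have := mul_nonneg ha (((NonnegLE.of_nonneg hM.inv_nonneg).mul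
    (.of_nonneg hM'.inv_nonneg)) i j).1
  exact ⟨hM'.inv_nonneg i j, by linarith⟩

theorem IsHermitian.posDef_sub_smul_one_s16 {M : Matrix ι ι ℝ} (hM : M.IsHermitian) {a : ℝ}
    (h : ∀ lam ∈ M.charpoly.roots, a < lam) : (M - a • 1).PosDef := by
  have hMa : (M - a • 1).IsHermitian := hM.sub (isHermitian_one.smul (IsSelfAdjoint.all a))
  refine hMa.posDef_iff_eigenvalues_pos.mpr fun i => ?_
  have hspec : hMa.eigenvalues i + a ∈ spectrum ℝ M := by
    rw [spectrum.add_mem_iff, Algebra.algebraMap_eq_smul_one, neg_add_eq_sub]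
    exact hMa.eigenvalues_mem_spectrum_real i
  have := h _ ((Polynomial.mem_roots (charpoly_monic M).ne_zero).mpr
    (mem_spectrum_iff_isRoot_charpoly.mp hspec))
  linarith

theorem traceInvGap_nonneg {M : Matrix ι ι ℝ} {a : ℝ} (hM : (M - a • 1).IsStieltjes_s16)
    (ha : 0 ≤ a) : 0 ≤ traceInvGap a M :=
  sub_nonneg.mpr (hM.nonnegLE_inv ha).trace_le

theorem traceInvGap_antitone {S T : Matrix ι ι ℝ} {a : ℝ} (ha : 0 ≤ a)
    (hS : (S - a • 1).IsStieltjes_s16) (hT : (T - a • 1).IsStieltjes_s16) (hST : ∀ i j, 0 ≤ (T - S) i j) :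
    traceInvGap a T ≤ traceInvGap a S := by
  have h := trace_inv_sub_trace_inv (hS.of_sub_smul_one ha).posDef.isUnit
    (hT.of_sub_smul_one ha).posDef.isUnit
  have h' := trace_inv_sub_trace_inv hS.posDef.isUnit hT.posDef.isUnit
  rw [sub_sub_sub_cancel_right] at h'
  have := (((hS.nonnegLE_inv ha).mul (.of_nonneg hST)).mul (hT.nonnegLE_inv ha)).trace_le
  simp only [traceInvGap]
  linarith

theorem traceInvGap_add_traceInvGap_le {W X₁ X₂ U : Matrix ι ι ℝ} {a : ℝ} (ha : 0 ≤ a)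
    (hW : (W - a • 1).IsStieltjes_s16) (hX₁ : (X₁ - a • 1).IsStieltjes_s16)
    (hX₂ : (X₂ - a • 1).IsStieltjes_s16) (hU : (U - a • 1).IsStieltjes_s16) (hUX : U - X₂ = X₁ - W)
    (hD₁ : ∀ i j, 0 ≤ (X₁ - W) i j) (hD₂ : ∀ i j, 0 ≤ (X₂ - W) i j) :
    traceInvGap a X₁ + traceInvGap a X₂ ≤ traceInvGap a U + traceInvGap a W := by
  have h := trace_inv_second_difference (hW.of_sub_smul_one ha).posDef.isUnit
    (hX₁.of_sub_smul_one ha).posDef.isUnit (hX₂.of_sub_smul_one ha).posDef.isUnit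
    (hU.of_sub_smul_one ha).posDef.isUnit hUX
  have h' := trace_inv_second_difference hW.posDef.isUnit hX₁.posDef.isUnit hX₂.posDef.isUnit
    hU.posDef.isUnit (by simp only [sub_sub_sub_cancel_right, hUX])
  simp only [sub_sub_sub_cancel_right] at h'
  have hD₁' := NonnegLE.of_nonneg hD₁
  have hD₂' := NonnegLE.of_nonneg hD₂
  have h₁ := ((((hD₁'.mul (hX₁.nonnegLE_inv ha)).mul (hW.nonnegLE_inv ha)).mul hD₂').mul
    (hX₂.nonnegLE_inv ha)).trace_le
  have h₂ := ((((hD₁'.mul (hX₁.nonnegLE_inv ha)).mul hD₂').mul (hU.nonnegLE_inv ha)).mul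
    (hX₂.nonnegLE_inv ha)).trace_le
  simp only [traceInvGap]
  linarith

end Stieltjes

end Matrix

section Grounding

variable {ι : Type*} [DecidableEq ι] (L : Matrix ι ι ℝ) (κ : ι → ℝ)

def groundedMatrix (S : Finset ι) : Matrix ι ι ℝ :=
  L + diagonal fun i => if i ∈ S then κ i else 0

theorem groundedMatrix_apply_of_ne {i j : ι} (hij : i ≠ j) (S : Finset ι) :
    groundedMatrix L κ S i j = L i j := by
  simp [groundedMatrix, diagonal_apply_ne _ hij]

theorem groundedMatrix_sub_groundedMatrix_nonneg (hκ : ∀ i, 0 ≤ κ i)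
    {S T : Finset ι} (hST : S ⊆ T) (i j : ι) :
    0 ≤ (groundedMatrix L κ T - groundedMatrix L κ S) i j := by
  obtain rfl | hij := eq_or_ne i j
  · by_cases hiS : i ∈ S
    · simp [groundedMatrix, hiS, hST hiS]
    · by_cases hiT : i ∈ T <;> simp [groundedMatrix, hiS, hiT, hκ i]
  · simp [groundedMatrix, diagonal_apply_ne _ hij]

theorem groundedMatrix_union_sub (A B : Finset ι) :
    groundedMatrix L κ (A ∪ B) - groundedMatrix L κ B =
      groundedMatrix L κ A - groundedMatrix L κ (A ∩ B) := by
  ext i j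
  obtain rfl | hij := eq_or_ne i j
  · by_cases hA : i ∈ A <;> by_cases hB : i ∈ B <;> simp [groundedMatrix, hA, hB]
  · simp [groundedMatrix, diagonal_apply_ne _ hij]

end Grounding

theorem monotone_and_submodular_of_eq_two_mul_sub {ι : Type*} [DecidableEq ι]
    {g f : Finset ι → ℝ} {m : ℝ} (hg : ∀ S, S.Nonempty → 0 ≤ g S)
    (hanti : ∀ A B, A.Nonempty → A ⊆ B → g B ≤ g A)
    (hsuper : ∀ A B, (A ∩ B).Nonempty → g A + g B ≤ g (A ∪ B) + g (A ∩ B))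
    (hm : ∀ s, g {s} ≤ m) (hf₀ : f ∅ = 0) (hf : ∀ S, S.Nonempty → f S = 2 * m - g S) :
    (∀ A B, A ⊆ B → f A ≤ f B) ∧ (∀ A B, f (A ∪ B) + f (A ∩ B) ≤ f A + f B) := by
  have hgm : ∀ S, S.Nonempty → g S ≤ m := fun S ⟨s, hs⟩ =>
    (hanti {s} S (Finset.singleton_nonempty s) (Finset.singleton_subset_iff.2 hs)).trans (hm s)
  refine ⟨fun A B hAB => ?_, fun A B => ?_⟩
  · rcases A.eq_empty_or_nonempty with rfl | hA
    · rcases B.eq_empty_or_nonempty with rfl | hB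
      · rfl
      · rw [hf₀, hf B hB]
        linarith [hg B hB, hgm B hB]
    · rw [hf A hA, hf B (hA.mono hAB)]
      linarith [hanti A B hA hAB]
  · rcases A.eq_empty_or_nonempty with rfl | hA
    · simp [hf₀]
    rcases B.eq_empty_or_nonempty with rfl | hB
    · simp [hf₀]
    have hU := hA.mono (Finset.subset_union_left (s₂ := B))
    rcases (A ∩ B).eq_empty_or_nonempty with hI | hI
    · rw [hI, hf₀, hf A hA, hf B hB, hf _ hU]
      linarith [hgm A hA, hgm B hB, hg _ hU]
    · rw [hf A hA, hf B hB, hf _ hU, hf _ hI]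
      linarith [hsuper A B hI]

theorem setFunction_f3_monotone_submodular_general (n : ℕ)
    (L : Matrix (Fin n) (Fin n) ℝ)
    (hLoff : ∀ i j, i ≠ j → L i j ≤ 0)
    (κ : Fin n → ℝ) (hκ : ∀ i, 0 < κ i)
    (Q : Finset (Fin n) → Matrix (Fin n) (Fin n) ℝ)
    (hQdef : ∀ S, Q S = L + Matrix.diagonal fun i => if i ∈ S then κ i else 0)
    (hQpos : ∀ S : Finset (Fin n), S.Nonempty → (Q S).PosDef)
    (a₁ a₂ a₃ : ℝ) (ha₁ : 0 < a₁) (ha₂ : 0 < a₂) (ha₃ : 0 < a₃)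
    (heig : ∀ S : Finset (Fin n), S.Nonempty →
      ∀ lam ∈ (Q S).charpoly.roots, 1 < (a₂ * a₃ / a₁) * lam)
    (mx : ℝ)
    (hmx : IsGreatest {x : ℝ | ∃ s : Fin n, x =
      Matrix.trace ((Q {s})⁻¹ *
        ((a₂ * a₃ / a₁) • Q {s} - (1 : Matrix (Fin n) (Fin n) ℝ))⁻¹)} mx)
    (f₃ : Finset (Fin n) → ℝ)
    (hf0 : f₃ ∅ = 0)
    (hf : ∀ S : Finset (Fin n), S.Nonempty →
      f₃ S = 2 * mx - Matrix.trace ((Q S)⁻¹ *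
        ((a₂ * a₃ / a₁) • Q S - (1 : Matrix (Fin n) (Fin n) ℝ))⁻¹)) :
    (∀ A B : Finset (Fin n), A ⊆ B → f₃ A ≤ f₃ B) ∧
    (∀ A B : Finset (Fin n), f₃ (A ∪ B) + f₃ (A ∩ B) ≤ f₃ A + f₃ B) := by
  obtain rfl : Q = groundedMatrix L κ := funext hQdef
  set c := a₂ * a₃ / a₁
  have hc : 0 < c := by positivity
  have ha : 0 ≤ c⁻¹ := inv_nonneg.mpr hc.le
  have hshift : ∀ S, S.Nonempty → (groundedMatrix L κ S - c⁻¹ • 1).IsStieltjes_s16 := fun S hS =>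
    { posDef := (hQpos S hS).isHermitian.posDef_sub_smul_one_s16 fun lam hlam =>
        (inv_lt_iff_one_lt_mul₀' hc).mpr (heig S hS lam hlam)
      offDiag_nonpos := fun i j hij => by
        simpa [one_apply_ne hij, groundedMatrix_apply_of_ne L κ hij] using hLoff i j hij }
  have hgap : ∀ S, S.Nonempty → ((groundedMatrix L κ S)⁻¹ * (c • groundedMatrix L κ S - 1)⁻¹).trace
      = traceInvGap c⁻¹ (groundedMatrix L κ S) := fun S hS =>
    trace_inv_mul_inv_smul_sub_one hc.ne' (hQpos S hS).isUnit (hshift S hS).posDef.isUnit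
  have hκ' : ∀ i, 0 ≤ κ i := fun i => (hκ i).le
  refine monotone_and_submodular_of_eq_two_mul_sub
    (g := fun S => traceInvGap c⁻¹ (groundedMatrix L κ S))
    (fun S hS => traceInvGap_nonneg (hshift S hS) ha)
    (fun A B hA hAB => traceInvGap_antitone ha (hshift A hA) (hshift B (hA.mono hAB))
      (groundedMatrix_sub_groundedMatrix_nonneg L κ hκ' hAB))
    (fun A B hI => traceInvGap_add_traceInvGap_le ha (hshift _ hI)
      (hshift A (hI.mono Finset.inter_subset_left)) (hshift B (hI.mono Finset.inter_subset_right))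
      (hshift _ (hI.mono (Finset.inter_subset_left.trans Finset.subset_union_left)))
      (groundedMatrix_union_sub L κ A B)
      (groundedMatrix_sub_groundedMatrix_nonneg L κ hκ' Finset.inter_subset_left)
      (groundedMatrix_sub_groundedMatrix_nonneg L κ hκ' Finset.inter_subset_right))
    (fun s => hgap {s} (Finset.singleton_nonempty s) ▸ hmx.2 ⟨s, rfl⟩) hf0
    (fun S hS => (hf S hS).trans (by rw [hgap S hS]))

/-- The third-order set function `f₃(∅) = 0`,
`f₃(S) = C₃ − tr(Q_S⁻¹((a₂a₃/a₁)Q_S − I)⁻¹)` for nonempty `S`, with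
`C₃ = 2·max_{s ∈ V} tr(Q_{{s}}⁻¹((a₂a₃/a₁)Q_{{s}} − I)⁻¹)`, is non-decreasing
and submodular, where `Q_S = L + D_κ D_S`. -/
theorem setFunction_f3_monotone_submodular (n : ℕ) (hn : 1 ≤ n)
    (L : Matrix (Fin n) (Fin n) ℝ)
    (hLsymm : L.IsSymm)
    (hLoff : ∀ i j, i ≠ j → L i j ≤ 0)
    (hLrow : ∀ i, ∑ j, L i j = 0)
    (hLker : ∀ x : Fin n → ℝ, L.mulVec x = 0 ↔ ∃ c : ℝ, x = fun _ => c)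
    (κ : Fin n → ℝ) (hκ : ∀ i, 0 < κ i)
    (Q : Finset (Fin n) → Matrix (Fin n) (Fin n) ℝ)
    (hQdef : ∀ S, Q S = L + Matrix.diagonal fun i => if i ∈ S then κ i else 0)
    (hQpos : ∀ S : Finset (Fin n), S.Nonempty → (Q S).PosDef)
    (a₁ a₂ a₃ : ℝ) (ha₁ : 0 < a₁) (ha₂ : 0 < a₂) (ha₃ : 0 < a₃)
    (heig : ∀ S : Finset (Fin n), S.Nonempty →
      ∀ lam ∈ (Q S).charpoly.roots, 1 < (a₂ * a₃ / a₁) * lam)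
    (mx : ℝ)
    (hmx : IsGreatest {x : ℝ | ∃ s : Fin n, x =
      Matrix.trace ((Q {s})⁻¹ *
        ((a₂ * a₃ / a₁) • Q {s} - (1 : Matrix (Fin n) (Fin n) ℝ))⁻¹)} mx)
    (f₃ : Finset (Fin n) → ℝ)
    (hf0 : f₃ ∅ = 0)
    (hf : ∀ S : Finset (Fin n), S.Nonempty →
      f₃ S = 2 * mx - Matrix.trace ((Q S)⁻¹ *
        ((a₂ * a₃ / a₁) • Q S - (1 : Matrix (Fin n) (Fin n) ℝ))⁻¹)) :
    (∀ A B : Finset (Fin n), A ⊆ B → f₃ A ≤ f₃ B) ∧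
    (∀ A B : Finset (Fin n), f₃ (A ∪ B) + f₃ (A ∩ B) ≤ f₃ A + f₃ B) :=
  setFunction_f3_monotone_submodular_general n L hLoff κ hκ Q hQdef hQpos a₁ a₂ a₃ ha₁ ha₂ ha₃ heig
    mx hmx f₃ hf0 hf
end
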